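/- arXiv:1307.0230 — 8 statements merged into one kernel-verified Lean document; each statement's English description precedes it below -/
import Mathlib

section
/- Let P, P₀, P₁ be probability measures on a measurable space (Ω, F) with P₀ ≪ P and P₁ ≪ P, and let f₀ := dP₀/dP and f₁ := dP₁/dP denote Radon–Nikodym densities. Fix α ∈ (0, 1). Then the set {a ∈ (0, ∞) : P₀({f₁ > a·f₀}) ≤ α} is nonempty, so â := inf{a ∈ (0, ∞) : P₀({f₁ > a·f₀}) ≤ α} is a well-defined finite nonnegative number, and there exists γ̂ ∈ [0, 1] such that the randomized test ξ̂ := 1_{{f₁ > â·f₀}} + γ̂·1_{{f₁ = â·f₀}} satisfies ∫ ξ̂ dP₀ = α. Moreover, ξ̂ is optimal: for every measurable ξ : Ω → [0, 1] with ∫ ξ dP₀ ≤ α, one has ∫ ξ dP₁ ≤ ∫ ξ̂ dP₁. -/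
/-!
Under `P₀` the critical region `{f₁ > a f₀}` agrees, up to a null set, with the upper level set
`{X > a}` of the likelihood ratio `X = f₁ / f₀`. The tail `a ↦ P₀ (X > a)` is nonincreasing,
right-continuous and tends to `0`, so at `â = inf S` one has `P₀ (X > â) ≤ α ≤ P₀ (X ≥ â)`, and `γ̂`
interpolates across the atom `{X = â}`. For optimality, `(ξ̂ - ξ) (f₁ - â f₀) ≥ 0` pointwise;
integrating against `P` gives `∫ (ξ̂ - ξ) dP₁ ≥ â ∫ (ξ̂ - ξ) dP₀ ≥ 0`.
-/

open MeasureTheory Set Filter Topology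
open scoped ENNReal

section Thresholds

variable {Ω : Type*} [MeasurableSpace Ω] {μ : Measure Ω} {X : Ω → ℝ} {α : ℝ≥0∞}

def admissibleThresholds (μ : Measure Ω) (X : Ω → ℝ) (α : ℝ≥0∞) : Set ℝ :=
  {a | 0 < a ∧ μ {ω | a < X ω} ≤ α}

lemma admissibleThresholds_nonempty [IsFiniteMeasure μ] (hX : Measurable X) (hα : 0 < α) :
    (admissibleThresholds μ X α).Nonempty := by
  have hempty : ⋂ a : ℝ, {ω | a < X ω} = ∅ :=
    eq_empty_of_forall_notMem fun ω hω => lt_irrefl (X ω) (mem_iInter.1 hω (X ω))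
  have htendsto : Tendsto (fun a : ℝ => μ {ω | a < X ω}) atTop (𝓝 0) := by
    have := tendsto_measure_iInter_atTop (μ := μ) (s := fun a : ℝ => {ω | a < X ω})
      (fun a => (measurableSet_lt measurable_const hX).nullMeasurableSet)
      (fun a b hab ω hω => hab.trans_lt hω) ⟨0, measure_ne_top μ _⟩
    rwa [hempty, measure_empty] at this
  obtain ⟨a, ha, haα⟩ :=
    ((eventually_gt_atTop 0).and ((tendsto_order.1 htendsto).2 α hα)).exists
  exact ⟨a, ha, haα.le⟩

lemma sInf_admissibleThresholds_nonneg : 0 ≤ sInf (admissibleThresholds μ X α) :=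
  Real.sInf_nonneg fun _ ha => ha.1.le

lemma measure_sInf_admissibleThresholds_lt_le (hS : (admissibleThresholds μ X α).Nonempty) :
    μ {ω | sInf (admissibleThresholds μ X α) < X ω} ≤ α := by
  set S := admissibleThresholds μ X α
  obtain ⟨u, hu_anti, hu_gt, hu_tendsto⟩ := exists_seq_strictAnti_tendsto (sInf S)
  have hunion : {ω | sInf S < X ω} = ⋃ n, {ω | u n < X ω} := by
    ext ω
    simp only [mem_ofPred_eq, mem_iUnion]
    exact ⟨fun h => ((tendsto_order.1 hu_tendsto).2 _ h).exists,
      fun ⟨n, hn⟩ => (hu_gt n).trans hn⟩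
  have hmono : Monotone fun n => {ω | u n < X ω} :=
    fun m n hmn ω hω => (hu_anti.antitone hmn).trans_lt hω
  rw [hunion, hmono.measure_iUnion]
  refine iSup_le fun n => ?_
  obtain ⟨a, ⟨-, haα⟩, hau⟩ := exists_lt_of_csInf_lt hS (hu_gt n)
  exact (measure_mono fun ω hω => hau.trans hω).trans haα

lemma le_measure_sInf_admissibleThresholds_le [IsProbabilityMeasure μ] (hX : Measurable X)
    (hX₀ : ∀ ω, 0 ≤ X ω) (hα : α ≤ 1) :
    α ≤ μ {ω | sInf (admissibleThresholds μ X α) ≤ X ω} := by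
  set S := admissibleThresholds μ X α
  rcases (sInf_admissibleThresholds_nonneg (μ := μ) (X := X) (α := α)).eq_or_lt with h0 | hpos
  · rw [← h0]
    simpa [hX₀] using hα
  obtain ⟨u, hu_mono, hu_mem, hu_tendsto⟩ := exists_seq_strictMono_tendsto' hpos
  have hinter : {ω | sInf S ≤ X ω} = ⋂ n, {ω | u n < X ω} := by
    ext ω
    simp only [mem_ofPred_eq, mem_iInter]
    exact ⟨fun h n => (hu_mem n).2.trans_le h,
      fun h => le_of_tendsto hu_tendsto (Eventually.of_forall fun n => (h n).le)⟩
  have hanti : Antitone fun n => {ω | u n < X ω} :=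
    fun m n hmn ω hω => (hu_mono.monotone hmn).trans_lt hω
  rw [hinter, hanti.measure_iInter
    (fun n => (measurableSet_lt measurable_const hX).nullMeasurableSet) ⟨0, measure_ne_top μ _⟩]
  refine le_iInf fun n => ?_
  have hn : u n ∉ S := notMem_of_lt_csInf (hu_mem n).2 ⟨0, fun _ ha => ha.1.le⟩
  simp only [S, admissibleThresholds, mem_ofPred_eq, not_and, not_le] at hn
  exact (hn (hu_mem n).1).le

lemma exists_mem_Icc_add_mul_eq {p q α : ℝ} (hp : p ≤ α) (hq : α ≤ p + q) :
    ∃ γ ∈ Icc (0 : ℝ) 1, p + γ * q = α := by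
  rcases eq_or_ne q 0 with rfl | hq₀
  · exact ⟨0, ⟨le_rfl, zero_le_one⟩, by linarith⟩
  have hq_pos : 0 < q := (show 0 ≤ q by linarith).lt_of_ne' hq₀
  exact ⟨(α - p) / q, ⟨div_nonneg (by linarith) hq_pos.le, (div_le_one hq_pos).2 (by linarith)⟩,
    by field_simp; ring⟩

lemma exists_measureReal_sInf_admissibleThresholds_lt_add_mul_eq [IsProbabilityMeasure μ]
    (hX : Measurable X) (hX₀ : ∀ ω, 0 ≤ X ω) {α : ℝ} (hα : α ∈ Ioo (0 : ℝ) 1) :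
    ∃ γ ∈ Icc (0 : ℝ) 1,
      μ.real {ω | sInf (admissibleThresholds μ X (.ofReal α)) < X ω} +
        γ * μ.real {ω | X ω = sInf (admissibleThresholds μ X (.ofReal α))} = α := by
  set a₀ := sInf (admissibleThresholds μ X (.ofReal α))
  refine exists_mem_Icc_add_mul_eq ?_ ?_
  · exact ENNReal.toReal_le_of_le_ofReal hα.1.le <| measure_sInf_admissibleThresholds_lt_le <|
      admissibleThresholds_nonempty hX (ENNReal.ofReal_pos.2 hα.1)
  · have hsplit : {ω | a₀ ≤ X ω} = {ω | a₀ < X ω} ∪ {ω | X ω = a₀} := by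
      ext ω
      simp only [mem_ofPred_eq, mem_union, le_iff_lt_or_eq, eq_comm]
    have hdisj : Disjoint {ω | a₀ < X ω} {ω | X ω = a₀} :=
      disjoint_left.2 fun ω h h' => h.ne' h'
    rw [← measureReal_union hdisj (measurableSet_eq_fun hX measurable_const), ← hsplit]
    exact (ENNReal.ofReal_le_iff_le_toReal (measure_ne_top μ _)).1 <|
      le_measure_sInf_admissibleThresholds_le hX hX₀ (ENNReal.ofReal_le_one.2 hα.2.le)

end Thresholds

section Densities

variable {Ω : Type*} [MeasurableSpace Ω] {P P₀ P₁ : Measure Ω}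

-- Only meaningful `P₀`-a.e.: where the `P₀`-density vanishes, real division returns `0`.
noncomputable def likelihoodRatio (P P₀ P₁ : Measure Ω) (ω : Ω) : ℝ :=
  (P₁.rnDeriv P ω).toReal / (P₀.rnDeriv P ω).toReal

lemma measurable_likelihoodRatio (P P₀ P₁ : Measure Ω) : Measurable (likelihoodRatio P P₀ P₁) :=
  (Measure.measurable_rnDeriv P₁ P).ennreal_toReal.div
    (Measure.measurable_rnDeriv P₀ P).ennreal_toReal

lemma likelihoodRatio_nonneg (ω : Ω) : 0 ≤ likelihoodRatio P P₀ P₁ ω :=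
  div_nonneg ENNReal.toReal_nonneg ENNReal.toReal_nonneg

variable [SigmaFinite P₀] [SigmaFinite P₁] [P₀.HaveLebesgueDecomposition P]

lemma ae_rnDeriv_ne_top_and_toReal_pos (h₀ : P₀ ≪ P) :
    ∀ᵐ ω ∂P₀, P₀.rnDeriv P ω ≠ ∞ ∧ P₁.rnDeriv P ω ≠ ∞ ∧ 0 < (P₀.rnDeriv P ω).toReal := by
  filter_upwards [h₀.ae_le (Measure.rnDeriv_ne_top P₀ P), h₀.ae_le (Measure.rnDeriv_ne_top P₁ P),
    Measure.rnDeriv_pos h₀] with ω h₀top h₁top hpos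
  exact ⟨h₀top, h₁top, ENNReal.toReal_pos hpos.ne' h₀top⟩

lemma ofReal_mul_rnDeriv_lt_ae_eq (h₀ : P₀ ≪ P) {c : ℝ} (hc : 0 ≤ c) :
    {ω | ENNReal.ofReal c * P₀.rnDeriv P ω < P₁.rnDeriv P ω} =ᵐ[P₀]
      {ω | c < likelihoodRatio P P₀ P₁ ω} := by
  refine eventuallyEq_set.2 ?_
  filter_upwards [ae_rnDeriv_ne_top_and_toReal_pos (P₁ := P₁) h₀] with ω ⟨h₀top, h₁top, hpos⟩
  rw [likelihoodRatio, lt_div_iff₀ hpos,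
    ← ENNReal.toReal_ofReal_mul c _ hc, ENNReal.toReal_lt_toReal (by finiteness) h₁top]

lemma rnDeriv_eq_ofReal_mul_ae_eq (h₀ : P₀ ≪ P) {c : ℝ} (hc : 0 ≤ c) :
    {ω | P₁.rnDeriv P ω = ENNReal.ofReal c * P₀.rnDeriv P ω} =ᵐ[P₀]
      {ω | likelihoodRatio P P₀ P₁ ω = c} := by
  refine eventuallyEq_set.2 ?_
  filter_upwards [ae_rnDeriv_ne_top_and_toReal_pos (P₁ := P₁) h₀] with ω ⟨h₀top, h₁top, hpos⟩
  rw [likelihoodRatio, div_eq_iff hpos.ne',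
    ← ENNReal.toReal_ofReal_mul c _ hc, ENNReal.toReal_eq_toReal_iff' h₁top (by finiteness)]

end Densities

section Test

variable {Ω : Type*} {f₀ f₁ : Ω → ℝ≥0∞} {c γ : ℝ}

noncomputable def neymanPearsonTest (f₀ f₁ : Ω → ℝ≥0∞) (c γ : ℝ) (ω : Ω) : ℝ :=
  {ω | ENNReal.ofReal c * f₀ ω < f₁ ω}.indicator (fun _ => 1) ω +
    γ * {ω | f₁ ω = ENNReal.ofReal c * f₀ ω}.indicator (fun _ => 1) ω

lemma neymanPearsonTest_of_lt {ω : Ω} (h : ENNReal.ofReal c * f₀ ω < f₁ ω) :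
    neymanPearsonTest f₀ f₁ c γ ω = 1 := by
  simp [neymanPearsonTest, indicator_of_mem, h, h.ne']

lemma neymanPearsonTest_of_gt {ω : Ω} (h : f₁ ω < ENNReal.ofReal c * f₀ ω) :
    neymanPearsonTest f₀ f₁ c γ ω = 0 := by
  simp [neymanPearsonTest, indicator_of_notMem, h.not_gt, h.ne]

lemma neymanPearsonTest_mem_Icc (hγ : γ ∈ Icc (0 : ℝ) 1) (ω : Ω) :
    neymanPearsonTest f₀ f₁ c γ ω ∈ Icc (0 : ℝ) 1 := by
  rcases lt_trichotomy (ENNReal.ofReal c * f₀ ω) (f₁ ω) with h | h | h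
  · simp [neymanPearsonTest_of_lt h]
  · simpa [neymanPearsonTest, h, lt_irrefl] using hγ
  · simp [neymanPearsonTest_of_gt h]

variable [MeasurableSpace Ω]

lemma measurable_neymanPearsonTest (hf₀ : Measurable f₀) (hf₁ : Measurable f₁) :
    Measurable (neymanPearsonTest f₀ f₁ c γ) :=
  (measurable_const.indicator (measurableSet_lt (hf₀.const_mul _) hf₁)).add
    ((measurable_const.indicator (measurableSet_eq_fun hf₁ (hf₀.const_mul _))).const_mul γ)

lemma integral_neymanPearsonTest (hf₀ : Measurable f₀) (hf₁ : Measurable f₁) (μ : Measure Ω)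
    [IsFiniteMeasure μ] :
    ∫ ω, neymanPearsonTest f₀ f₁ c γ ω ∂μ =
      μ.real {ω | ENNReal.ofReal c * f₀ ω < f₁ ω} +
        γ * μ.real {ω | f₁ ω = ENNReal.ofReal c * f₀ ω} := by
  have hA := measurableSet_lt (hf₀.const_mul (ENNReal.ofReal c)) hf₁
  have hB := measurableSet_eq_fun hf₁ (hf₀.const_mul (ENNReal.ofReal c))
  unfold neymanPearsonTest
  rw [integral_add ((integrable_const _).indicator hA)
    (((integrable_const _).indicator hB).const_mul γ), integral_const_mul,
    integral_indicator_const _ hA, integral_indicator_const _ hB]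
  simp

end Test

section Optimality

variable {Ω : Type*} [MeasurableSpace Ω] {P P₀ P₁ : Measure Ω}

lemma sub_mul_nonneg_of_mem_Icc {t x u : ℝ} (hx : x ∈ Icc (0 : ℝ) 1) (ht₁ : 0 < u → t = 1)
    (ht₀ : u < 0 → t = 0) : 0 ≤ (t - x) * u := by
  rcases lt_trichotomy u 0 with hu | rfl | hu
  · rw [ht₀ hu]; nlinarith [hx.1]
  · simp
  · rw [ht₁ hu]; nlinarith [hx.2]

lemma integrable_of_mem_Icc {μ : Measure Ω} [IsFiniteMeasure μ] {φ : Ω → ℝ} (hφ : Measurable φ)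
    (hφ01 : ∀ ω, φ ω ∈ Icc (0 : ℝ) 1) : Integrable φ μ :=
  .of_bound hφ.aestronglyMeasurable 1 <| ae_of_all _ fun ω => by
    rw [Real.norm_eq_abs, abs_le]; constructor <;> linarith [(hφ01 ω).1, (hφ01 ω).2]

theorem integral_le_integral_of_ae_sub_mul_nonneg [SigmaFinite P] [IsFiniteMeasure P₀]
    [IsFiniteMeasure P₁] (h₀ : P₀ ≪ P) (h₁ : P₁ ≪ P) {c : ℝ} (hc : 0 ≤ c) {ξ ψ : Ω → ℝ}
    (hξ : Measurable ξ) (hψ : Measurable ψ) (hξ01 : ∀ ω, ξ ω ∈ Icc (0 : ℝ) 1)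
    (hψ01 : ∀ ω, ψ ω ∈ Icc (0 : ℝ) 1)
    (hpt : ∀ᵐ ω ∂P, 0 ≤ (ψ ω - ξ ω) * ((P₁.rnDeriv P ω).toReal - c * (P₀.rnDeriv P ω).toReal))
    (hsize : ∫ ω, ξ ω ∂P₀ ≤ ∫ ω, ψ ω ∂P₀) : ∫ ω, ξ ω ∂P₁ ≤ ∫ ω, ψ ω ∂P₁ := by
  set D : Ω → ℝ := fun ω => ψ ω - ξ ω
  have integral_D (μ : Measure Ω) [IsFiniteMeasure μ] :
      ∫ ω, D ω ∂μ = ∫ ω, ψ ω ∂μ - ∫ ω, ξ ω ∂μ :=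
    integral_sub (integrable_of_mem_Icc hψ hψ01) (integrable_of_mem_Icc hξ hξ01)
  have integrable_density_mul_D (μ : Measure Ω) [IsFiniteMeasure μ] :
      Integrable (fun ω => (μ.rnDeriv P ω).toReal * D ω) P :=
    Measure.integrable_toReal_rnDeriv.mul_bdd (c := 1) (hψ.sub hξ).aestronglyMeasurable <|
      ae_of_all _ fun ω => by
        simpa using abs_sub_le_of_le_of_le (hψ01 ω).1 (hψ01 ω).2 (hξ01 ω).1 (hξ01 ω).2
  have key : c * ∫ ω, D ω ∂P₀ ≤ ∫ ω, D ω ∂P₁ := by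
    rw [← integral_rnDeriv_smul h₀, ← integral_rnDeriv_smul h₁, ← integral_const_mul, ← sub_nonneg]
    simp only [smul_eq_mul]
    rw [← integral_sub (integrable_density_mul_D P₁) ((integrable_density_mul_D P₀).const_mul c)]
    exact integral_nonneg_of_ae <| hpt.mono fun ω h => h.trans_eq (by simp only [D]; ring)
  rw [integral_D, integral_D] at key
  nlinarith [mul_nonneg hc (sub_nonneg.2 hsize)]

lemma ae_neymanPearsonTest_sub_mul_nonneg [SigmaFinite P₀] [SigmaFinite P₁] {c γ : ℝ}
    (hc : 0 ≤ c) {ξ : Ω → ℝ} (hξ01 : ∀ ω, ξ ω ∈ Icc (0 : ℝ) 1) :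
    ∀ᵐ ω ∂P, 0 ≤ (neymanPearsonTest (P₀.rnDeriv P) (P₁.rnDeriv P) c γ ω - ξ ω) *
      ((P₁.rnDeriv P ω).toReal - c * (P₀.rnDeriv P ω).toReal) := by
  filter_upwards [Measure.rnDeriv_ne_top P₀ P, Measure.rnDeriv_ne_top P₁ P] with ω h₀top h₁top
  refine sub_mul_nonneg_of_mem_Icc (hξ01 ω) (fun hu => neymanPearsonTest_of_lt ?_)
    (fun hu => neymanPearsonTest_of_gt ?_)
  · rw [← ENNReal.toReal_lt_toReal (by finiteness) h₁top, ENNReal.toReal_ofReal_mul c _ hc]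
    linarith
  · rw [← ENNReal.toReal_lt_toReal h₁top (by finiteness), ENNReal.toReal_ofReal_mul c _ hc]
    linarith

end Optimality

/-- **Neyman–Pearson lemma for randomized tests.**
Let `P₀, P₁ ≪ P` be probability measures with densities `f₀ = dP₀/dP`, `f₁ = dP₁/dP`, and let
`α ∈ (0,1)`.  The set `{a > 0 : P₀(f₁ > a f₀) ≤ α}` is nonempty; with `a₀` its infimum
(a finite nonnegative number), there is `γ ∈ [0,1]` such that the randomized test
`ξ₀ = 1_{f₁ > a₀ f₀} + γ 1_{f₁ = a₀ f₀}` has size exactly `α` under `P₀`, and `ξ₀` maximizes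
the power `∫ ξ dP₁` among all measurable `ξ : Ω → [0,1]` with `∫ ξ dP₀ ≤ α`. -/
theorem stmt_2 {Ω : Type*} [MeasurableSpace Ω]
    (P P₀ P₁ : Measure Ω) [IsProbabilityMeasure P] [IsProbabilityMeasure P₀]
    [IsProbabilityMeasure P₁] (h₀ : P₀ ≪ P) (h₁ : P₁ ≪ P)
    (α : ℝ) (hα : α ∈ Set.Ioo (0 : ℝ) 1)
    (f₀ f₁ : Ω → ENNReal) (hf₀ : f₀ = P₀.rnDeriv P) (hf₁ : f₁ = P₁.rnDeriv P)
    (S : Set ℝ)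
    (hS : S = {a : ℝ | 0 < a ∧ P₀ {ω | ENNReal.ofReal a * f₀ ω < f₁ ω} ≤ ENNReal.ofReal α}) :
    S.Nonempty ∧ 0 ≤ sInf S ∧
    ∃ γ ∈ Set.Icc (0 : ℝ) 1,
      ∀ ξhat : Ω → ℝ,
        ξhat = (fun ω =>
          (({ω | ENNReal.ofReal (sInf S) * f₀ ω < f₁ ω} : Set Ω).indicator
              (fun _ => (1 : ℝ)) ω) +
          γ * (({ω | f₁ ω = ENNReal.ofReal (sInf S) * f₀ ω} : Set Ω).indicator
              (fun _ => (1 : ℝ)) ω)) →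
        (∫ ω, ξhat ω ∂P₀) = α ∧
        ∀ ξ : Ω → ℝ, Measurable ξ → (∀ ω, ξ ω ∈ Set.Icc (0 : ℝ) 1) →
          (∫ ω, ξ ω ∂P₀) ≤ α → (∫ ω, ξ ω ∂P₁) ≤ ∫ ω, ξhat ω ∂P₁ := by
  subst hf₀ hf₁ hS
  set X := likelihoodRatio P P₀ P₁
  have hS : {a : ℝ | 0 < a ∧ P₀ {ω | ENNReal.ofReal a * P₀.rnDeriv P ω < P₁.rnDeriv P ω} ≤
      ENNReal.ofReal α} = admissibleThresholds P₀ X (.ofReal α) := by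
    ext a
    refine and_congr_right fun ha => ?_
    rw [measure_congr (ofReal_mul_rnDeriv_lt_ae_eq h₀ ha.le)]
  rw [hS]
  set a₀ := sInf (admissibleThresholds P₀ X (.ofReal α))
  have ha₀ : 0 ≤ a₀ := sInf_admissibleThresholds_nonneg (μ := P₀)
  have hX : Measurable X := measurable_likelihoodRatio P P₀ P₁
  obtain ⟨γ, hγ, hlevel⟩ := exists_measureReal_sInf_admissibleThresholds_lt_add_mul_eq
    (μ := P₀) hX likelihoodRatio_nonneg hα
  refine ⟨admissibleThresholds_nonempty (μ := P₀) hX (ENNReal.ofReal_pos.2 hα.1),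
    ha₀, γ, hγ, ?_⟩
  intro ξhat hξhat
  replace hξhat : ξhat = neymanPearsonTest (P₀.rnDeriv P) (P₁.rnDeriv P) a₀ γ := hξhat
  subst hξhat
  have hm₀ := Measure.measurable_rnDeriv P₀ P
  have hm₁ := Measure.measurable_rnDeriv P₁ P
  have hsize_test : ∫ ω, neymanPearsonTest (P₀.rnDeriv P) (P₁.rnDeriv P) a₀ γ ω ∂P₀ = α := by
    rw [integral_neymanPearsonTest hm₀ hm₁, measureReal_congr (ofReal_mul_rnDeriv_lt_ae_eq h₀ ha₀),
      measureReal_congr (rnDeriv_eq_ofReal_mul_ae_eq h₀ ha₀), hlevel]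
  exact ⟨hsize_test, fun ξ hξ hξ01 hξα => integral_le_integral_of_ae_sub_mul_nonneg h₀ h₁ ha₀ hξ
    (measurable_neymanPearsonTest hm₀ hm₁) hξ01 (neymanPearsonTest_mem_Icc hγ)
    (ae_neymanPearsonTest_sub_mul_nonneg ha₀ hξ01) (hξα.trans hsize_test.ge)⟩
end

section
/- Let (Ω, F, P) be a probability space and (ζ_n)_{n≥1} a sequence of integrable real-valued random variables that is uniformly bounded in L¹(P), i.e. sup_n E|ζ_n| < ∞. Then there exist random variables (ζ̄_n)_{n≥1} and an integrable random variable ζ̄ such that, for each n ≥ 1, ζ̄_n is a finite convex combination of elements of {ζ_k : k ≥ n} (that is, ζ̄_n belongs to the convex hull of {ζ_k : k ≥ n} in the real vector space of measurable functions Ω → ℝ), and ζ̄_n → ζ̄ P-almost surely. -/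
/-
The functional `Φ f = ∫ √(1 + f²)` is bounded below, is bounded above by `1 + ‖f‖₁`, and is
uniformly convex on functions bounded by `M`, quantitatively in `M`. Pick `f n` in the convex
hull of the tail `{ζ k | k ≥ n}` with `Φ (f n)` within `1/(n+1)` of its infimum `I n` over that
hull. For `m ≤ n` the midpoint of `f m` and `f n` lies in the `m`-th hull, and `I n` increases to
a finite limit, so the midpoint gap `(Φ (f m) + Φ (f n))/2 - Φ (midpoint)` tends to zero. Markov's
inequality for this gap (where `|f m|, |f n| ≤ M`) and for the tails `|f m| > M` (using the `L¹`
bound) shows that `(f n)` is Cauchy in measure. A subsequence then converges almost surely by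
Borel–Cantelli, and its limit is integrable by Fatou's lemma.
-/

open MeasureTheory Filter Topology

noncomputable def japaneseBracket (x : ℝ) : ℝ := √(1 + x ^ 2)

lemma japaneseBracket_sq (x : ℝ) : japaneseBracket x ^ 2 = 1 + x ^ 2 :=
  Real.sq_sqrt (by positivity)

lemma one_le_japaneseBracket (x : ℝ) : 1 ≤ japaneseBracket x :=
  Real.one_le_sqrt.mpr (by nlinarith [sq_nonneg x])

lemma japaneseBracket_le_one_add_abs (x : ℝ) : japaneseBracket x ≤ 1 + |x| :=
  Real.sqrt_le_iff.mpr ⟨by positivity, by nlinarith [sq_abs x, abs_nonneg x]⟩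

lemma japaneseBracket_le_of_abs_le {x M : ℝ} (h : |x| ≤ M) :
    japaneseBracket x ≤ japaneseBracket M :=
  Real.sqrt_le_sqrt (by nlinarith [sq_abs x, abs_nonneg x])

lemma continuous_japaneseBracket : Continuous japaneseBracket := by
  unfold japaneseBracket; fun_prop

/-- Rationalising twice gives
`(⟨x⟩ + ⟨y⟩)/2 - ⟨(x+y)/2⟩ = (x-y)² / ((⟨x⟩⟨y⟩ + 1 + xy)(⟨x⟩ + ⟨y⟩ + 2⟨(x+y)/2⟩))`,
and on `[-M, M]` the denominator is at most `8⟨M⟩³`. -/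
lemma sq_sub_le_mul_japaneseBracket_midpoint_gap {x y M : ℝ} (hx : |x| ≤ M) (hy : |y| ≤ M) :
    (x - y) ^ 2 ≤ 8 * japaneseBracket M ^ 3 *
      ((japaneseBracket x + japaneseBracket y) / 2 - japaneseBracket (midpoint ℝ x y)) := by
  have hmid : midpoint ℝ x y = (x + y) / 2 := by
    simp only [midpoint_eq_smul_add, invOf_eq_inv, smul_eq_mul]; ring
  have hz : |(x + y) / 2| ≤ M := by
    rw [abs_le] at hx hy ⊢; constructor <;> linarith
  rw [hmid]
  set p := japaneseBracket x
  set q := japaneseBracket y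
  set r := japaneseBracket ((x + y) / 2)
  set B := japaneseBracket M
  have hp : p ^ 2 = 1 + x ^ 2 := japaneseBracket_sq x
  have hq : q ^ 2 = 1 + y ^ 2 := japaneseBracket_sq y
  have hr : r ^ 2 = 1 + ((x + y) / 2) ^ 2 := japaneseBracket_sq _
  have hB : B ^ 2 = 1 + M ^ 2 := japaneseBracket_sq M
  have hp1 : 1 ≤ p := one_le_japaneseBracket x
  have hq1 : 1 ≤ q := one_le_japaneseBracket y
  have hr1 : 1 ≤ r := one_le_japaneseBracket _
  have hpB : p ≤ B := japaneseBracket_le_of_abs_le hx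
  have hqB : q ≤ B := japaneseBracket_le_of_abs_le hy
  have hrB : r ≤ B := japaneseBracket_le_of_abs_le hz
  have hxy : |x * y| ≤ M ^ 2 := by
    rw [abs_mul, pow_two]; exact mul_le_mul hx hy (abs_nonneg y) ((abs_nonneg x).trans hx)
  have hpq : 1 + |x * y| ≤ p * q := by
    refine (le_abs_self _).trans (abs_le_of_sq_le_sq ?_ (by positivity))
    rw [mul_pow, hp, hq, abs_mul]
    nlinarith [sq_nonneg (|x| - |y|), sq_abs x, sq_abs y]
  set E := p * q + 1 + x * y
  have hE : 2 ≤ E := by linarith [neg_abs_le (x * y)]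
  have hE' : E ≤ 2 * B ^ 2 := by nlinarith [le_abs_self (x * y)]
  have key : (p + q - 2 * r) * ((p + q + 2 * r) * E) = 2 * (x - y) ^ 2 := by
    linear_combination (E + 2 * q ^ 2) * hp + (E + 2 * (1 + x ^ 2)) * hq - 4 * E * hr
  have hgap : 0 ≤ p + q - 2 * r :=
    nonneg_of_mul_nonneg_left (by rw [key]; positivity) (mul_pos (by linarith) (by linarith))
  have : (p + q + 2 * r) * E ≤ 4 * B * (2 * B ^ 2) :=
    mul_le_mul (by linarith) hE' (by linarith) (by linarith)
  nlinarith [mul_le_mul_of_nonneg_left this hgap]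

lemma japaneseBracket_midpoint_le (x y : ℝ) :
    japaneseBracket (midpoint ℝ x y) ≤ (japaneseBracket x + japaneseBracket y) / 2 := by
  have h :=
    sq_sub_le_mul_japaneseBracket_midpoint_gap (le_max_left |x| |y|) (le_max_right |x| |y|)
  have hB := one_le_japaneseBracket (max |x| |y|)
  exact sub_nonneg.1 (nonneg_of_mul_nonneg_right ((sq_nonneg _).trans h) (by positivity))

section NearMinimizers

variable {X : Type*} [AddCommGroup X] [Module ℝ X]

/-- Near-minimisers of `Φ` over a decreasing sequence of convex sets have vanishing midpoint
gap: the midpoint of `x m` and `x n` (`m ≤ n`) lies in `G m`, so `Φ` cannot be much smaller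
there than at `x m`, while `Φ (x n)` is at most `⨆ k, inf_{G k} Φ` up to an error. -/
lemma exists_seq_midpoint_gap_tendsto_zero (Φ : X → ℝ) {G : ℕ → Set X} (hanti : Antitone G)
    (hconv : ∀ n, Convex ℝ (G n)) (hlow : BddBelow (Φ '' G 0))
    (hup : ∃ B, ∀ n, ∃ x ∈ G n, Φ x ≤ B) :
    ∃ x : ℕ → X, (∀ n, x n ∈ G n) ∧ ∃ d : ℕ → ℝ, Tendsto d atTop (𝓝 0) ∧
      ∀ m n, m ≤ n → (Φ (x m) + Φ (x n)) / 2 - Φ (midpoint ℝ (x m) (x n)) ≤ d m := by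
  obtain ⟨B, hB⟩ := hup
  have hne : ∀ n, (Φ '' G n).Nonempty := fun n =>
    let ⟨x, hx, _⟩ := hB n; ⟨Φ x, x, hx, rfl⟩
  have hlow' : ∀ n, BddBelow (Φ '' G n) := fun n =>
    hlow.mono (Set.image_mono (hanti (Nat.zero_le n)))
  set I : ℕ → ℝ := fun n => sInf (Φ '' G n)
  have hImono : Monotone I := fun m n hmn =>
    csInf_le_csInf (hlow' m) (hne n) (Set.image_mono (hanti hmn))
  have hIle : ∀ n, I n ≤ B := fun n =>
    let ⟨x, hx, hxB⟩ := hB n; (csInf_le (hlow' n) ⟨x, hx, rfl⟩).trans hxB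
  have hIbdd : BddAbove (Set.range I) := ⟨B, by rintro _ ⟨n, rfl⟩; exact hIle n⟩
  set S := ⨆ n, I n
  have hIS : ∀ n, I n ≤ S := le_ciSup hIbdd
  have hnear : ∀ n, ∃ x ∈ G n, Φ x < I n + 1 / ((n : ℝ) + 1) := fun n => by
    obtain ⟨_, ⟨x, hx, rfl⟩, hlt⟩ :=
      exists_lt_of_csInf_lt (hne n) (lt_add_of_pos_right (I n) Nat.one_div_pos_of_nat)
    exact ⟨x, hx, hlt⟩
  choose x hxG hxΦ using hnear
  refine ⟨x, hxG, fun m => (S - I m) / 2 + 1 / ((m : ℝ) + 1), ?_, fun m n hmn => ?_⟩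
  · have hI : Tendsto I atTop (𝓝 S) := tendsto_atTop_ciSup hImono hIbdd
    simpa using ((tendsto_const_nhds (x := S)).sub hI |>.div_const 2).add
      tendsto_one_div_add_atTop_nhds_zero_nat
  · have hmid : I m ≤ Φ (midpoint ℝ (x m) (x n)) :=
      csInf_le (hlow' m) ⟨_, (hconv m).midpoint_mem (hxG m) (hanti hmn (hxG n)), rfl⟩
    have hn : 1 / ((n : ℝ) + 1) ≤ 1 / ((m : ℝ) + 1) :=
      Nat.one_div_le_one_div hmn
    linarith [hxΦ m, hxΦ n, hIS n]

end NearMinimizers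

section Measure

variable {Ω : Type*} [MeasurableSpace Ω] {μ : Measure Ω}

def CauchyInMeasure {E : Type*} [PseudoMetricSpace E] (μ : Measure Ω) (f : ℕ → Ω → E) : Prop :=
  ∀ ε > 0, ∀ δ > 0, ∃ N, ∀ m ≥ N, ∀ n ≥ N, μ.real {ω | ε ≤ dist (f m ω) (f n ω)} ≤ δ

/-- Borel–Cantelli along a subsequence on which consecutive terms are `2⁻ᵏ`-close outside
a set of measure at most `2⁻ᵏ`. -/
theorem CauchyInMeasure.exists_seq_ae_tendsto {E : Type*} [PseudoMetricSpace E] [CompleteSpace E]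
    [IsFiniteMeasure μ] {f : ℕ → Ω → E} (hf : CauchyInMeasure μ f) :
    ∃ φ : ℕ → ℕ, StrictMono φ ∧
      ∀ᵐ ω ∂μ, ∃ l, Tendsto (fun k => f (φ k) ω) atTop (𝓝 l) := by
  have hpos : ∀ k : ℕ, (0 : ℝ) < (1 / 2) ^ k := fun k => by positivity
  choose N hN using fun k => hf _ (hpos k) _ (hpos k)
  obtain ⟨φ, hφ, hNφ⟩ := extraction_forall_of_eventually' fun k => ⟨N k, fun j hj => hj⟩
  refine ⟨φ, hφ, ?_⟩
  set s : ℕ → Set Ω := fun k => {ω | (1 / 2) ^ k ≤ dist (f (φ k) ω) (f (φ (k + 1)) ω)}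
  have hs : ∀ k, μ (s k) ≤ ENNReal.ofReal ((1 / 2) ^ k) := fun k => by
    rw [← ofReal_measureReal]
    exact ENNReal.ofReal_le_ofReal
      (hN k _ (hNφ k) _ ((hNφ k).trans (hφ (Nat.lt_succ_self k)).le))
  have hsum : ∑' k, μ (s k) ≠ ⊤ := by
    refine ne_top_of_le_ne_top ?_ (ENNReal.tsum_le_tsum hs)
    rw [← ENNReal.ofReal_tsum_of_nonneg (fun k => (hpos k).le) summable_geometric_two]
    exact ENNReal.ofReal_ne_top
  filter_upwards [ae_eventually_notMem hsum] with ω hω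
  refine cauchySeq_tendsto_of_complete (cauchySeq_of_dist_le_of_summable _ (fun k => le_rfl) ?_)
  refine .of_norm_bounded_eventually_nat summable_geometric_two ?_
  filter_upwards [hω] with k hk
  simp only [s, Set.mem_ofPred_eq, not_le] at hk
  simpa using hk.le

variable [IsFiniteMeasure μ]

lemma MeasureTheory.Integrable.japaneseBracket_comp {f : Ω → ℝ} (hf : Integrable f μ) :
    Integrable (fun ω => japaneseBracket (f ω)) μ := by
  refine ((integrable_const 1).add hf.abs).mono'
    (continuous_japaneseBracket.comp_aestronglyMeasurable hf.1) (ae_of_all _ fun ω => ?_)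
  rw [Real.norm_of_nonneg (zero_le_one.trans (one_le_japaneseBracket _))]
  exact japaneseBracket_le_one_add_abs _

lemma integral_japaneseBracket_le {f : Ω → ℝ} (hf : Integrable f μ) :
    ∫ ω, japaneseBracket (f ω) ∂μ ≤ μ.real Set.univ + ∫ ω, |f ω| ∂μ := by
  calc ∫ ω, japaneseBracket (f ω) ∂μ ≤ ∫ ω, 1 + |f ω| ∂μ :=
        integral_mono hf.japaneseBracket_comp ((integrable_const 1).add hf.abs)
          fun ω => japaneseBracket_le_one_add_abs _
    _ = μ.real Set.univ + ∫ ω, |f ω| ∂μ := by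
        rw [integral_add (integrable_const 1) hf.abs]; simp

lemma sq_mul_measureReal_le_midpoint_gap {f g : Ω → ℝ} (hf : Integrable f μ)
    (hg : Integrable g μ) (M : ℝ) {ε : ℝ} (hε : 0 ≤ ε) :
    ε ^ 2 * μ.real {ω | |f ω| ≤ M ∧ |g ω| ≤ M ∧ ε ≤ |f ω - g ω|} ≤
      8 * japaneseBracket M ^ 3 *
        ((∫ ω, japaneseBracket (f ω) ∂μ + ∫ ω, japaneseBracket (g ω) ∂μ) / 2
          - ∫ ω, japaneseBracket (midpoint ℝ f g ω) ∂μ) := by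
  set K := 8 * japaneseBracket M ^ 3
  have hK : 0 ≤ K := by have := one_le_japaneseBracket M; positivity
  set h : Ω → ℝ := fun ω => K * ((japaneseBracket (f ω) + japaneseBracket (g ω)) / 2
    - japaneseBracket (midpoint ℝ f g ω))
  have hmid : Integrable (midpoint ℝ f g) μ := by
    simpa only [midpoint_eq_smul_add] using (hf.add hg).smul (⅟2 : ℝ)
  have hint : Integrable h μ :=
    (((hf.japaneseBracket_comp.add hg.japaneseBracket_comp).div_const 2).sub
      hmid.japaneseBracket_comp).const_mul K
  have hsub : {ω | |f ω| ≤ M ∧ |g ω| ≤ M ∧ ε ≤ |f ω - g ω|} ⊆ {ω | ε ^ 2 ≤ h ω} := by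
    rintro ω ⟨hfM, hgM, hεfg⟩
    calc ε ^ 2 ≤ |f ω - g ω| ^ 2 := pow_le_pow_left₀ hε hεfg 2
      _ = (f ω - g ω) ^ 2 := sq_abs _
      _ ≤ h ω := by
        simpa only [h, pi_midpoint_apply] using sq_sub_le_mul_japaneseBracket_midpoint_gap hfM hgM
  have hh0 : 0 ≤ᵐ[μ] h := ae_of_all _ fun ω => mul_nonneg hK <| sub_nonneg.2 <| by
    simpa only [pi_midpoint_apply] using japaneseBracket_midpoint_le (f ω) (g ω)
  calc ε ^ 2 * μ.real {ω | |f ω| ≤ M ∧ |g ω| ≤ M ∧ ε ≤ |f ω - g ω|}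
      ≤ ε ^ 2 * μ.real {ω | ε ^ 2 ≤ h ω} := by gcongr; finiteness
    _ ≤ ∫ ω, h ω ∂μ := mul_meas_ge_le_integral_of_nonneg hh0 hint _
    _ = _ := by
      rw [integral_const_mul, integral_sub _ hmid.japaneseBracket_comp, integral_div,
        integral_add hf.japaneseBracket_comp hg.japaneseBracket_comp]
      exact (hf.japaneseBracket_comp.add hg.japaneseBracket_comp).div_const 2

lemma measureReal_abs_sub_ge_le {f g : Ω → ℝ} (hf : Integrable f μ) (hg : Integrable g μ)
    {C M ε : ℝ} (hfC : ∫ ω, |f ω| ∂μ ≤ C) (hgC : ∫ ω, |g ω| ∂μ ≤ C) (hM : 0 < M) (hε : 0 < ε) :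
    μ.real {ω | ε ≤ |f ω - g ω|} ≤ 2 * C / M + 8 * japaneseBracket M ^ 3 / ε ^ 2 *
      ((∫ ω, japaneseBracket (f ω) ∂μ + ∫ ω, japaneseBracket (g ω) ∂μ) / 2
        - ∫ ω, japaneseBracket (midpoint ℝ f g ω) ∂μ) := by
  have htail : ∀ u : Ω → ℝ, Integrable u μ → ∫ ω, |u ω| ∂μ ≤ C →
      μ.real {ω | M < |u ω|} ≤ C / M := fun u hu huC => by
    rw [le_div_iff₀' hM]
    calc M * μ.real {ω | M < |u ω|} ≤ M * μ.real {ω | M ≤ |u ω|} :=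
          mul_le_mul_of_nonneg_left (measureReal_mono fun ω (hω : M < |u ω|) => hω.le) hM.le
      _ ≤ C := (mul_meas_ge_le_integral_of_nonneg (ae_of_all _ fun ω => abs_nonneg _)
          hu.abs M).trans huC
  have hbulk := sq_mul_measureReal_le_midpoint_gap hf hg M hε.le
  rw [mul_comm, ← le_div_iff₀ (by positivity), mul_div_right_comm] at hbulk
  have hsub : {ω | ε ≤ |f ω - g ω|} ⊆ {ω | M < |f ω|} ∪ {ω | M < |g ω|} ∪
      {ω | |f ω| ≤ M ∧ |g ω| ≤ M ∧ ε ≤ |f ω - g ω|} := by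
    intro ω hω
    rcases le_or_gt |f ω| M with hfM | hfM
    · rcases le_or_gt |g ω| M with hgM | hgM
      · exact Or.inr ⟨hfM, hgM, hω⟩
      · exact Or.inl (Or.inr hgM)
    · exact Or.inl (Or.inl hfM)
  calc μ.real {ω | ε ≤ |f ω - g ω|}
      ≤ μ.real {ω | M < |f ω|} + μ.real {ω | M < |g ω|} +
          μ.real {ω | |f ω| ≤ M ∧ |g ω| ≤ M ∧ ε ≤ |f ω - g ω|} :=
        (measureReal_mono hsub).trans ((measureReal_union_le _ _).trans
          (add_le_add_left (measureReal_union_le _ _) _))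
    _ ≤ C / M + C / M + _ := add_le_add (add_le_add (htail f hf hfC) (htail g hg hgC)) hbulk
    _ = _ := by ring

lemma cauchyInMeasure_of_midpoint_gap {g : ℕ → Ω → ℝ} {C : ℝ} (hint : ∀ n, Integrable (g n) μ)
    (hC : ∀ n, ∫ ω, |g n ω| ∂μ ≤ C) {d : ℕ → ℝ} (hd : Tendsto d atTop (𝓝 0))
    (hgap : ∀ m n, m ≤ n →
      (∫ ω, japaneseBracket (g m ω) ∂μ + ∫ ω, japaneseBracket (g n ω) ∂μ) / 2
        - ∫ ω, japaneseBracket (midpoint ℝ (g m) (g n) ω) ∂μ ≤ d m) :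
    CauchyInMeasure μ g := by
  intro ε hε δ hδ
  set M := 4 * |C| / δ + 1 with hMdef
  have hM : 0 < M := by positivity
  set K := 8 * japaneseBracket M ^ 3 / ε ^ 2
  have hK : 0 < K := by have := one_le_japaneseBracket M; positivity
  obtain ⟨N, hN⟩ := eventually_atTop.1 (hd.eventually_lt_const (by positivity : 0 < δ / 2 / K))
  have htail : 2 * C / M ≤ δ / 2 := by
    rw [div_le_iff₀ hM]
    have : δ / 2 * M = 2 * |C| + δ / 2 := by rw [hMdef]; field_simp; ring
    linarith [le_abs_self C]
  have hle : ∀ m ≥ N, ∀ n ≥ m, μ.real {ω | ε ≤ dist (g m ω) (g n ω)} ≤ δ := by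
    intro m hm n hmn
    simp only [Real.dist_eq]
    refine (measureReal_abs_sub_ge_le (hint m) (hint n) (hC m) (hC n) hM hε).trans ?_
    have hbulk : K * ((∫ ω, japaneseBracket (g m ω) ∂μ + ∫ ω, japaneseBracket (g n ω) ∂μ) / 2
        - ∫ ω, japaneseBracket (midpoint ℝ (g m) (g n) ω) ∂μ) ≤ δ / 2 :=
      calc _ ≤ K * d m := mul_le_mul_of_nonneg_left (hgap m n hmn) hK.le
        _ ≤ K * (δ / 2 / K) := mul_le_mul_of_nonneg_left (hN m hm).le hK.le
        _ = δ / 2 := mul_div_cancel₀ _ hK.ne'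
    linarith
  refine ⟨N, fun m hm n hn => ?_⟩
  rcases le_total m n with hmn | hnm
  · exact hle m hm n hmn
  · simpa only [dist_comm] using hle n hn m hnm

end Measure

section Normed

variable {Ω E : Type*} [MeasurableSpace Ω] {μ : Measure Ω} [NormedAddCommGroup E]

lemma convex_setOf_integrable_integral_norm_le [NormedSpace ℝ E] (C : ℝ) :
    Convex ℝ {f : Ω → E | Integrable f μ ∧ ∫ ω, ‖f ω‖ ∂μ ≤ C} := by
  rintro f ⟨hf, hfC⟩ g ⟨hg, hgC⟩ a b ha hb hab
  refine ⟨(hf.smul a).add (hg.smul b), ?_⟩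
  calc ∫ ω, ‖(a • f + b • g) ω‖ ∂μ ≤ ∫ ω, a * ‖f ω‖ + b * ‖g ω‖ ∂μ := by
        refine integral_mono ((hf.smul a).add (hg.smul b)).norm
          ((hf.norm.const_mul a).add (hg.norm.const_mul b)) fun ω => ?_
        simpa [norm_smul, abs_of_nonneg ha, abs_of_nonneg hb] using
          norm_add_le (a • f ω) (b • g ω)
    _ = a * ∫ ω, ‖f ω‖ ∂μ + b * ∫ ω, ‖g ω‖ ∂μ := by
        rw [integral_add (hf.norm.const_mul a) (hg.norm.const_mul b), integral_const_mul,
          integral_const_mul]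
    _ ≤ a * C + b * C := by gcongr
    _ = C := by rw [← add_mul, hab, one_mul]

lemma integrable_of_ae_tendsto {f : ℕ → Ω → E} {g : Ω → E} {C : ℝ}
    (hf : ∀ n, Integrable (f n) μ) (hC : ∀ n, ∫ ω, ‖f n ω‖ ∂μ ≤ C)
    (hlim : ∀ᵐ ω ∂μ, Tendsto (fun n => f n ω) atTop (𝓝 (g ω))) : Integrable g μ := by
  rw [← memLp_one_iff_integrable]
  refine ⟨aestronglyMeasurable_of_tendsto_ae _ (fun n => (hf n).1) hlim,
    (Lp.eLpNorm_le_of_ae_tendsto (C := ENNReal.ofReal C) (.of_forall fun n => ?_)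
      (fun n => (hf n).1) hlim).trans_lt ENNReal.ofReal_lt_top⟩
  rw [eLpNorm_one_eq_lintegral_enorm, ← ofReal_integral_norm_eq_lintegral_enorm (hf n)]
  exact ENNReal.ofReal_le_ofReal (hC n)

end Normed

/-- **Komlós-type lemma (convex-combination form).**
If `(ζ n)` is a sequence of integrable random variables that is uniformly bounded in `L¹(P)`,
then there exist random variables `ζbar n`, each a finite convex combination of elements of
`{ζ k : k ≥ n}`, and an integrable random variable `ζlim`, such that `ζbar n → ζlim` P-a.s. -/
theorem stmt_3 {Ω : Type*} [MeasurableSpace Ω] (P : Measure Ω) [IsProbabilityMeasure P]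
    (ζ : ℕ → Ω → ℝ) (hint : ∀ n, Integrable (ζ n) P)
    (hbdd : ∃ C : ℝ, ∀ n, (∫ ω, |ζ n ω| ∂P) ≤ C) :
    ∃ (ζbar : ℕ → Ω → ℝ) (ζlim : Ω → ℝ),
      Integrable ζlim P ∧
      (∀ n, ζbar n ∈ convexHull ℝ {f : Ω → ℝ | ∃ k ≥ n, f = ζ k}) ∧
      (∀ᵐ ω ∂P, Tendsto (fun n => ζbar n ω) atTop (nhds (ζlim ω))) := by
  obtain ⟨C, hC⟩ := hbdd
  set G : ℕ → Set (Ω → ℝ) := fun n => convexHull ℝ {f | ∃ k ≥ n, f = ζ k}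
  have hGanti : Antitone G := fun m n hmn =>
    convexHull_mono fun f ⟨k, hk, hf⟩ => ⟨k, hmn.trans hk, hf⟩
  have hGself : ∀ n, ζ n ∈ G n := fun n => subset_convexHull ℝ _ ⟨n, le_rfl, rfl⟩
  have hGbdd : ∀ n, G n ⊆ {f | Integrable f P ∧ ∫ ω, |f ω| ∂P ≤ C} := fun n =>
    convexHull_min (by rintro f ⟨k, -, rfl⟩; exact ⟨hint k, hC k⟩)
      (by simpa only [Real.norm_eq_abs] using
        convex_setOf_integrable_integral_norm_le (μ := P) (E := ℝ) C)
  obtain ⟨g, hgG, d, hd, hgap⟩ := exists_seq_midpoint_gap_tendsto_zero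
    (fun f => ∫ ω, japaneseBracket (f ω) ∂P) hGanti (fun n => convex_convexHull ℝ _)
    ⟨0, by
      rintro _ ⟨f, -, rfl⟩
      exact integral_nonneg fun ω => zero_le_one.trans (one_le_japaneseBracket _)⟩
    ⟨1 + C, fun n => ⟨ζ n, hGself n, by
      simpa using (integral_japaneseBracket_le (hint n)).trans (add_le_add_right (hC n) _)⟩⟩
  have hcauchy : CauchyInMeasure P g := cauchyInMeasure_of_midpoint_gap
    (fun n => (hGbdd n (hgG n)).1) (fun n => (hGbdd n (hgG n)).2) hd hgap
  obtain ⟨φ, hφ, hconv⟩ := hcauchy.exists_seq_ae_tendsto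
  obtain ⟨ζlim, -, hlim⟩ := exists_stronglyMeasurable_limit_of_tendsto_ae
    (fun k => (hGbdd _ (hgG (φ k))).1.1) hconv
  refine ⟨fun k => g (φ k), ζlim, ?_, fun k => hGanti (hφ.id_le k) (hgG (φ k)), hlim⟩
  exact integrable_of_ae_tendsto (fun k => (hGbdd _ (hgG (φ k))).1)
    (fun k => by simpa only [Real.norm_eq_abs] using (hGbdd _ (hgG (φ k))).2) hlim
end

section
/- Let d ≥ 1, T > 0, let ρ : ℝ^d → ℝ be continuous with ρ⁻ := max(−ρ, 0) bounded and with x ↦ ρ(x)x of linear growth, and let σ : ℝ^d → M_d(ℝ) be continuous with linear growth, i.e. there is C > 0 with ‖ρ(x)x‖ + ‖σ(x)‖ ≤ C(1 + ‖x‖) for all x. Let U, V : [0,T]×ℝ^d → ℝ be continuous on [0,T]×ℝ^d, C^{1,2} on [0,T)×ℝ^d, and of polynomial growth. Assume that on [0,T)×ℝ^d one has L U(t,x) ≤ ρ(x)U(t,x) and L V(t,x) ≥ ρ(x)V(t,x), and that U(T,·) ≥ V(T,·) on ℝ^d. Then U ≥ V on [0,T]×ℝ^d. -/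
/-!
Replacing `U - V` by `W = e^{Mt} (U - V)` turns the zeroth-order coefficient `ρ` into
`ρ + M ≥ 0`, and `W` is then a supersolution with `W(T, ·) ≥ 0` and a polynomial lower bound.
For `ε > 0` the penalized function `W + ε e^{γ(T-t)} (1 + ‖x‖²)^{m+1}` is coercive, so it attains
its minimum on `[0,T] × ℝ^d`. At a nonpositive minimum before time `T` the first- and
second-order conditions (`∂ₜ ≥ 0`, `∇ = 0`, `D² ≥ 0`) turn the supersolution inequality into
`γ ≤ 2(m+1) C_b + 2(m+1)² d² C_σ`, where the right side bounds the action of the generator on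
the penalty; `γ` is chosen larger. Letting `ε → 0` gives `W ≥ 0`.
-/

open Set Matrix Filter Topology RealInnerProductSpace

attribute [local instance] Matrix.normedAddCommGroup

section Calculus

variable {F : Type*} [NormedAddCommGroup F] [InnerProductSpace ℝ F] [CompleteSpace F]
  {f g : F → ℝ} {f' g' x : F}

theorem HasGradientAt.add (hf : HasGradientAt f f' x) (hg : HasGradientAt g g' x) :
    HasGradientAt (fun y => f y + g y) (f' + g') x := by
  rw [hasGradientAt_iff_hasFDerivAt, map_add]
  exact HasFDerivAt.add hf hg

theorem HasGradientAt.neg (hf : HasGradientAt f f' x) :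
    HasGradientAt (fun y => -f y) (-f') x := by
  rw [hasGradientAt_iff_hasFDerivAt, map_neg]
  exact HasFDerivAt.neg hf

theorem HasGradientAt.const_mul (a : ℝ) (hf : HasGradientAt f f' x) :
    HasGradientAt (fun y => a * f y) (a • f') x := by
  rw [hasGradientAt_iff_hasFDerivAt, map_smul]
  exact HasFDerivAt.const_mul hf a

theorem IsLocalMin.hasGradientAt_eq_zero (h : IsLocalMin f x) (hf : HasGradientAt f f' x) :
    f' = 0 :=
  (InnerProductSpace.toDual ℝ F).map_eq_zero_iff.1 (h.hasFDerivAt_eq_zero hf)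

theorem IsLocalMin.nonneg_of_hasDerivAt_deriv {φ φ' : ℝ → ℝ} {a c : ℝ} (h : IsLocalMin φ a)
    (hφ : ∀ᶠ s in 𝓝 a, HasDerivAt φ (φ' s) s) (hφ' : HasDerivAt φ' c a) : 0 ≤ c := by
  by_contra! hc
  have hderiv : deriv φ =ᶠ[𝓝 a] φ' := hφ.mono fun s hs => hs.deriv
  have hφ'' : HasDerivAt (deriv φ) c a := hφ'.congr_of_eventuallyEq hderiv
  have hmax : IsLocalMax φ a := isLocalMax_of_deriv_deriv_neg (by rwa [hφ''.deriv])
    h.deriv_eq_zero hφ.self_of_nhds.continuousAt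
  have hconst : deriv φ =ᶠ[𝓝 a] fun _ => 0 := by
    have : φ =ᶠ[𝓝 a] fun _ => φ a := (hmax.and h).mono fun s hs => le_antisymm hs.1 hs.2
    simpa using this.deriv
  have := hφ''.unique ((hasDerivAt_const a (0 : ℝ)).congr_of_eventuallyEq hconst)
  linarith

theorem IsLocalMin.inner_hessian_nonneg {G : F → F} {H : F →L[ℝ] F}
    (h : IsLocalMin f x) (hf : ∀ y, HasGradientAt f (G y) y) (hG : HasFDerivAt G H x) (v : F) :
    0 ≤ ⟪H v, v⟫ := by
  have hline : ∀ s : ℝ, HasDerivAt (fun s : ℝ => x + s • v) v s := fun s => by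
    simpa using ((hasDerivAt_id s).smul_const v).const_add x
  refine IsLocalMin.nonneg_of_hasDerivAt_deriv (φ := fun s : ℝ => f (x + s • v))
    (φ' := fun s => ⟪G (x + s • v), v⟫) (a := 0) ?_ (Eventually.of_forall fun s => ?_) ?_
  · have h' : IsLocalMin f (x + (0 : ℝ) • v) := by simpa using h
    exact h'.comp_continuous (g := fun s : ℝ => x + s • v) (hline 0).continuousAt
  · exact (hf _).hasFDerivAt.comp_hasDerivAt s (hline s)
  · have hG' : HasFDerivAt G H (x + (0 : ℝ) • v) := by simpa using hG
    simpa using (hG'.comp_hasDerivAt 0 (hline 0)).inner ℝ (hasDerivAt_const _ v)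

end Calculus

theorem IsMinOn.hasDerivWithinAt_Ico_nonneg {φ : ℝ → ℝ} {a b t θ : ℝ}
    (h : IsMinOn φ (Ico a b) t) (ht : t ∈ Ico a b) (hφ : HasDerivWithinAt φ θ (Ico a b) t) :
    0 ≤ θ := by
  have hcone : b - t ∈ posTangentConeAt (Ico a b) t :=
    sub_mem_posTangentConeAt_of_openSegment_subset (by
      rw [openSegment_eq_Ioo ht.2]; exact Ioo_subset_Ico_self.trans (Ico_subset_Ico_left ht.1))
  have := h.localize.hasFDerivWithinAt_nonneg hφ hcone
  simp only [ContinuousLinearMap.toSpanSingleton_apply, smul_eq_mul] at this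
  nlinarith [ht.2]

theorem exists_isMinOn_Icc_prod_univ {E : Type*} [NormedAddCommGroup E] [ProperSpace E]
    {F : ℝ × E → ℝ} {a b r : ℝ} {p₀ : ℝ × E} (hp₀ : p₀ ∈ Icc a b ×ˢ univ)
    (hF : ContinuousOn F (Icc a b ×ˢ univ))
    (hcoer : ∀ t ∈ Icc a b, ∀ x, r < ‖x‖ → F p₀ ≤ F (t, x)) :
    ∃ p ∈ Icc a b ×ˢ univ, IsMinOn F (Icc a b ×ˢ univ) p := by
  refine hF.exists_isMinOn' (isClosed_Icc.prod isClosed_univ) hp₀ ?_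
  refine (hasBasis_cocompact.inf_principal _).eventually_iff.2
    ⟨Icc a b ×ˢ Metric.closedBall 0 r, isCompact_Icc.prod (isCompact_closedBall _ _), ?_⟩
  rintro ⟨t, x⟩ ⟨hK, ht, -⟩
  exact hcoer t ht x (by simpa [ht] using hK)

section Penalty

variable {F : Type*} [NormedAddCommGroup F]

def penalty (m : ℕ) (x : F) : ℝ := (1 + ‖x‖ ^ 2) ^ m

theorem one_le_penalty (m : ℕ) (x : F) : 1 ≤ penalty m x :=
  one_le_pow₀ (le_add_of_nonneg_right (sq_nonneg _))

theorem one_add_pow_le_two_mul_penalty {p m : ℕ} (hpm : p ≤ m) (x : F) :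
    1 + ‖x‖ ^ p ≤ 2 * penalty m x := by
  have hx : ‖x‖ ≤ 1 + ‖x‖ ^ 2 := by nlinarith [sq_nonneg (‖x‖ - 1)]
  have h1 : ‖x‖ ^ p ≤ penalty m x :=
    (pow_le_pow_left₀ (norm_nonneg x) hx p).trans
      (pow_le_pow_right₀ (le_add_of_nonneg_right (sq_nonneg _)) hpm)
  linarith [one_le_penalty m x]

theorem le_mul_pow_succ_sub_mul_pow {y ε K A : ℝ} (m : ℕ) (hy : 1 ≤ y) (hA : 0 ≤ A)
    (h : K + A ≤ ε * y) : A ≤ ε * y ^ (m + 1) - K * y ^ m := by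
  have hym : 1 ≤ y ^ m := one_le_pow₀ hy
  have : ε * y ^ (m + 1) - K * y ^ m = y ^ m * (ε * y - K) := by ring
  nlinarith

theorem natCast_mul_pow_pred_mul_le {y : ℝ} (hy : 0 ≤ y) (n : ℕ) :
    (n : ℝ) * (1 + y) ^ (n - 1) * y ≤ n * (1 + y) ^ n := by
  cases n with
  | zero => simp
  | succ k =>
    rw [Nat.add_sub_cancel, pow_succ, mul_assoc]
    gcongr
    linarith

variable [InnerProductSpace ℝ F]

theorem hasGradientAt_penalty [CompleteSpace F] (m : ℕ) (x : F) :
    HasGradientAt (penalty m) ((2 * m * (1 + ‖x‖ ^ 2) ^ (m - 1)) • x) x := by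
  have h := (hasDerivAt_pow m _).comp_hasFDerivAt x
    ((hasStrictFDerivAt_norm_sq x).hasFDerivAt.const_add 1)
  rw [hasGradientAt_iff_hasFDerivAt]
  refine h.congr_fderiv ?_
  ext v
  simp only [_root_.smul_apply, coe_innerSL_apply, nsmul_eq_mul, Nat.cast_ofNat, smul_eq_mul,
    map_smul, InnerProductSpace.toDual_apply_apply]
  ring

theorem exists_hasFDerivAt_penalty_gradient (m : ℕ) (x : F) :
    ∃ H : F →L[ℝ] F, HasFDerivAt (fun y : F => (2 * m * (1 + ‖y‖ ^ 2) ^ (m - 1)) • y) H x ∧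
      ∀ v, ⟪H v, v⟫ ≤ 4 * m ^ 2 * (1 + ‖x‖ ^ 2) ^ (m - 1) * ‖v‖ ^ 2 := by
  have hc := ((hasDerivAt_pow (m - 1) _).comp_hasFDerivAt x
    ((hasStrictFDerivAt_norm_sq x).hasFDerivAt.const_add 1)).const_mul (2 * (m : ℝ))
  refine ⟨_, hc.smul (hasFDerivAt_id x), fun v => ?_⟩
  have hxv : ⟪x, v⟫ * ⟪x, v⟫ ≤ ‖x‖ ^ 2 * ‖v‖ ^ 2 := by
    simpa only [real_inner_self_eq_norm_sq] using real_inner_mul_inner_self_le x v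
  have hpow := natCast_mul_pow_pred_mul_le (sq_nonneg ‖x‖) (m - 1)
  have hcoef : 2 * (m : ℝ) + 4 * m * ((m - 1 : ℕ) : ℝ) ≤ 4 * m ^ 2 := by
    rcases m with _ | k
    · simp
    · push_cast [Nat.add_sub_cancel]; nlinarith
  simp only [Function.comp_apply, _root_.add_apply, _root_.smul_apply,
    ContinuousLinearMap.id_apply, ContinuousLinearMap.smulRight_apply, coe_innerSL_apply,
    nsmul_eq_mul, Nat.cast_ofNat, smul_eq_mul, inner_add_left, real_inner_smul_left,
    real_inner_self_eq_norm_sq]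
  set A := (1 + ‖x‖ ^ 2) ^ (m - 1)
  set B := (1 + ‖x‖ ^ 2) ^ (m - 1 - 1)
  have hB : 0 ≤ 4 * (m : ℝ) * ((m - 1 : ℕ) * B) := by positivity
  have hA : 0 ≤ A * ‖v‖ ^ 2 := by positivity
  nlinarith [mul_le_mul_of_nonneg_left hxv hB, mul_le_mul_of_nonneg_right hcoef hA,
    mul_le_mul_of_nonneg_left hpow (by positivity : (0 : ℝ) ≤ 4 * m * ‖v‖ ^ 2)]

end Penalty

section Trace

variable {n : Type*} [Fintype n]

theorem sum_norm_toLp_transpose_sq_le (σ : Matrix n n ℝ) :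
    ∑ j, ‖WithLp.toLp 2 (σᵀ j)‖ ^ 2 ≤ Fintype.card n ^ 2 * ‖σ‖ ^ 2 := by
  simp only [EuclideanSpace.norm_sq_eq, transpose_apply, Real.norm_eq_abs, sq_abs]
  calc ∑ j, ∑ i, σ i j ^ 2 ≤ ∑ _j : n, ∑ _i : n, ‖σ‖ ^ 2 := by
        refine Finset.sum_le_sum fun j _ => Finset.sum_le_sum fun i _ => ?_
        simpa using pow_le_pow_left₀ (norm_nonneg _) (norm_entry_le_entrywise_sup_norm σ) 2
    _ = Fintype.card n ^ 2 * ‖σ‖ ^ 2 := by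
        simp only [Finset.sum_const, Finset.card_univ, nsmul_eq_mul]
        ring

variable [DecidableEq n]

theorem trace_mul_transpose_mul_eq_sum_inner (σ A : Matrix n n ℝ) :
    (σ * σᵀ * A).trace =
      ∑ j, ⟪toEuclideanCLM (𝕜 := ℝ) A (WithLp.toLp 2 (σᵀ j)), WithLp.toLp 2 (σᵀ j)⟫ := by
  rw [trace_mul_cycle, trace_mul_comm, ← Matrix.mul_assoc]
  simp only [toEuclideanCLM_toLp, EuclideanSpace.inner_toLp_toLp, star_trivial, trace, diag,
    mul_apply, mulVec, dotProduct, transpose_apply, Finset.sum_mul, Finset.mul_sum]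
  exact Finset.sum_congr rfl fun j _ => Finset.sum_comm.trans
    (Finset.sum_congr rfl fun i _ => Finset.sum_congr rfl fun k _ => by ring)

theorem neg_le_trace_mul_transpose_mul {σ A : Matrix n n ℝ} {κ : ℝ} (hκ : 0 ≤ κ)
    (hA : ∀ v, -(κ * ‖v‖ ^ 2) ≤ ⟪toEuclideanCLM (𝕜 := ℝ) A v, v⟫) :
    -(κ * Fintype.card n ^ 2 * ‖σ‖ ^ 2) ≤ (σ * σᵀ * A).trace := by
  rw [trace_mul_transpose_mul_eq_sum_inner]
  calc -(κ * Fintype.card n ^ 2 * ‖σ‖ ^ 2)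
      ≤ -(κ * ∑ j, ‖WithLp.toLp 2 (σᵀ j)‖ ^ 2) := by
        rw [mul_assoc]; gcongr; exact sum_norm_toLp_transpose_sq_le σ
    _ = ∑ j, -(κ * ‖WithLp.toLp 2 (σᵀ j)‖ ^ 2) := by
        rw [Finset.mul_sum, Finset.sum_neg_distrib]
    _ ≤ _ := Finset.sum_le_sum fun j _ => hA _

end Trace

section Supersolution

variable {n : Type*} [Fintype n] [DecidableEq n] {T : ℝ}
  {b : EuclideanSpace ℝ n → EuclideanSpace ℝ n} {σ : EuclideanSpace ℝ n → Matrix n n ℝ}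
  {c : EuclideanSpace ℝ n → ℝ} {W Wt W' Wt' : ℝ → EuclideanSpace ℝ n → ℝ}
  {Wx Wx' : ℝ → EuclideanSpace ℝ n → EuclideanSpace ℝ n}
  {Wxx Wxx' : ℝ → EuclideanSpace ℝ n → Matrix n n ℝ}

structure IsSupersolution (T : ℝ) (b : EuclideanSpace ℝ n → EuclideanSpace ℝ n)
    (σ : EuclideanSpace ℝ n → Matrix n n ℝ) (c : EuclideanSpace ℝ n → ℝ)
    (W Wt : ℝ → EuclideanSpace ℝ n → ℝ) (Wx : ℝ → EuclideanSpace ℝ n → EuclideanSpace ℝ n)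
    (Wxx : ℝ → EuclideanSpace ℝ n → Matrix n n ℝ) : Prop where
  hasDerivWithinAt_time : ∀ t ∈ Ico 0 T, ∀ x, HasDerivWithinAt (W · x) (Wt t x) (Ico 0 T) t
  hasGradientAt : ∀ t ∈ Ico 0 T, ∀ x, HasGradientAt (W t) (Wx t x) x
  hasFDerivAt_gradient : ∀ t ∈ Ico 0 T, ∀ x,
    HasFDerivAt (Wx t) (toEuclideanCLM (𝕜 := ℝ) (Wxx t x)) x
  generator_le : ∀ t ∈ Ico 0 T, ∀ x,
    Wt t x + ⟪b x, Wx t x⟫ + (1 / 2) * (σ x * (σ x)ᵀ * Wxx t x).trace ≤ c x * W t x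

namespace IsSupersolution

theorem add (hW : IsSupersolution T b σ c W Wt Wx Wxx)
    (hW' : IsSupersolution T b σ c W' Wt' Wx' Wxx') :
    IsSupersolution T b σ c (fun t x => W t x + W' t x) (fun t x => Wt t x + Wt' t x)
      (fun t x => Wx t x + Wx' t x) (fun t x => Wxx t x + Wxx' t x) where
  hasDerivWithinAt_time t ht x :=
    (hW.hasDerivWithinAt_time t ht x).add (hW'.hasDerivWithinAt_time t ht x)
  hasGradientAt t ht x := (hW.hasGradientAt t ht x).add (hW'.hasGradientAt t ht x)
  hasFDerivAt_gradient t ht x := by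
    rw [map_add]
    exact (hW.hasFDerivAt_gradient t ht x).fun_add (hW'.hasFDerivAt_gradient t ht x)
  generator_le t ht x := by
    rw [inner_add_right, Matrix.mul_add, trace_add]
    linarith [hW.generator_le t ht x, hW'.generator_le t ht x]

theorem exp_mul (hW : IsSupersolution T b σ c W Wt Wx Wxx) (M : ℝ) :
    IsSupersolution T b σ (fun x => c x + M) (fun t x => Real.exp (M * t) * W t x)
      (fun t x => Real.exp (M * t) * (M * W t x + Wt t x))
      (fun t x => Real.exp (M * t) • Wx t x) (fun t x => Real.exp (M * t) • Wxx t x) where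
  hasDerivWithinAt_time t ht x := by
    have hexp : HasDerivAt (fun s => Real.exp (M * s)) (Real.exp (M * t) * M) t := by
      simpa using ((hasDerivAt_id t).const_mul M).exp
    exact (hexp.hasDerivWithinAt.fun_mul (hW.hasDerivWithinAt_time t ht x)).congr_deriv
      (by ring)
  hasGradientAt t ht x := (hW.hasGradientAt t ht x).const_mul _
  hasFDerivAt_gradient t ht x := by
    rw [map_smul]
    exact (hW.hasFDerivAt_gradient t ht x).fun_const_smul _
  generator_le t ht x := by
    have h := mul_le_mul_of_nonneg_left (hW.generator_le t ht x) (Real.exp_pos (M * t)).le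
    rw [real_inner_smul_right, Matrix.mul_smul, trace_smul, smul_eq_mul]
    linarith

theorem le_time_deriv_of_isMinOn (hW : IsSupersolution T b σ c W Wt Wx Wxx) {ε γ t₀ : ℝ}
    {x₀ : EuclideanSpace ℝ n} {N : ℕ} (ht₀ : t₀ ∈ Ico 0 T)
    (hmin : IsMinOn (fun s => W s x₀ + ε * Real.exp (γ * (T - s)) * penalty N x₀) (Ico 0 T) t₀) :
    γ * (ε * Real.exp (γ * (T - t₀))) * penalty N x₀ ≤ Wt t₀ x₀ := by
  have hweight : HasDerivAt (fun s => ε * Real.exp (γ * (T - s)) * penalty N x₀)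
      (-(γ * (ε * Real.exp (γ * (T - t₀))) * penalty N x₀)) t₀ := by
    have := ((((hasDerivAt_id t₀).const_sub T).const_mul γ).exp.const_mul ε).mul_const
      (penalty N x₀)
    exact this.congr_deriv (by simp only [id]; ring)
  have := hmin.hasDerivWithinAt_Ico_nonneg ht₀
    ((hW.hasDerivWithinAt_time t₀ ht₀ x₀).fun_add hweight.hasDerivWithinAt)
  linarith

theorem neg_le_drift_add_diffusion_of_isLocalMin (hW : IsSupersolution T b σ c W Wt Wx Wxx)
    {Cb Cσ : ℝ} (hb : ∀ x, ⟪b x, x⟫ ≤ Cb * (1 + ‖x‖ ^ 2))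
    (hσ : ∀ x, ‖σ x‖ ^ 2 ≤ Cσ * (1 + ‖x‖ ^ 2)) {m : ℕ} {e t₀ : ℝ} (he : 0 ≤ e)
    {x₀ : EuclideanSpace ℝ n} (ht₀ : t₀ ∈ Ico 0 T)
    (hmin : IsLocalMin (fun y => W t₀ y + e * penalty (m + 1) y) x₀) :
    -(e * (2 * (m + 1) * Cb + 2 * (m + 1) ^ 2 * Fintype.card n ^ 2 * Cσ) * penalty (m + 1) x₀) ≤
      ⟪b x₀, Wx t₀ x₀⟫ + (1 / 2) * (σ x₀ * (σ x₀)ᵀ * Wxx t₀ x₀).trace := by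
  set q := 1 + ‖x₀‖ ^ 2
  have hg : penalty (m + 1) x₀ = q ^ m * q := pow_succ q m
  have hgrad : ∀ y, HasGradientAt (fun y => W t₀ y + e * penalty (m + 1) y)
      (Wx t₀ y + e • (2 * (m + 1 : ℕ) * (1 + ‖y‖ ^ 2) ^ (m + 1 - 1)) • y) y := fun y =>
    (hW.hasGradientAt t₀ ht₀ y).add ((hasGradientAt_penalty (m + 1) y).const_mul e)
  have hdrift : -(e * (2 * (m + 1) * Cb) * (q ^ m * q)) ≤ ⟪b x₀, Wx t₀ x₀⟫ := by
    rw [eq_neg_of_add_eq_zero_left (hmin.hasGradientAt_eq_zero (hgrad x₀)), inner_neg_right,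
      real_inner_smul_right, real_inner_smul_right]
    push_cast [Nat.add_sub_cancel]
    nlinarith [mul_le_mul_of_nonneg_left (hb x₀) (by positivity : 0 ≤ e * (2 * (m + 1) * q ^ m))]
  obtain ⟨H, hH, hHle⟩ := exists_hasFDerivAt_penalty_gradient (m + 1) x₀
  have hsecond : ∀ v, -(e * (4 * (m + 1 : ℕ) ^ 2 * q ^ m) * ‖v‖ ^ 2) ≤
      ⟪toEuclideanCLM (𝕜 := ℝ) (Wxx t₀ x₀) v, v⟫ := fun v => by
    have := hmin.inner_hessian_nonneg hgrad
      ((hW.hasFDerivAt_gradient t₀ ht₀ x₀).fun_add (hH.fun_const_smul e)) v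
    rw [_root_.add_apply, inner_add_left, _root_.smul_apply, real_inner_smul_left] at this
    have := mul_le_mul_of_nonneg_left (hHle v) he
    rw [Nat.add_sub_cancel] at this
    linarith
  have htrace := neg_le_trace_mul_transpose_mul (σ := σ x₀) (by positivity) hsecond
  have hσq := mul_le_mul_of_nonneg_left (hσ x₀)
    (by positivity : 0 ≤ e * (4 * (m + 1 : ℕ) ^ 2 * q ^ m) * Fintype.card n ^ 2)
  rw [hg]
  push_cast at htrace hσq
  nlinarith

theorem penalized_pos_of_isMinOn (hW : IsSupersolution T b σ c W Wt Wx Wxx)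
    (hc : ∀ x, 0 ≤ c x) {Cb Cσ : ℝ} (hb : ∀ x, ⟪b x, x⟫ ≤ Cb * (1 + ‖x‖ ^ 2))
    (hσ : ∀ x, ‖σ x‖ ^ 2 ≤ Cσ * (1 + ‖x‖ ^ 2)) {m : ℕ} {ε γ : ℝ} (hε : 0 < ε)
    (hγ : 2 * (m + 1) * Cb + 2 * (m + 1) ^ 2 * Fintype.card n ^ 2 * Cσ < γ)
    {t₀ : ℝ} {x₀ : EuclideanSpace ℝ n} (ht₀ : t₀ ∈ Ico 0 T)
    (hmin : IsMinOn (fun p : ℝ × EuclideanSpace ℝ n =>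
      W p.1 p.2 + ε * Real.exp (γ * (T - p.1)) * penalty (m + 1) p.2) (Icc 0 T ×ˢ univ)
      (t₀, x₀)) :
    0 < W t₀ x₀ + ε * Real.exp (γ * (T - t₀)) * penalty (m + 1) x₀ := by
  by_contra! hneg
  set e := ε * Real.exp (γ * (T - t₀))
  have he : 0 < e := by positivity
  have hg : 0 < penalty (m + 1) x₀ := zero_lt_one.trans_le (one_le_penalty _ _)
  have htime := hW.le_time_deriv_of_isMinOn ht₀ (isMinOn_iff.2 fun s hs =>
    isMinOn_iff.1 hmin (s, x₀) ⟨Ico_subset_Icc_self hs, mem_univ _⟩)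
  have hloc : IsLocalMin (fun y => W t₀ y + e * penalty (m + 1) y) x₀ :=
    (isMinOn_iff.2 fun y _ => isMinOn_iff.1 hmin (t₀, y)
      ⟨Ico_subset_Icc_self ht₀, mem_univ _⟩).isLocalMin univ_mem
  have hspace := hW.neg_le_drift_add_diffusion_of_isLocalMin hb hσ he.le ht₀ hloc
  have hcW : c x₀ * W t₀ x₀ ≤ 0 :=
    mul_nonpos_of_nonneg_of_nonpos (hc x₀) (by nlinarith)
  have := mul_lt_mul_of_pos_right hγ (mul_pos he hg)
  -- `γ e g ≤ Wt ≤ c W - (drift + diffusion) ≤ e g (2(m+1) Cb + 2(m+1)² (card n)² Cσ) < γ e g`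
  nlinarith [hW.generator_le t₀ ht₀ x₀]

theorem penalized_pos (hW : IsSupersolution T b σ c W Wt Wx Wxx)
    (hc : ∀ x, 0 ≤ c x) {Cb Cσ : ℝ} (hb : ∀ x, ⟪b x, x⟫ ≤ Cb * (1 + ‖x‖ ^ 2))
    (hσ : ∀ x, ‖σ x‖ ^ 2 ≤ Cσ * (1 + ‖x‖ ^ 2)) (hT : 0 ≤ T)
    (hWc : ContinuousOn (fun p : ℝ × EuclideanSpace ℝ n => W p.1 p.2) (Icc 0 T ×ˢ univ))
    {K : ℝ} {m : ℕ} (hWlow : ∀ t ∈ Icc 0 T, ∀ x, -(K * penalty m x) ≤ W t x)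
    (hWT : ∀ x, 0 ≤ W T x) {ε γ : ℝ} (hε : 0 < ε) (hγ₀ : 0 ≤ γ)
    (hγ : 2 * (m + 1) * Cb + 2 * (m + 1) ^ 2 * Fintype.card n ^ 2 * Cσ < γ) :
    ∀ t ∈ Icc 0 T, ∀ x, 0 < W t x + ε * Real.exp (γ * (T - t)) * penalty (m + 1) x := by
  set G : ℝ × EuclideanSpace ℝ n → ℝ :=
    fun p => W p.1 p.2 + ε * Real.exp (γ * (T - p.1)) * penalty (m + 1) p.2 with hG
  have hGc : ContinuousOn G (Icc 0 T ×ˢ univ) :=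
    hWc.add (Continuous.continuousOn (by unfold penalty; fun_prop))
  have hcoer : ∀ t ∈ Icc 0 T, ∀ x, (K + |G (0, 0)|) / ε < ‖x‖ → G (0, 0) ≤ G (t, x) := by
    intro t ht x hx
    have hy : K + |G (0, 0)| ≤ ε * (1 + ‖x‖ ^ 2) := by
      rw [div_lt_iff₀ hε] at hx
      nlinarith [sq_nonneg (‖x‖ - 1)]
    have hexp : 1 ≤ Real.exp (γ * (T - t)) := Real.one_le_exp (mul_nonneg hγ₀ (by linarith [ht.2]))
    have hpen : 0 ≤ ε * penalty (m + 1) x :=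
      mul_nonneg hε.le (zero_le_one.trans (one_le_penalty _ _))
    calc G (0, 0) ≤ |G (0, 0)| := le_abs_self _
      _ ≤ ε * penalty (m + 1) x - K * penalty m x :=
        le_mul_pow_succ_sub_mul_pow m (le_add_of_nonneg_right (sq_nonneg _)) (abs_nonneg _) hy
      _ ≤ G (t, x) := by
        simp only [hG]
        nlinarith [hWlow t ht x, mul_le_mul_of_nonneg_right hexp hpen]
  obtain ⟨⟨t₀, x₀⟩, ⟨ht₀, -⟩, hmin⟩ :=
    exists_isMinOn_Icc_prod_univ (p₀ := (0, 0)) ⟨⟨le_rfl, hT⟩, mem_univ _⟩ hGc hcoer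
  have hpos : 0 < G (t₀, x₀) := by
    rcases ht₀.2.lt_or_eq with hlt | rfl
    · exact hW.penalized_pos_of_isMinOn hc hb hσ hε hγ ⟨ht₀.1, hlt⟩ hmin
    · have := one_le_penalty (m + 1) x₀
      simp only [hG, sub_self, mul_zero, Real.exp_zero, mul_one]
      nlinarith [hWT x₀]
  exact fun t ht x => hpos.trans_le (isMinOn_iff.1 hmin (t, x) ⟨ht, mem_univ _⟩)

theorem nonneg (hW : IsSupersolution T b σ c W Wt Wx Wxx)
    (hc : ∀ x, 0 ≤ c x) {Cb Cσ : ℝ} (hb : ∀ x, ⟪b x, x⟫ ≤ Cb * (1 + ‖x‖ ^ 2))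
    (hσ : ∀ x, ‖σ x‖ ^ 2 ≤ Cσ * (1 + ‖x‖ ^ 2))
    (hWc : ContinuousOn (fun p : ℝ × EuclideanSpace ℝ n => W p.1 p.2) (Icc 0 T ×ˢ univ))
    {K : ℝ} {m : ℕ} (hWlow : ∀ t ∈ Icc 0 T, ∀ x, -(K * penalty m x) ≤ W t x)
    (hWT : ∀ x, 0 ≤ W T x) : ∀ t ∈ Icc 0 T, ∀ x, 0 ≤ W t x := by
  intro t ht x
  set γ : ℝ := 2 * (m + 1) * |Cb| + 2 * (m + 1) ^ 2 * Fintype.card n ^ 2 * |Cσ| + 1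
  have hγ : 2 * (m + 1) * Cb + 2 * (m + 1) ^ 2 * Fintype.card n ^ 2 * Cσ < γ := by
    have := le_abs_self Cb
    have := le_abs_self Cσ
    have : (0 : ℝ) ≤ 2 * (m + 1) ^ 2 * Fintype.card n ^ 2 := by positivity
    nlinarith
  have hB : 0 < Real.exp (γ * (T - t)) * penalty (m + 1) x :=
    mul_pos (Real.exp_pos _) (zero_lt_one.trans_le (one_le_penalty _ _))
  refine le_of_forall_pos_lt_add fun δ hδ => ?_
  have := hW.penalized_pos hc hb hσ (ht.1.trans ht.2) hWc hWlow hWT (div_pos hδ hB)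
    (by positivity) hγ t ht x
  rwa [mul_assoc, div_mul_cancel₀ _ hB.ne'] at this

end IsSupersolution

end Supersolution

theorem neg_two_mul_penalty_le {E : Type*} [NormedAddCommGroup E] {a C : ℝ} {p m : ℕ} {x : E}
    (hpm : p ≤ m) (h : |a| ≤ C * (1 + ‖x‖ ^ p)) : -(2 * C * penalty m x) ≤ a := by
  have hC : 0 ≤ C := nonneg_of_mul_nonneg_left ((abs_nonneg a).trans h) (by positivity)
  nlinarith [neg_abs_le a, mul_le_mul_of_nonneg_left (one_add_pow_le_two_mul_penalty hpm x) hC]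

theorem neg_exp_mul_le_exp_mul {M t T K g a : ℝ} (hM : 0 ≤ M) (ht : t ≤ T) (hKg : 0 ≤ K * g)
    (h : -(K * g) ≤ a) : -(Real.exp (M * T) * K * g) ≤ Real.exp (M * t) * a := by
  have hexp : Real.exp (M * t) ≤ Real.exp (M * T) :=
    Real.exp_le_exp.2 (mul_le_mul_of_nonneg_left ht hM)
  nlinarith [mul_le_mul_of_nonneg_left h (Real.exp_pos (M * t)).le,
    mul_le_mul_of_nonneg_right hexp hKg]

theorem inner_le_of_norm_le_mul_one_add {E : Type*} [NormedAddCommGroup E]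
    [InnerProductSpace ℝ E] {C : ℝ} {x y : E} (h : ‖y‖ ≤ C * (1 + ‖x‖)) :
    ⟪y, x⟫ ≤ 2 * C * (1 + ‖x‖ ^ 2) := by
  have hC : 0 ≤ C := nonneg_of_mul_nonneg_left ((norm_nonneg y).trans h) (by positivity)
  calc ⟪y, x⟫ ≤ ‖y‖ * ‖x‖ := real_inner_le_norm y x
    _ ≤ C * (1 + ‖x‖) * ‖x‖ := by gcongr
    _ ≤ 2 * C * (1 + ‖x‖ ^ 2) := by nlinarith [sq_nonneg (‖x‖ - 1)]

theorem sq_le_of_le_mul_one_add {a C s : ℝ} (ha : 0 ≤ a) (h : a ≤ C * (1 + s)) :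
    a ^ 2 ≤ 2 * C ^ 2 * (1 + s ^ 2) :=
  calc a ^ 2 ≤ (C * (1 + s)) ^ 2 := pow_le_pow_left₀ ha h 2
    _ ≤ 2 * C ^ 2 * (1 + s ^ 2) := by nlinarith [sq_nonneg (C * (1 - s))]

theorem stmt_4_general
    (d : ℕ) (T : ℝ)
    (ρ : EuclideanSpace ℝ (Fin d) → ℝ)
    (σ : EuclideanSpace ℝ (Fin d) → Matrix (Fin d) (Fin d) ℝ)
    (hρneg : ∃ M : ℝ, ∀ x, max (-ρ x) 0 ≤ M)
    (hgrowth : ∃ C : ℝ, 0 < C ∧ ∀ x, ‖ρ x • x‖ + ‖σ x‖ ≤ C * (1 + ‖x‖))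
    (U V Ut Vt : ℝ → EuclideanSpace ℝ (Fin d) → ℝ)
    (Ux Vx : ℝ → EuclideanSpace ℝ (Fin d) → EuclideanSpace ℝ (Fin d))
    (Uxx Vxx : ℝ → EuclideanSpace ℝ (Fin d) → Matrix (Fin d) (Fin d) ℝ)
    -- continuity of U and V on [0,T] × ℝ^d
    (hUcont : ContinuousOn (fun p : ℝ × EuclideanSpace ℝ (Fin d) => U p.1 p.2)
      (Icc 0 T ×ˢ univ))
    (hVcont : ContinuousOn (fun p : ℝ × EuclideanSpace ℝ (Fin d) => V p.1 p.2)
      (Icc 0 T ×ˢ univ))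
    -- U is C^{1,2} on [0,T) × ℝ^d with derivatives Ut, Ux, Uxx
    (hUt : ∀ t ∈ Ico (0:ℝ) T, ∀ x, HasDerivWithinAt (fun s => U s x) (Ut t x) (Ico 0 T) t)
    (hUx : ∀ t ∈ Ico (0:ℝ) T, ∀ x, HasGradientAt (fun y => U t y) (Ux t x) x)
    (hUxx : ∀ t ∈ Ico (0:ℝ) T, ∀ x, HasFDerivAt (fun y => Ux t y)
      ((Matrix.toEuclideanCLM (𝕜 := ℝ) (Uxx t x) :
        EuclideanSpace ℝ (Fin d) →L[ℝ] EuclideanSpace ℝ (Fin d))) x)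
    -- V is C^{1,2} on [0,T) × ℝ^d with derivatives Vt, Vx, Vxx
    (hVt : ∀ t ∈ Ico (0:ℝ) T, ∀ x, HasDerivWithinAt (fun s => V s x) (Vt t x) (Ico 0 T) t)
    (hVx : ∀ t ∈ Ico (0:ℝ) T, ∀ x, HasGradientAt (fun y => V t y) (Vx t x) x)
    (hVxx : ∀ t ∈ Ico (0:ℝ) T, ∀ x, HasFDerivAt (fun y => Vx t y)
      ((Matrix.toEuclideanCLM (𝕜 := ℝ) (Vxx t x) :
        EuclideanSpace ℝ (Fin d) →L[ℝ] EuclideanSpace ℝ (Fin d))) x)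
    -- polynomial growth of U and V
    (hUgrowth : ∃ C : ℝ, 0 < C ∧ ∃ p : ℕ, 1 ≤ p ∧
      ∀ t ∈ Icc (0:ℝ) T, ∀ x, |U t x| ≤ C * (1 + ‖x‖ ^ p))
    (hVgrowth : ∃ C : ℝ, 0 < C ∧ ∃ p : ℕ, 1 ≤ p ∧
      ∀ t ∈ Icc (0:ℝ) T, ∀ x, |V t x| ≤ C * (1 + ‖x‖ ^ p))
    -- L U ≤ ρ U and L V ≥ ρ V on [0,T) × ℝ^d
    (hUsuper : ∀ t ∈ Ico (0:ℝ) T, ∀ x,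
      Ut t x + ρ x * (inner ℝ x (Ux t x) : ℝ)
        + (1/2) * (σ x * (σ x)ᵀ * Uxx t x).trace ≤ ρ x * U t x)
    (hVsub : ∀ t ∈ Ico (0:ℝ) T, ∀ x,
      ρ x * V t x ≤ Vt t x + ρ x * (inner ℝ x (Vx t x) : ℝ)
        + (1/2) * (σ x * (σ x)ᵀ * Vxx t x).trace)
    -- terminal ordering
    (hTerm : ∀ x, V T x ≤ U T x) :
    ∀ t ∈ Icc (0:ℝ) T, ∀ x, V t x ≤ U t x := by
  obtain ⟨M, hM⟩ := hρneg
  obtain ⟨C, -, hC⟩ := hgrowth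
  obtain ⟨CU, hCU, pU, -, hU⟩ := hUgrowth
  obtain ⟨CV, hCV, pV, -, hV⟩ := hVgrowth
  have hsuperU : IsSupersolution T (fun x => ρ x • x) σ ρ U Ut Ux Uxx :=
    ⟨hUt, hUx, hUxx, fun t ht x => by simpa only [real_inner_smul_left] using hUsuper t ht x⟩
  have hsuperV : IsSupersolution T (fun x => ρ x • x) σ ρ (fun t x => -V t x)
      (fun t x => -Vt t x) (fun t x => -Vx t x) (fun t x => -Vxx t x) :=
    ⟨fun t ht x => (hVt t ht x).fun_neg, fun t ht x => (hVx t ht x).neg,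
      fun t ht x => by rw [map_neg]; exact (hVxx t ht x).fun_neg, fun t ht x => by
        simp only [inner_neg_right, real_inner_smul_left, Matrix.mul_neg, trace_neg]
        linarith [hVsub t ht x]⟩
  have hlow : ∀ t ∈ Icc 0 T, ∀ x, -(Real.exp (M * T) * (2 * (CU + CV)) * penalty (max pU pV) x) ≤
      Real.exp (M * t) * (U t x + -V t x) := fun t ht x => by
    have hU' := neg_two_mul_penalty_le (le_max_left pU pV) (hU t ht x)
    have hV' := neg_two_mul_penalty_le (le_max_right pU pV) ((abs_neg (V t x)).trans_le (hV t ht x))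
    refine neg_exp_mul_le_exp_mul ((le_max_right _ _).trans (hM 0)) ht.2
      (mul_nonneg (by positivity) (zero_le_one.trans (one_le_penalty _ _))) (by linarith)
  intro t ht x
  have := (hsuperU.add hsuperV).exp_mul M |>.nonneg (n := Fin d)
    (fun x => by linarith [(le_max_left (-ρ x) 0).trans (hM x)])
    (fun x => inner_le_of_norm_le_mul_one_add (C := C) (by linarith [norm_nonneg (σ x), hC x]))
    (fun x => sq_le_of_le_mul_one_add (C := C) (norm_nonneg _)
      (by linarith [norm_nonneg (ρ x • x), hC x]))
    ((Real.continuous_exp.comp (continuous_const.mul continuous_fst)).continuousOn.mul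
      (hUcont.add hVcont.neg)) hlow
    (fun x => mul_nonneg (Real.exp_pos _).le (by linarith [hTerm x])) t ht x
  linarith [nonneg_of_mul_nonneg_right this (Real.exp_pos (M * t))]

/-- **Comparison principle for smooth super/subsolutions of the pricing equation.**
With `L φ(t,x) = ∂_t φ + ρ(x)⟨x, Dφ⟩ + ½ Tr(σσᵀ D²φ)`, if `U` (resp. `V`) is a continuous,
`C^{1,2}` on `[0,T) × ℝ^d`, polynomially growing function with `L U ≤ ρ U`
(resp. `L V ≥ ρ V`) on `[0,T) × ℝ^d` and `U(T,·) ≥ V(T,·)`, then `U ≥ V` on `[0,T] × ℝ^d`.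
The time derivative, spatial gradient and spatial Hessian of `U` and `V` are given as the
data `Ut, Ux, Uxx` (resp. `Vt, Vx, Vxx`), with the corresponding `HasDerivWithinAt`,
`HasGradientAt` and `HasFDerivAt` statements, continuous on `[0,T) × ℝ^d`. -/
theorem stmt_4
    (d : ℕ) (hd : 1 ≤ d) (T : ℝ) (hT : 0 < T)
    (ρ : EuclideanSpace ℝ (Fin d) → ℝ)
    (σ : EuclideanSpace ℝ (Fin d) → Matrix (Fin d) (Fin d) ℝ)
    (hρc : Continuous ρ)
    (hρneg : ∃ M : ℝ, ∀ x, max (-ρ x) 0 ≤ M)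
    (hσc : Continuous σ)
    (hgrowth : ∃ C : ℝ, 0 < C ∧ ∀ x, ‖ρ x • x‖ + ‖σ x‖ ≤ C * (1 + ‖x‖))
    (U V Ut Vt : ℝ → EuclideanSpace ℝ (Fin d) → ℝ)
    (Ux Vx : ℝ → EuclideanSpace ℝ (Fin d) → EuclideanSpace ℝ (Fin d))
    (Uxx Vxx : ℝ → EuclideanSpace ℝ (Fin d) → Matrix (Fin d) (Fin d) ℝ)
    -- continuity of U and V on [0,T] × ℝ^d
    (hUcont : ContinuousOn (fun p : ℝ × EuclideanSpace ℝ (Fin d) => U p.1 p.2)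
      (Icc 0 T ×ˢ univ))
    (hVcont : ContinuousOn (fun p : ℝ × EuclideanSpace ℝ (Fin d) => V p.1 p.2)
      (Icc 0 T ×ˢ univ))
    -- U is C^{1,2} on [0,T) × ℝ^d with derivatives Ut, Ux, Uxx
    (hUt : ∀ t ∈ Ico (0:ℝ) T, ∀ x, HasDerivWithinAt (fun s => U s x) (Ut t x) (Ico 0 T) t)
    (hUx : ∀ t ∈ Ico (0:ℝ) T, ∀ x, HasGradientAt (fun y => U t y) (Ux t x) x)
    (hUxx : ∀ t ∈ Ico (0:ℝ) T, ∀ x, HasFDerivAt (fun y => Ux t y)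
      ((Matrix.toEuclideanCLM (𝕜 := ℝ) (Uxx t x) :
        EuclideanSpace ℝ (Fin d) →L[ℝ] EuclideanSpace ℝ (Fin d))) x)
    (hUtc : ContinuousOn (fun p : ℝ × EuclideanSpace ℝ (Fin d) => Ut p.1 p.2)
      (Ico 0 T ×ˢ univ))
    (hUxc : ContinuousOn (fun p : ℝ × EuclideanSpace ℝ (Fin d) => Ux p.1 p.2)
      (Ico 0 T ×ˢ univ))
    (hUxxc : ContinuousOn (fun p : ℝ × EuclideanSpace ℝ (Fin d) => Uxx p.1 p.2)
      (Ico 0 T ×ˢ univ))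
    -- V is C^{1,2} on [0,T) × ℝ^d with derivatives Vt, Vx, Vxx
    (hVt : ∀ t ∈ Ico (0:ℝ) T, ∀ x, HasDerivWithinAt (fun s => V s x) (Vt t x) (Ico 0 T) t)
    (hVx : ∀ t ∈ Ico (0:ℝ) T, ∀ x, HasGradientAt (fun y => V t y) (Vx t x) x)
    (hVxx : ∀ t ∈ Ico (0:ℝ) T, ∀ x, HasFDerivAt (fun y => Vx t y)
      ((Matrix.toEuclideanCLM (𝕜 := ℝ) (Vxx t x) :
        EuclideanSpace ℝ (Fin d) →L[ℝ] EuclideanSpace ℝ (Fin d))) x)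
    (hVtc : ContinuousOn (fun p : ℝ × EuclideanSpace ℝ (Fin d) => Vt p.1 p.2)
      (Ico 0 T ×ˢ univ))
    (hVxc : ContinuousOn (fun p : ℝ × EuclideanSpace ℝ (Fin d) => Vx p.1 p.2)
      (Ico 0 T ×ˢ univ))
    (hVxxc : ContinuousOn (fun p : ℝ × EuclideanSpace ℝ (Fin d) => Vxx p.1 p.2)
      (Ico 0 T ×ˢ univ))
    -- polynomial growth of U and V
    (hUgrowth : ∃ C : ℝ, 0 < C ∧ ∃ p : ℕ, 1 ≤ p ∧
      ∀ t ∈ Icc (0:ℝ) T, ∀ x, |U t x| ≤ C * (1 + ‖x‖ ^ p))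
    (hVgrowth : ∃ C : ℝ, 0 < C ∧ ∃ p : ℕ, 1 ≤ p ∧
      ∀ t ∈ Icc (0:ℝ) T, ∀ x, |V t x| ≤ C * (1 + ‖x‖ ^ p))
    -- L U ≤ ρ U and L V ≥ ρ V on [0,T) × ℝ^d
    (hUsuper : ∀ t ∈ Ico (0:ℝ) T, ∀ x,
      Ut t x + ρ x * (inner ℝ x (Ux t x) : ℝ)
        + (1/2) * (σ x * (σ x)ᵀ * Uxx t x).trace ≤ ρ x * U t x)
    (hVsub : ∀ t ∈ Ico (0:ℝ) T, ∀ x,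
      ρ x * V t x ≤ Vt t x + ρ x * (inner ℝ x (Vx t x) : ℝ)
        + (1/2) * (σ x * (σ x)ᵀ * Vxx t x).trace)
    -- terminal ordering
    (hTerm : ∀ x, V T x ≤ U T x) :
    ∀ t ∈ Icc (0:ℝ) T, ∀ x, V t x ≤ U t x :=
  stmt_4_general d T ρ σ hρneg hgrowth U V Ut Vt Ux Vx Uxx Vxx hUcont hVcont hUt hUx hUxx hVt hVx
    hVxx hUgrowth hVgrowth hUsuper hVsub hTerm
end

section
/- Let d ≥ 1 and let K ⊆ ℝ^d be a nonempty closed convex set with support function δ_K. Let σ_Y : ℝ^d × ℝ^d → ℝ^d and σ : ℝ^d × ℝ^d → M_d(ℝ) be continuous and suppose that for every (x, p) ∈ ℝ^d × ℝ^d there is a unique a ∈ ℝ^d, denoted ψ(x, p), such that σ_Y(x, a) = σ(x, a)ᵀ p, and that ψ : ℝ^d × ℝ^d → ℝ^d is continuous. Assume further the coercivity condition: for every compact set A' ⊆ ℝ^d × ℝ^d, inf_{(x,p) ∈ A'} ‖σ_Y(x, a) − σ(x, a)ᵀ p‖ → ∞ as ‖a‖ → ∞. Let A ⊆ ℝ^d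 × ℝ^d be a compact set and ε > 0 such that for every (x, p) ∈ A there exists ζ ∈ ℝ^d with ‖ζ‖ = 1 and δ_K(ζ) − ⟨ζ, ψ(x, p)⟩ ≤ −ε. Then: (i) there exists c_ε > 0 such that ‖a − ψ(x, p)‖ ≥ c_ε for every a ∈ K and every (x, p) ∈ A; and (ii) there exists k_ε > 0 such that ‖σ_Y(x, a) − σ(x, a)ᵀ p‖ ≥ k_ε for every a ∈ K and every (x, p) ∈ A. -/
open Set Matrix

open scoped RealInnerProductSpace

/-!
Part (i) is Cauchy–Schwarz: for `a ∈ K` the separating unit vector `ζ` gives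
`ε ≤ ⟪ζ, ψ(x,p) - a⟫ ≤ ‖a - ψ(x,p)‖`.  For part (ii), the residual
`‖σ_Y(x,a) - σ(x,a)ᵀ p‖` vanishes only at `a = ψ(x,p)`, which part (i) keeps away from `K`;
so it is positive on `K × A`.  Coercivity bounds it below by `1` outside a ball, and inside
the ball `K` is compact, so the extreme value theorem gives a positive lower bound there.
-/

lemma inner_le_of_iSup_inner_le {E : Type*} [NormedAddCommGroup E] [InnerProductSpace ℝ E]
    {K : Set E} {ζ : E} {c : ℝ} (h : (⨆ η : K, ((⟪(η : E), ζ⟫ : ℝ) : EReal)) ≤ (c : EReal))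
    {a : E} (ha : a ∈ K) : ⟪a, ζ⟫ ≤ c :=
  EReal.coe_le_coe_iff.mp <|
    (le_iSup (fun η : K => ((⟪(η : E), ζ⟫ : ℝ) : EReal)) ⟨a, ha⟩).trans h

lemma le_norm_sub_of_inner_le_inner_sub {E : Type*} [NormedAddCommGroup E]
    [InnerProductSpace ℝ E] {ζ a b : E} {ε : ℝ} (hζ : ‖ζ‖ = 1) (h : ⟪a, ζ⟫ ≤ ⟪ζ, b⟫ - ε) :
    ε ≤ ‖a - b‖ :=
  calc ε ≤ ⟪ζ, b⟫ - ⟪ζ, a⟫ := by rw [real_inner_comm] at h; linarith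
    _ = ⟪ζ, b - a⟫ := (inner_sub_right ζ b a).symm
    _ ≤ ‖ζ‖ * ‖b - a‖ := real_inner_le_norm ζ (b - a)
    _ = ‖a - b‖ := by rw [hζ, one_mul, norm_sub_rev]

lemma exists_pos_le_of_pos_of_one_le_of_norm_ge {E Y : Type*} [NormedAddCommGroup E]
    [ProperSpace E] [TopologicalSpace Y] {K : Set E} {A : Set Y} {f : E × Y → ℝ}
    (hf : Continuous f) (hK : IsClosed K) (hA : IsCompact A)
    (hpos : ∀ a ∈ K, ∀ q ∈ A, 0 < f (a, q))
    (hfar : ∃ R, ∀ a ∈ K, R ≤ ‖a‖ → ∀ q ∈ A, 1 ≤ f (a, q)) :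
    ∃ k, 0 < k ∧ ∀ a ∈ K, ∀ q ∈ A, k ≤ f (a, q) := by
  obtain ⟨R, hR⟩ := hfar
  have hcpt : IsCompact ((K ∩ Metric.closedBall 0 R) ×ˢ A) :=
    ((isCompact_closedBall 0 R).inter_left hK).prod hA
  obtain ⟨m, hm, hmin⟩ := hcpt.exists_forall_le' hf.continuousOn
    (fun w hw => hpos w.1 hw.1.1 w.2 hw.2)
  refine ⟨min 1 m, lt_min one_pos hm, fun a ha q hq => ?_⟩
  rcases le_or_gt ‖a‖ R with hnear | hfar
  · exact (min_le_right _ _).trans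
      (hmin (a, q) ⟨⟨ha, mem_closedBall_zero_iff.mpr hnear⟩, hq⟩)
  · exact (min_le_left _ _).trans (hR a ha hfar.le q hq)

lemma Continuous.toEuclideanLin_apply {X m n : Type*} [TopologicalSpace X] [Fintype n]
    [DecidableEq n] {M : X → Matrix m n ℝ} {v : X → EuclideanSpace ℝ n} (hM : Continuous M)
    (hv : Continuous v) : Continuous fun x => Matrix.toEuclideanLin (M x) (v x) :=
  (PiLp.continuous_toLp 2 _).comp (hM.matrix_mulVec ((PiLp.continuous_ofLp 2 _).comp hv))

theorem stmt_6_general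
    (d : ℕ)
    (K : Set (EuclideanSpace ℝ (Fin d)))
    (hKclosed : IsClosed K)
    (σY : EuclideanSpace ℝ (Fin d) → EuclideanSpace ℝ (Fin d) → EuclideanSpace ℝ (Fin d))
    (σ : EuclideanSpace ℝ (Fin d) → EuclideanSpace ℝ (Fin d) → Matrix (Fin d) (Fin d) ℝ)
    (hσYc : Continuous (fun q : EuclideanSpace ℝ (Fin d) × EuclideanSpace ℝ (Fin d) =>
      σY q.1 q.2))
    (hσc : Continuous (fun q : EuclideanSpace ℝ (Fin d) × EuclideanSpace ℝ (Fin d) =>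
      σ q.1 q.2))
    (ψ : EuclideanSpace ℝ (Fin d) → EuclideanSpace ℝ (Fin d) → EuclideanSpace ℝ (Fin d))
    (hψuniq : ∀ x p a, σY x a = Matrix.toEuclideanLin ((σ x a)ᵀ) p → a = ψ x p)
    (hcoerc : ∀ A' : Set (EuclideanSpace ℝ (Fin d) × EuclideanSpace ℝ (Fin d)),
      IsCompact A' → ∀ M : ℝ, ∃ R : ℝ, ∀ a : EuclideanSpace ℝ (Fin d), R ≤ ‖a‖ →
        ∀ q ∈ A', M ≤ ‖σY q.1 a - Matrix.toEuclideanLin ((σ q.1 a)ᵀ) q.2‖)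
    (A : Set (EuclideanSpace ℝ (Fin d) × EuclideanSpace ℝ (Fin d))) (hA : IsCompact A)
    (ε : ℝ) (hε : 0 < ε)
    (hviol : ∀ q ∈ A, ∃ ζ : EuclideanSpace ℝ (Fin d), ‖ζ‖ = 1 ∧
      (⨆ η : K, (((⟪(η : EuclideanSpace ℝ (Fin d)), ζ⟫ : ℝ)) : EReal)) ≤
        (((⟪ζ, ψ q.1 q.2⟫ : ℝ) - ε : ℝ) : EReal)) :
    (∃ c : ℝ, 0 < c ∧ ∀ a ∈ K, ∀ q ∈ A, c ≤ ‖a - ψ q.1 q.2‖) ∧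
    (∃ k : ℝ, 0 < k ∧ ∀ a ∈ K, ∀ q ∈ A,
      k ≤ ‖σY q.1 a - Matrix.toEuclideanLin ((σ q.1 a)ᵀ) q.2‖) := by
  have hsep : ∀ a ∈ K, ∀ q ∈ A, ε ≤ ‖a - ψ q.1 q.2‖ := fun a ha q hq => by
    obtain ⟨ζ, hζ, hsup⟩ := hviol q hq
    exact le_norm_sub_of_inner_le_inner_sub hζ (inner_le_of_iSup_inner_le hsup ha)
  refine ⟨⟨ε, hε, hsep⟩, ?_⟩
  set res : EuclideanSpace ℝ (Fin d) × (EuclideanSpace ℝ (Fin d) × EuclideanSpace ℝ (Fin d)) → ℝ :=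
    fun w => ‖σY w.2.1 w.1 - Matrix.toEuclideanLin ((σ w.2.1 w.1)ᵀ) w.2.2‖
  have hxa : Continuous fun w : EuclideanSpace ℝ (Fin d) ×
      (EuclideanSpace ℝ (Fin d) × EuclideanSpace ℝ (Fin d)) => (w.2.1, w.1) :=
    (continuous_fst.comp continuous_snd).prodMk continuous_fst
  have hres : Continuous res :=
    ((hσYc.comp hxa).sub (((hσc.comp hxa).matrix_transpose).toEuclideanLin_apply
      (continuous_snd.comp continuous_snd))).norm
  refine exists_pos_le_of_pos_of_one_le_of_norm_ge (f := res) hres hKclosed hA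
    (fun a ha q hq => ?_) ?_
  · refine norm_pos_iff.mpr (sub_ne_zero.mpr fun heq => ?_)
    have hsep' := hsep a ha q hq
    rw [← hψuniq q.1 q.2 a heq, sub_self, norm_zero] at hsep'
    exact hsep'.not_gt hε
  · obtain ⟨R, hR⟩ := hcoerc A hA 1
    exact ⟨R, fun a _ ha q hq => hR a ha q hq⟩

/-- **Uniform separation from the constraint set and uniform non-degeneracy.**
Let `K ⊆ ℝ^d` be nonempty, closed and convex with support function `δ_K`, and let
`ψ(x,p)` be the unique solution `a` of `σ_Y(x,a) = σ(x,a)ᵀ p`, assumed continuous, with the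
coercivity condition that `‖σ_Y(x,a) − σ(x,a)ᵀ p‖ → ∞` uniformly over compact sets of `(x,p)`
as `‖a‖ → ∞`.  If on a compact set `A` the constraint is violated by at least `ε`
(`δ_K(ζ) − ⟨ζ, ψ(x,p)⟩ ≤ −ε` for some unit `ζ`), then `ψ(x,p)` stays at uniform distance
`c_ε > 0` from `K` and `‖σ_Y(x,a) − σ(x,a)ᵀ p‖ ≥ k_ε > 0` uniformly for `a ∈ K`, `(x,p) ∈ A`. -/
theorem stmt_6
    (d : ℕ) (hd : 1 ≤ d)
    (K : Set (EuclideanSpace ℝ (Fin d)))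
    (hKne : K.Nonempty) (hKclosed : IsClosed K) (hKconv : Convex ℝ K)
    (σY : EuclideanSpace ℝ (Fin d) → EuclideanSpace ℝ (Fin d) → EuclideanSpace ℝ (Fin d))
    (σ : EuclideanSpace ℝ (Fin d) → EuclideanSpace ℝ (Fin d) → Matrix (Fin d) (Fin d) ℝ)
    (hσYc : Continuous (fun q : EuclideanSpace ℝ (Fin d) × EuclideanSpace ℝ (Fin d) =>
      σY q.1 q.2))
    (hσc : Continuous (fun q : EuclideanSpace ℝ (Fin d) × EuclideanSpace ℝ (Fin d) =>
      σ q.1 q.2))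
    (ψ : EuclideanSpace ℝ (Fin d) → EuclideanSpace ℝ (Fin d) → EuclideanSpace ℝ (Fin d))
    (hψ : ∀ x p, σY x (ψ x p) = Matrix.toEuclideanLin ((σ x (ψ x p))ᵀ) p)
    (hψuniq : ∀ x p a, σY x a = Matrix.toEuclideanLin ((σ x a)ᵀ) p → a = ψ x p)
    (hψc : Continuous (fun q : EuclideanSpace ℝ (Fin d) × EuclideanSpace ℝ (Fin d) =>
      ψ q.1 q.2))
    (hcoerc : ∀ A' : Set (EuclideanSpace ℝ (Fin d) × EuclideanSpace ℝ (Fin d)),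
      IsCompact A' → ∀ M : ℝ, ∃ R : ℝ, ∀ a : EuclideanSpace ℝ (Fin d), R ≤ ‖a‖ →
        ∀ q ∈ A', M ≤ ‖σY q.1 a - Matrix.toEuclideanLin ((σ q.1 a)ᵀ) q.2‖)
    (A : Set (EuclideanSpace ℝ (Fin d) × EuclideanSpace ℝ (Fin d))) (hA : IsCompact A)
    (ε : ℝ) (hε : 0 < ε)
    (hviol : ∀ q ∈ A, ∃ ζ : EuclideanSpace ℝ (Fin d), ‖ζ‖ = 1 ∧
      (⨆ η : K, (((⟪(η : EuclideanSpace ℝ (Fin d)), ζ⟫ : ℝ)) : EReal)) ≤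
        (((⟪ζ, ψ q.1 q.2⟫ : ℝ) - ε : ℝ) : EReal)) :
    (∃ c : ℝ, 0 < c ∧ ∀ a ∈ K, ∀ q ∈ A, c ≤ ‖a - ψ q.1 q.2‖) ∧
    (∃ k : ℝ, 0 < k ∧ ∀ a ∈ K, ∀ q ∈ A,
      k ≤ ‖σY q.1 a - Matrix.toEuclideanLin ((σ q.1 a)ᵀ) q.2‖) :=
  stmt_6_general d K hKclosed σY σ hσYc hσc ψ hψuniq hcoerc A hA ε hε hviol
end

section
/- Let (Ω, F, P) be a probability space, Z : Ω → ℝ a random variable, g : ℝ → ℝ continuous and bounded from below, and M ≥ 0 a real number. Define the face-lifted function ĝ(x) := sup_{ζ ≥ 0} (g(x + ζ) − Mζ), and assume ĝ(x) < ∞ for every x ∈ ℝ and that ĝ(Z) is integrable. Then sup { E[g(Z + ξ) − Mξ] : ξ : Ω → [0, ∞) measurable and bounded } = E[ĝ(Z)]. -/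
/-!
Pointwise, `ĝ(x)` is the supremum of the continuous function `ζ ↦ g(x + ζ) − Mζ` over `ζ ≥ 0`,
so it is already the supremum over a dense sequence `q₀, q₁, …` of nonnegative reals. Choosing
`ξₙ(ω)` greedily as a maximiser of `ζ ↦ g(Z ω + ζ) − Mζ` among `q₀, …, qₙ` gives bounded measurable
shifts whose payoffs increase pointwise to `ĝ(Z)`; monotone convergence gives the lower bound,
and `g(x + ζ) − Mζ ≤ ĝ(x)` the upper bound.
-/

open MeasureTheory Set Filter Topology

section GreedySelect

variable {X α : Type*} (φ : X → α → ℝ) (q : ℕ → α)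

noncomputable def greedySelect : ℕ → X → α
  | 0, _ => q 0
  | n + 1, x => if φ x (greedySelect n x) < φ x (q (n + 1)) then q (n + 1) else greedySelect n x

theorem greedySelect_mem_image_Iic (n : ℕ) (x : X) : greedySelect φ q n x ∈ q '' Iic n := by
  induction n with
  | zero => exact ⟨0, mem_Iic.2 le_rfl, rfl⟩
  | succ n ih =>
    rw [greedySelect]
    split_ifs
    · exact ⟨n + 1, mem_Iic.2 le_rfl, rfl⟩
    · obtain ⟨k, hk, hkx⟩ := ih
      exact ⟨k, Iic_subset_Iic.2 n.le_succ hk, hkx⟩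

theorem greedySelect_mem {s : Set α} (hq : ∀ n, q n ∈ s) (n : ℕ) (x : X) :
    greedySelect φ q n x ∈ s := by
  obtain ⟨k, -, hk⟩ := greedySelect_mem_image_Iic φ q n x
  exact hk ▸ hq k

theorem bddAbove_range_greedySelect [Preorder α] [IsDirected α (· ≤ ·)] [Nonempty α] (n : ℕ) :
    BddAbove (range (greedySelect φ q n)) :=
  ((finite_Iic n).image q).bddAbove.mono (range_subset_iff.2 (greedySelect_mem_image_Iic φ q n))

theorem le_greedySelect (x : X) (n : ℕ) : φ x (q n) ≤ φ x (greedySelect φ q n x) := by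
  cases n with
  | zero => exact le_rfl
  | succ n =>
    rw [greedySelect]
    split_ifs with h
    · exact le_rfl
    · exact not_lt.1 h

theorem monotone_greedySelect (x : X) : Monotone fun n => φ x (greedySelect φ q n x) := by
  refine monotone_nat_of_le_succ fun n => ?_
  simp only [greedySelect]
  split_ifs with h
  · exact h.le
  · exact le_rfl

theorem measurable_greedySelect [MeasurableSpace X] [MeasurableSpace α]
    (hφ : Measurable (Function.uncurry φ)) (n : ℕ) : Measurable (greedySelect φ q n) := by
  induction n with
  | zero => exact measurable_const
  | succ n ih =>
    have hold : Measurable fun x => φ x (greedySelect φ q n x) :=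
      hφ.comp (measurable_id.prodMk ih)
    have hnew : Measurable fun x => φ x (q (n + 1)) :=
      hφ.comp (measurable_id.prodMk measurable_const)
    exact Measurable.ite (measurableSet_lt hold hnew) measurable_const ih

end GreedySelect

theorem exists_nonneg_seq_Ici_subset_closure_range :
    ∃ q : ℕ → ℝ, (∀ n, 0 ≤ q n) ∧ Ici 0 ⊆ closure (range q) := by
  have : Nonempty (Ici (0 : ℝ)) := nonempty_Ici.to_subtype
  obtain ⟨u, hu⟩ := TopologicalSpace.exists_dense_seq (Ici (0 : ℝ))
  refine ⟨fun n => u n, fun n => (u n).2, fun ζ hζ => ?_⟩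
  have := image_closure_subset_closure_image continuous_subtype_val
    (mem_image_of_mem _ (hu ⟨ζ, hζ⟩))
  rwa [← range_comp] at this

theorem tendsto_greedySelect_sSup {X : Type*} (φ : X → ℝ → ℝ) {q : ℕ → ℝ} (hq0 : ∀ n, 0 ≤ q n)
    (hq : Ici 0 ⊆ closure (range q)) {x : X} (hφx : Continuous (φ x))
    (hbdd : BddAbove (φ x '' Ici 0)) :
    Tendsto (fun n => φ x (greedySelect φ q n x)) atTop (𝓝 (sSup (φ x '' Ici 0))) := by
  refine tendsto_atTop_isLUB (monotone_greedySelect φ q x) ⟨?_, fun y hy => ?_⟩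
  · rintro _ ⟨n, rfl⟩
    exact le_csSup hbdd (mem_image_of_mem _ (greedySelect_mem φ q hq0 n x))
  · have hrange : φ x '' range q ⊆ Iic y := by
      rintro _ ⟨_, ⟨n, rfl⟩, rfl⟩
      exact (le_greedySelect φ q x n).trans (hy ⟨n, rfl⟩)
    have hall : φ x '' Ici 0 ⊆ Iic y :=
      calc φ x '' Ici 0 ⊆ φ x '' closure (range q) := image_mono hq
        _ ⊆ closure (φ x '' range q) := image_closure_subset_closure_image hφx
        _ ⊆ Iic y := closure_minimal hrange isClosed_Iic
    exact csSup_le (nonempty_Ici.image _) hall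

theorem integrable_shifted_payoff {Ω : Type*} [MeasurableSpace Ω] {P : Measure Ω}
    [IsFiniteMeasure P] {Z ξ : Ω → ℝ} {g ghat : ℝ → ℝ} {M m b : ℝ} (hZ : Measurable Z)
    (hg : Measurable g) (hm : ∀ x, m ≤ g x) (hub : ∀ x ζ, 0 ≤ ζ → g (x + ζ) - M * ζ ≤ ghat x)
    (hint : Integrable (fun ω => ghat (Z ω)) P) (hξ : Measurable ξ) (hξ0 : ∀ ω, 0 ≤ ξ ω)
    (hξb : ∀ ω, ξ ω ≤ b) :
    Integrable (fun ω => g (Z ω + ξ ω) - M * ξ ω) P := by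
  have hξint : Integrable ξ P := Integrable.of_bound hξ.aestronglyMeasurable b
    (ae_of_all _ fun ω => (Real.norm_of_nonneg (hξ0 ω)).trans_le (hξb ω))
  exact integrable_of_le_of_le (g₁ := fun ω => m - M * ξ ω)
    ((hg.comp (hZ.add hξ)).sub (hξ.const_mul M)).aestronglyMeasurable
    (ae_of_all _ fun ω => sub_le_sub_right (hm _) _) (ae_of_all _ fun ω => hub _ _ (hξ0 ω))
    ((integrable_const m).sub (hξint.const_mul M)) hint

theorem stmt_8_general
    {Ω : Type*} [MeasurableSpace Ω] (P : Measure Ω) [IsProbabilityMeasure P]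
    (Z : Ω → ℝ) (hZ : Measurable Z)
    (g : ℝ → ℝ) (hg : Continuous g) (hgbdd : ∃ m : ℝ, ∀ x, m ≤ g x)
    (M : ℝ)
    (ghat : ℝ → ℝ)
    (hghat : ∀ x, ghat x = sSup {y : ℝ | ∃ ζ : ℝ, 0 ≤ ζ ∧ y = g (x + ζ) - M * ζ})
    (hfin : ∀ x, BddAbove {y : ℝ | ∃ ζ : ℝ, 0 ≤ ζ ∧ y = g (x + ζ) - M * ζ})
    (hint : Integrable (fun ω => ghat (Z ω)) P) :
    sSup {r : ℝ | ∃ ξ : Ω → ℝ, Measurable ξ ∧ (∀ ω, 0 ≤ ξ ω) ∧ (∃ b : ℝ, ∀ ω, ξ ω ≤ b) ∧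
        r = ∫ ω, (g (Z ω + ξ ω) - M * ξ ω) ∂P}
      = ∫ ω, ghat (Z ω) ∂P := by
  obtain ⟨m, hm⟩ := hgbdd
  set φ : ℝ → ℝ → ℝ := fun x ζ => g (x + ζ) - M * ζ
  have himage : ∀ x, {y | ∃ ζ, 0 ≤ ζ ∧ y = g (x + ζ) - M * ζ} = φ x '' Ici 0 := fun x =>
    ext fun _ => exists_congr fun _ => and_congr_right fun _ => eq_comm
  have hub : ∀ x ζ, 0 ≤ ζ → φ x ζ ≤ ghat x := fun x ζ hζ =>
    hghat x ▸ le_csSup (hfin x) ⟨ζ, hζ, rfl⟩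
  have hupper : ∫ ω, ghat (Z ω) ∂P ∈ upperBounds {r : ℝ | ∃ ξ : Ω → ℝ, Measurable ξ ∧
      (∀ ω, 0 ≤ ξ ω) ∧ (∃ b : ℝ, ∀ ω, ξ ω ≤ b) ∧ r = ∫ ω, (g (Z ω + ξ ω) - M * ξ ω) ∂P} := by
    rintro _ ⟨ξ, hξ, hξ0, ⟨b, hb⟩, rfl⟩
    exact integral_mono (integrable_shifted_payoff hZ hg.measurable hm hub hint hξ hξ0 hb) hint
      fun ω => hub _ _ (hξ0 ω)
  obtain ⟨q, hq0, hq⟩ := exists_nonneg_seq_Ici_subset_closure_range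
  have hφ : Measurable (Function.uncurry φ) := by fun_prop
  have hξ : ∀ n, Measurable (fun ω => greedySelect φ q n (Z ω)) ∧
      (∀ ω, 0 ≤ greedySelect φ q n (Z ω)) ∧ ∃ b, ∀ ω, greedySelect φ q n (Z ω) ≤ b := fun n =>
    ⟨(measurable_greedySelect φ q hφ n).comp hZ,
      fun ω => greedySelect_mem φ q hq0 n (Z ω),
      (bddAbove_range_greedySelect φ q n).imp fun b hb ω => hb ⟨Z ω, rfl⟩⟩
  have hlim : Tendsto (fun n => ∫ ω, φ (Z ω) (greedySelect φ q n (Z ω)) ∂P) atTop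
      (𝓝 (∫ ω, ghat (Z ω) ∂P)) := by
    refine integral_tendsto_of_tendsto_of_monotone
      (fun n => integrable_shifted_payoff hZ hg.measurable hm hub hint (hξ n).1 (hξ n).2.1
        (hξ n).2.2.choose_spec) hint
      (ae_of_all _ fun ω => monotone_greedySelect φ q (Z ω)) (ae_of_all _ fun ω => ?_)
    rw [hghat, himage]
    exact tendsto_greedySelect_sSup φ hq0 hq (by fun_prop) (himage _ ▸ hfin _)
  exact (isLUB_of_mem_closure hupper (mem_closure_of_tendsto hlim
    (Eventually.of_forall fun n => ⟨_, (hξ n).1, (hξ n).2.1, (hξ n).2.2, rfl⟩))).csSup_eq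
      ⟨_, _, (hξ 0).1, (hξ 0).2.1, (hξ 0).2.2, rfl⟩

/-- **Face-lifted payoff as the value of a static optimization over bounded shifts.**
With `ĝ(x) = sup_{ζ ≥ 0} (g(x+ζ) − Mζ)` (assumed finite everywhere and with `ĝ(Z)`
integrable), the supremum of `E[g(Z+ξ) − Mξ]` over all bounded measurable `ξ ≥ 0`
equals `E[ĝ(Z)]`. -/
theorem stmt_8
    {Ω : Type*} [MeasurableSpace Ω] (P : Measure Ω) [IsProbabilityMeasure P]
    (Z : Ω → ℝ) (hZ : Measurable Z)
    (g : ℝ → ℝ) (hg : Continuous g) (hgbdd : ∃ m : ℝ, ∀ x, m ≤ g x)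
    (M : ℝ) (hM : 0 ≤ M)
    (ghat : ℝ → ℝ)
    (hghat : ∀ x, ghat x = sSup {y : ℝ | ∃ ζ : ℝ, 0 ≤ ζ ∧ y = g (x + ζ) - M * ζ})
    (hfin : ∀ x, BddAbove {y : ℝ | ∃ ζ : ℝ, 0 ≤ ζ ∧ y = g (x + ζ) - M * ζ})
    (hint : Integrable (fun ω => ghat (Z ω)) P) :
    sSup {r : ℝ | ∃ ξ : Ω → ℝ, Measurable ξ ∧ (∀ ω, 0 ≤ ξ ω) ∧ (∃ b : ℝ, ∀ ω, ξ ω ≤ b) ∧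
        r = ∫ ω, (g (Z ω + ξ ω) - M * ξ ω) ∂P}
      = ∫ ω, ghat (Z ω) ∂P :=
  stmt_8_general P Z hZ g hg hgbdd M ghat hghat hfin hint
end

section
/- Let (Ω, F, P) be a probability space, G : Ω → [0, ∞) and V : Ω → [0, ∞) measurable with V·G integrable, y ≥ 0, and let ℓ : [0, ∞) → [0, ∞) be convex, continuous and nondecreasing with E[ℓ(G)] < ∞. Then there exists a measurable φ̂ : Ω → [0, 1] with E[V G φ̂] ≤ y such that E[ℓ((1 − φ̂)G)] = inf { E[ℓ((1 − φ)G)] : φ : Ω → [0, 1] measurable, E[V G φ] ≤ y }, i.e. the infimum in the constrained expected-shortfall problem is attained. -/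
/-!
Viewed in `L²(P)`, the admissible `φ` form a bounded, closed, convex set, on which
`φ ↦ E[ℓ((1 - φ) G)]` is convex and continuous along a.e.-convergent sequences (dominated
convergence, with bound `ℓ(G)`). So the sublevel sets at levels `cₙ ↓ inf` are nested, nonempty,
closed, convex and bounded. Their minimal-norm points form a Cauchy sequence by the
parallelogram law, and its limit is a minimiser.
-/

open MeasureTheory Set Filter Topology
open scoped ENNReal

section Hilbert

variable {E : Type*} [NormedAddCommGroup E] [InnerProductSpace ℝ E]

theorem Convex.norm_sub_sq_le_of_forall_norm_le {K : Set E} (hK : Convex ℝ K) {v w : E}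
    (hv : v ∈ K) (hw : w ∈ K) (hmin : ∀ x ∈ K, ‖v‖ ≤ ‖x‖) :
    ‖v - w‖ ^ 2 ≤ 2 * (‖w‖ ^ 2 - ‖v‖ ^ 2) := by
  have hmid : ‖v‖ ≤ ‖v + w‖ / 2 := by
    have := hmin _ (hK hv hw (by norm_num : (0:ℝ) ≤ 1 / 2) (by norm_num : (0:ℝ) ≤ 1 / 2)
      (by norm_num))
    rwa [← smul_add, norm_smul, Real.norm_of_nonneg (by norm_num), one_div_mul_eq_div] at this
  nlinarith [parallelogram_law_with_norm ℝ v w, norm_nonneg v]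

variable [CompleteSpace E]

theorem IsClosed.exists_forall_norm_le_of_convex {K : Set E} (hKc : IsClosed K)
    (hK : Convex ℝ K) (hne : K.Nonempty) : ∃ v ∈ K, ∀ x ∈ K, ‖v‖ ≤ ‖x‖ := by
  obtain ⟨v, hv, hvmin⟩ := exists_norm_eq_iInf_of_complete_convex hne hKc.isComplete hK 0
  refine ⟨v, hv, fun x hx => ?_⟩
  have := ciInf_le ⟨0, Set.forall_mem_range.2 fun w : K => norm_nonneg (0 - (w : E))⟩ ⟨x, hx⟩
  simp only [zero_sub, norm_neg] at hvmin this
  exact hvmin ▸ this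

theorem nonempty_iInter_of_antitone_convex {A : ℕ → Set E} (hA : Antitone A)
    (hne : ∀ n, (A n).Nonempty) (hconv : ∀ n, Convex ℝ (A n)) (hclosed : ∀ n, IsClosed (A n))
    (hbdd : Bornology.IsBounded (A 0)) : (⋂ n, A n).Nonempty := by
  choose v hvA hvmin using fun n => (hclosed n).exists_forall_norm_le_of_convex (hconv n) (hne n)
  obtain ⟨R, hR⟩ := hbdd.exists_norm_le
  have hdist : ∀ n m, n ≤ m → ‖v m - v n‖ ^ 2 ≤ 2 * (‖v m‖ ^ 2 - ‖v n‖ ^ 2) := fun n m hnm =>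
    norm_sub_rev (v n) (v m) ▸ (hconv n).norm_sub_sq_le_of_forall_norm_le (hvA n)
      (hA hnm (hvA m)) (hvmin n)
  have hmono : Monotone fun n => ‖v n‖ ^ 2 := fun n m hnm =>
    pow_le_pow_left₀ (norm_nonneg _) (hvmin n _ (hA hnm (hvA m))) 2
  have hcauchy : CauchySeq fun n => ‖v n‖ ^ 2 :=
    (tendsto_atTop_ciSup hmono ⟨R ^ 2, forall_mem_range.2 fun n =>
      pow_le_pow_left₀ (norm_nonneg _) (hR _ (hA (Nat.zero_le n) (hvA n))) 2⟩).cauchySeq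
  have hv : CauchySeq v := by
    refine Metric.cauchySeq_iff'.2 fun ε hε => ?_
    obtain ⟨N, hN⟩ := Metric.cauchySeq_iff'.1 hcauchy (ε ^ 2 / 2) (by positivity)
    refine ⟨N, fun n hn => ?_⟩
    have h := hN n hn
    rw [Real.dist_eq, abs_of_nonneg (sub_nonneg.2 (hmono hn))] at h
    rw [dist_eq_norm]
    exact lt_of_pow_lt_pow_left₀ 2 hε.le (by linarith [hdist N n hn])
  obtain ⟨p, hp⟩ := cauchySeq_tendsto_of_complete hv
  exact ⟨p, mem_iInter.2 fun n => (hclosed n).mem_of_tendsto hp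
    (eventually_atTop.2 ⟨n, fun m hm => hA hm (hvA m)⟩)⟩

end Hilbert

section Integrands

variable {Ω : Type*} [MeasurableSpace Ω] {P : Measure Ω} {p : ℝ≥0∞}

def unitBox (P : Measure Ω) (p : ℝ≥0∞) : Set (Lp ℝ p P) := {f | ∀ᵐ ω ∂P, f ω ∈ Icc (0 : ℝ) 1}

theorem mem_unitBox {f : Lp ℝ p P} : f ∈ unitBox P p ↔ ∀ᵐ ω ∂P, f ω ∈ Icc (0 : ℝ) 1 := Iff.rfl

theorem convex_unitBox : Convex ℝ (unitBox P p) := by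
  intro f hf g hg a b ha hb hab
  filter_upwards [hf, hg, Lp.coeFn_add (a • f) (b • g), Lp.coeFn_smul a f, Lp.coeFn_smul b g]
    with ω hfω hgω hadd hsa hsb
  rw [hadd, Pi.add_apply, hsa, hsb]
  exact convex_Icc 0 1 hfω hgω ha hb hab

theorem isBounded_unitBox [Fact (1 ≤ p)] [IsFiniteMeasure P] :
    Bornology.IsBounded (unitBox P p) := by
  refine (Metric.isBounded_iff_subset_closedBall 0).2
    ⟨measureUnivNNReal P ^ p.toReal⁻¹ * 1, fun f hf => mem_closedBall_zero_iff.2 ?_⟩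
  exact Lp.norm_le_of_ae_bound zero_le_one
    ((mem_unitBox.1 hf).mono fun ω h => (Real.norm_of_nonneg h.1).trans_le h.2)

theorem exists_mem_unitBox_ae_eq [IsFiniteMeasure P] {φ : Ω → ℝ} (hφ : Measurable φ)
    (h01 : ∀ ω, φ ω ∈ Icc (0 : ℝ) 1) : ∃ f ∈ unitBox P p, f =ᵐ[P] φ := by
  have hmem : MemLp φ p P := MemLp.of_bound hφ.aestronglyMeasurable 1
    (Eventually.of_forall fun ω => (Real.norm_of_nonneg (h01 ω).1).trans_le (h01 ω).2)
  exact ⟨hmem.toLp φ, hmem.coeFn_toLp.mono fun ω h => h ▸ h01 ω, hmem.coeFn_toLp⟩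

theorem exists_measurable_mem_Icc_ae_eq {f : Ω → ℝ} (hf : AEMeasurable f P)
    (h01 : ∀ᵐ ω ∂P, f ω ∈ Icc (0 : ℝ) 1) :
    ∃ φ : Ω → ℝ, Measurable φ ∧ (∀ ω, φ ω ∈ Icc (0 : ℝ) 1) ∧ φ =ᵐ[P] f := by
  refine ⟨fun ω => projIcc 0 1 zero_le_one (hf.mk f ω),
    (continuous_projIcc (h := zero_le_one)).subtype_val.measurable.comp hf.measurable_mk,
    fun ω => Subtype.mem _, ?_⟩
  filter_upwards [hf.ae_eq_mk, h01] with ω hω hω01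
  simp [← hω, projIcc_of_mem _ hω01]

theorem integral_comp_congr_ae {Φ : Ω → ℝ → ℝ} {f g : Ω → ℝ} (h : f =ᵐ[P] g) :
    ∫ ω, Φ ω (f ω) ∂P = ∫ ω, Φ ω (g ω) ∂P :=
  integral_congr_ae (h.mono fun ω hω => congrArg (Φ ω) hω)

structure IsDominatedConvexIntegrand (P : Measure Ω) (Φ : Ω → ℝ → ℝ) : Prop where
  measurable_uncurry : Measurable (Function.uncurry Φ)
  continuous : ∀ ω, Continuous (Φ ω)
  convexOn : ∀ ω, ConvexOn ℝ (Icc 0 1) (Φ ω)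
  exists_integrable_bound :
    ∃ g : Ω → ℝ, Integrable g P ∧ ∀ ω, ∀ t ∈ Icc (0 : ℝ) 1, ‖Φ ω t‖ ≤ g ω

namespace IsDominatedConvexIntegrand

variable {Φ : Ω → ℝ → ℝ} (hΦ : IsDominatedConvexIntegrand P Φ)
include hΦ

theorem aestronglyMeasurable_comp {f : Ω → ℝ} (hf : AEMeasurable f P) :
    AEStronglyMeasurable (fun ω => Φ ω (f ω)) P :=
  (hΦ.measurable_uncurry.comp_aemeasurable (aemeasurable_id.prodMk hf)).aestronglyMeasurable

theorem integrable_comp {f : Ω → ℝ} (hf : AEMeasurable f P)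
    (h01 : ∀ᵐ ω ∂P, f ω ∈ Icc (0 : ℝ) 1) : Integrable (fun ω => Φ ω (f ω)) P := by
  obtain ⟨g, hg, hbound⟩ := hΦ.exists_integrable_bound
  exact hg.mono' (hΦ.aestronglyMeasurable_comp hf) (h01.mono fun ω h => hbound ω _ h)

theorem bddBelow_integral_image (s : Set (Ω → ℝ)) (hs : ∀ φ ∈ s, ∀ ω, φ ω ∈ Icc (0 : ℝ) 1) :
    BddBelow ((fun φ => ∫ ω, Φ ω (φ ω) ∂P) '' s) := by
  obtain ⟨g, hg, hbound⟩ := hΦ.exists_integrable_bound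
  exact ⟨-∫ ω, g ω ∂P, forall_mem_image.2 fun φ hφ => neg_le_of_abs_le
    (norm_integral_le_of_norm_le hg (Eventually.of_forall fun ω => hbound ω _ (hs φ hφ ω)))⟩

theorem tendsto_integral {f : ℕ → Ω → ℝ} {f₀ : Ω → ℝ} (hf : ∀ n, AEMeasurable (f n) P)
    (h01 : ∀ n, ∀ᵐ ω ∂P, f n ω ∈ Icc (0 : ℝ) 1)
    (hlim : ∀ᵐ ω ∂P, Tendsto (fun n => f n ω) atTop (𝓝 (f₀ ω))) :
    Tendsto (fun n => ∫ ω, Φ ω (f n ω) ∂P) atTop (𝓝 (∫ ω, Φ ω (f₀ ω) ∂P)) := by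
  obtain ⟨g, hg, hbound⟩ := hΦ.exists_integrable_bound
  exact tendsto_integral_of_dominated_convergence g
    (fun n => hΦ.aestronglyMeasurable_comp (hf n)) hg
    (fun n => (h01 n).mono fun ω h => hbound ω _ h)
    (hlim.mono fun ω h => ((hΦ.continuous ω).tendsto _).comp h)

theorem convexOn_integral :
    ConvexOn ℝ (unitBox P p) (fun f : Lp ℝ p P => ∫ ω, Φ ω (f ω) ∂P) := by
  refine ⟨convex_unitBox, fun f hf g hg a b ha hb hab => ?_⟩
  have hint : ∀ h ∈ unitBox P p, Integrable (fun ω => Φ ω (h ω)) P := fun h hh =>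
    hΦ.integrable_comp (Lp.aestronglyMeasurable h).aemeasurable hh
  calc ∫ ω, Φ ω ((a • f + b • g) ω) ∂P
      ≤ ∫ ω, (a * Φ ω (f ω) + b * Φ ω (g ω)) ∂P := by
        refine integral_mono_ae (hint _ (convex_unitBox hf hg ha hb hab))
          (((hint f hf).const_mul a).add ((hint g hg).const_mul b)) ?_
        filter_upwards [hf, hg, Lp.coeFn_add (a • f) (b • g), Lp.coeFn_smul a f,
          Lp.coeFn_smul b g] with ω hfω hgω hadd hsa hsb
        rw [hadd, Pi.add_apply, hsa, hsb]
        exact (hΦ.convexOn ω).2 hfω hgω ha hb hab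
    _ = a • ∫ ω, Φ ω (f ω) ∂P + b • ∫ ω, Φ ω (g ω) ∂P := by
        rw [integral_add ((hint f hf).const_mul a) ((hint g hg).const_mul b), integral_const_mul,
          integral_const_mul, smul_eq_mul, smul_eq_mul]

theorem isClosed_sublevel [Fact (1 ≤ p)] (c : ℝ) :
    IsClosed {f ∈ unitBox P p | ∫ ω, Φ ω (f ω) ∂P ≤ c} := by
  refine IsSeqClosed.isClosed fun u f hu hlim => ?_
  obtain ⟨ns, -, hae⟩ := (tendstoInMeasure_of_tendsto_Lp hlim).exists_seq_tendsto_ae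
  have hf : f ∈ unitBox P p := by
    filter_upwards [hae, ae_all_iff.2 fun i => (hu (ns i)).1] with ω ht hi
    exact isClosed_Icc.mem_of_tendsto ht (Eventually.of_forall hi)
  exact ⟨hf, le_of_tendsto' (hΦ.tendsto_integral
    (fun i => (Lp.aestronglyMeasurable _).aemeasurable) (fun i => (hu (ns i)).1) hae)
    fun i => (hu (ns i)).2⟩

end IsDominatedConvexIntegrand

theorem isDominatedConvexIntegrand_mul {h : Ω → ℝ} (hm : Measurable h) (hi : Integrable h P) :
    IsDominatedConvexIntegrand P fun ω t => h ω * t where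
  measurable_uncurry := (hm.comp measurable_fst).mul measurable_snd
  continuous _ := continuous_const_mul _
  convexOn ω := (LinearMap.mulLeft ℝ (h ω)).convexOn (convex_Icc 0 1)
  exists_integrable_bound := ⟨fun ω => ‖h ω‖, hi.norm, fun ω t ht => by
    rw [norm_mul]
    exact mul_le_of_le_one_right (norm_nonneg _) ((Real.norm_of_nonneg ht.1).trans_le ht.2)⟩

theorem isDominatedConvexIntegrand_comp_one_sub_mul {L : ℝ → ℝ} {G : Ω → ℝ} (hL : Continuous L)
    (hconv : ConvexOn ℝ (Ici 0) L) (hmono : MonotoneOn L (Ici 0))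
    (hnonneg : ∀ x ∈ Ici (0 : ℝ), 0 ≤ L x) (hG : Measurable G) (hGpos : ∀ ω, 0 ≤ G ω)
    (hint : Integrable (fun ω => L (G ω)) P) :
    IsDominatedConvexIntegrand P fun ω t => L ((1 - t) * G ω) where
  measurable_uncurry :=
    hL.measurable.comp ((measurable_const.sub measurable_snd).mul (hG.comp measurable_fst))
  continuous _ := hL.comp ((continuous_const.sub continuous_id).mul continuous_const)
  convexOn ω := by
    have hmem : ∀ t ∈ Icc (0 : ℝ) 1, (1 - t) * G ω ∈ Ici 0 := fun t ht =>
      mul_nonneg (sub_nonneg.2 ht.2) (hGpos ω)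
    refine ⟨convex_Icc 0 1, fun s hs t ht a b ha hb hab => ?_⟩
    convert hconv.2 (hmem s hs) (hmem t ht) ha hb hab using 2
    simp only [smul_eq_mul]
    linear_combination (-G ω) * hab
  exists_integrable_bound := ⟨_, hint, fun ω t ht => by
    have hmem : (1 - t) * G ω ∈ Ici 0 := mul_nonneg (sub_nonneg.2 ht.2) (hGpos ω)
    rw [Real.norm_of_nonneg (hnonneg _ hmem)]
    exact hmono hmem (hGpos ω) (mul_le_of_le_one_left (hGpos ω) (by linarith [ht.1]))⟩

def admissible (P : Measure Ω) (Φ : Ω → ℝ → ℝ) (y : ℝ) : Set (Ω → ℝ) :=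
  {φ | Measurable φ ∧ (∀ ω, φ ω ∈ Icc (0 : ℝ) 1) ∧ ∫ ω, Φ ω (φ ω) ∂P ≤ y}

theorem exists_isMinOn_integral [IsFiniteMeasure P] {Φ Ψ : Ω → ℝ → ℝ}
    (hΦ : IsDominatedConvexIntegrand P Φ) (hΨ : IsDominatedConvexIntegrand P Ψ) {y : ℝ}
    (hne : (admissible P Φ y).Nonempty) :
    ∃ φ ∈ admissible P Φ y, IsMinOn (fun φ => ∫ ω, Ψ ω (φ ω) ∂P) (admissible P Φ y) φ := by
  set J : (Ω → ℝ) → ℝ := fun φ => ∫ ω, Ψ ω (φ ω) ∂P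
  have hbdd := hΨ.bddBelow_integral_image (admissible P Φ y) fun φ hφ => hφ.2.1
  obtain ⟨c, hc_anti, hc_gt, hc_lim⟩ :=
    exists_seq_strictAnti_tendsto (sInf (J '' admissible P Φ y))
  set A : ℕ → Set (Lp ℝ 2 P) := fun n =>
    {f ∈ unitBox P 2 | ∫ ω, Φ ω (f ω) ∂P ≤ y} ∩ {f ∈ unitBox P 2 | ∫ ω, Ψ ω (f ω) ∂P ≤ c n}
  have hA : Antitone A := fun n k hnk =>
    inter_subset_inter_right _ fun f hf => ⟨hf.1, hf.2.trans (hc_anti.antitone hnk)⟩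
  have hAne : ∀ n, (A n).Nonempty := by
    intro n
    obtain ⟨_, ⟨φ, ⟨hφm, hφ01, hφy⟩, rfl⟩, hφc⟩ := exists_lt_of_csInf_lt (hne.image J) (hc_gt n)
    obtain ⟨f, hf, hfφ⟩ := exists_mem_unitBox_ae_eq (P := P) (p := 2) hφm hφ01
    exact ⟨f, ⟨hf, (integral_comp_congr_ae hfφ).trans_le hφy⟩,
      hf, ((integral_comp_congr_ae hfφ).trans_lt hφc).le⟩
  obtain ⟨f, hf⟩ := nonempty_iInter_of_antitone_convex hA hAne
    (fun n => (hΦ.convexOn_integral.convex_le y).inter (hΨ.convexOn_integral.convex_le (c n)))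
    (fun n => (hΦ.isClosed_sublevel y).inter (hΨ.isClosed_sublevel (c n)))
    ((isBounded_unitBox (P := P) (p := 2)).subset fun f hf => hf.1.1)
  rw [mem_iInter] at hf
  obtain ⟨φ, hφm, hφ01, hφf⟩ :=
    exists_measurable_mem_Icc_ae_eq (Lp.aestronglyMeasurable f).aemeasurable (hf 0).1.1
  refine ⟨φ, ⟨hφm, hφ01, (integral_comp_congr_ae hφf).trans_le (hf 0).1.2⟩,
    isMinOn_iff.2 fun ψ hψ => ?_⟩
  calc J φ ≤ sInf (J '' admissible P Φ y) :=
        ge_of_tendsto' hc_lim fun n => (integral_comp_congr_ae hφf).trans_le (hf n).2.2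
    _ ≤ J ψ := csInf_le hbdd (mem_image_of_mem J hψ)

end Integrands

theorem stmt_9_general
    {Ω : Type*} [MeasurableSpace Ω] (P : Measure Ω) [IsProbabilityMeasure P]
    (G V : Ω → ℝ) (hGmeas : Measurable G) (hVmeas : Measurable V)
    (hGpos : ∀ ω, 0 ≤ G ω)
    (hVG : Integrable (fun ω => V ω * G ω) P)
    (y : ℝ) (hy : 0 ≤ y)
    (ℓ : ℝ → ℝ)
    (hconv : ConvexOn ℝ (Ici 0) ℓ)
    (hcont : ContinuousOn ℓ (Ici 0))
    (hmono : MonotoneOn ℓ (Ici 0))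
    (hnonneg : ∀ x ∈ Ici (0:ℝ), 0 ≤ ℓ x)
    (hint : Integrable (fun ω => ℓ (G ω)) P) :
    ∃ φhat : Ω → ℝ, Measurable φhat ∧ (∀ ω, φhat ω ∈ Icc (0:ℝ) 1) ∧
      (∫ ω, V ω * G ω * φhat ω ∂P) ≤ y ∧
      (∫ ω, ℓ ((1 - φhat ω) * G ω) ∂P)
        = sInf {r : ℝ | ∃ φ : Ω → ℝ, Measurable φ ∧ (∀ ω, φ ω ∈ Icc (0:ℝ) 1) ∧
            (∫ ω, V ω * G ω * φ ω ∂P) ≤ y ∧ r = ∫ ω, ℓ ((1 - φ ω) * G ω) ∂P} := by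
  -- `ℓ` is arbitrary on `(-∞, 0)`; extending it by `ℓ 0` there gives a continuous integrand.
  set L : ℝ → ℝ := fun x => ℓ (max x 0)
  have hLℓ : EqOn L ℓ (Ici 0) := fun x hx => congrArg ℓ (max_eq_left hx)
  have hL : Continuous L :=
    hcont.comp_continuous (continuous_id.max continuous_const) fun x => le_max_right x 0
  have hshortfall := isDominatedConvexIntegrand_comp_one_sub_mul hL (hconv.congr hLℓ.symm)
    (hmono.congr hLℓ.symm) (fun x hx => hLℓ hx ▸ hnonneg x hx) hGmeas hGpos
    (hint.congr (Eventually.of_forall fun ω => (hLℓ (hGpos ω)).symm))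
  have hzero : (0 : Ω → ℝ) ∈ admissible P (fun ω t => V ω * G ω * t) y :=
    ⟨measurable_const, fun _ => ⟨le_rfl, zero_le_one⟩, by simpa using hy⟩
  obtain ⟨φ, ⟨hφm, hφ01, hφy⟩, hmin⟩ := exists_isMinOn_integral
    (isDominatedConvexIntegrand_mul (hVmeas.mul hGmeas) hVG) hshortfall (nonempty_of_mem hzero)
  have hLℓ_integral : ∀ ψ : Ω → ℝ, (∀ ω, ψ ω ∈ Icc (0 : ℝ) 1) →
      ∫ ω, ℓ ((1 - ψ ω) * G ω) ∂P = ∫ ω, L ((1 - ψ ω) * G ω) ∂P := fun ψ hψ =>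
    integral_congr_ae (Eventually.of_forall fun ω =>
      (hLℓ (mul_nonneg (sub_nonneg.2 (hψ ω).2) (hGpos ω))).symm)
  refine ⟨φ, hφm, hφ01, hφy, Eq.symm (IsLeast.csInf_eq ⟨⟨φ, hφm, hφ01, hφy, rfl⟩, ?_⟩)⟩
  rintro _ ⟨ψ, hψm, hψ01, hψy, rfl⟩
  rw [hLℓ_integral φ hφ01, hLℓ_integral ψ hψ01]
  exact hmin ⟨hψm, hψ01, hψy⟩

/-- **Existence of a minimizer for the constrained expected-shortfall problem.**
For `G, V ≥ 0` with `V·G` integrable, `y ≥ 0`, and `ℓ : [0,∞) → [0,∞)` convex, continuous,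
nondecreasing with `E[ℓ(G)] < ∞`, there is a measurable `φ̂ : Ω → [0,1]` with
`E[V G φ̂] ≤ y` attaining the infimum of `E[ℓ((1−φ)G)]` over all measurable `φ : Ω → [0,1]`
with `E[V G φ] ≤ y`. -/
theorem stmt_9
    {Ω : Type*} [MeasurableSpace Ω] (P : Measure Ω) [IsProbabilityMeasure P]
    (G V : Ω → ℝ) (hGmeas : Measurable G) (hVmeas : Measurable V)
    (hGpos : ∀ ω, 0 ≤ G ω) (hVpos : ∀ ω, 0 ≤ V ω)
    (hVG : Integrable (fun ω => V ω * G ω) P)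
    (y : ℝ) (hy : 0 ≤ y)
    (ℓ : ℝ → ℝ)
    (hconv : ConvexOn ℝ (Ici 0) ℓ)
    (hcont : ContinuousOn ℓ (Ici 0))
    (hmono : MonotoneOn ℓ (Ici 0))
    (hnonneg : ∀ x ∈ Ici (0:ℝ), 0 ≤ ℓ x)
    (hint : Integrable (fun ω => ℓ (G ω)) P) :
    ∃ φhat : Ω → ℝ, Measurable φhat ∧ (∀ ω, φhat ω ∈ Icc (0:ℝ) 1) ∧
      (∫ ω, V ω * G ω * φhat ω ∂P) ≤ y ∧
      (∫ ω, ℓ ((1 - φhat ω) * G ω) ∂P)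
        = sInf {r : ℝ | ∃ φ : Ω → ℝ, Measurable φ ∧ (∀ ω, φ ω ∈ Icc (0:ℝ) 1) ∧
            (∫ ω, V ω * G ω * φ ω ∂P) ≤ y ∧ r = ∫ ω, ℓ ((1 - φ ω) * G ω) ∂P} :=
  stmt_9_general P G V hGmeas hVmeas hGpos hVG y hy ℓ hconv hcont hmono hnonneg hint
end

section
/- Let (Ω, F, P) be a probability space, let ℓ : [0, ∞) → [0, ∞) be convex, nondecreasing and continuously differentiable with ℓ(0) = 0, let G : Ω → [0, ∞) be measurable with E[ℓ(2G)] < ∞, and let φ, φ̂ : Ω → [0, 1] be measurable. For ε ∈ [0, 1] define φ_ε := εφ + (1 − ε)φ̂ and F(ε) := E[ℓ((1 − φ_ε)G)]. Then F is real-valued and convex on [0, 1], the random variable ℓ'((1 − φ̂)G)(φ̂ − φ)G is integrable, and the right derivative of F at 0 exists and equals E[ℓ'((1 − φ̂)G)(φ̂ − φ)G]. -/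
/-!
Put `X = (1 - φ̂) G` and `Y = (φ̂ - φ) G`, so that `(1 - φ_ε) G = X + ε Y` and both `X` and
`X + Y = (1 - φ) G` lie in `[0, G]`; hence so does `X + ε Y` for `ε ∈ [0, 1]`, where `ℓ ≤ ℓ (2G)`.
Convexity of `ℓ` along the segment gives convexity of `F`, and it squeezes the difference
quotient `(ℓ (X + ε Y) - ℓ X) / ε` between the tangent slope `ℓ' X · Y` and the chord
`ℓ (X + Y) - ℓ X`. Since `ℓ' X · G ≤ ℓ (X + G) ≤ ℓ (2G)`, both are dominated by the integrable
`ℓ (2G)`, and dominated convergence identifies the right derivative of `F` at `0`.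
-/

open MeasureTheory Set Filter Topology

theorem MonotoneOn.nonneg_of_hasDerivWithinAt_Ici {f : ℝ → ℝ} {f' a x : ℝ}
    (hf : MonotoneOn f (Ici a)) (hx : a ≤ x) (hd : HasDerivWithinAt f f' (Ici a) x) : 0 ≤ f' :=
  have hsub : Ici x ⊆ Ici a := Ici_subset_Ici.2 hx
  (hd.mono hsub).nonneg_of_monotoneOn
    (accPt_principal_iff_nhdsWithin.2 (by rw [Ici_sdiff_left]; infer_instance)) (hf.mono hsub)

theorem ConvexOn.add_mul_sub_le_of_hasDerivWithinAt {f : ℝ → ℝ} {s : Set ℝ} {f' x y : ℝ}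
    (hf : ConvexOn ℝ s f) (hx : x ∈ s) (hy : y ∈ s) (hd : HasDerivWithinAt f f' s x) :
    f x + f' * (y - x) ≤ f y := by
  rcases lt_trichotomy x y with hxy | rfl | hxy
  · have h := hf.le_slope_of_hasDerivWithinAt hx hy hxy hd
    rw [slope_def_field, le_div_iff₀ (sub_pos.2 hxy)] at h
    linarith
  · simp
  · have h := hf.slope_le_of_hasDerivWithinAt hy hx hxy hd
    rw [slope_def_field, div_le_iff₀ (sub_pos.2 hxy)] at h
    linarith

theorem ConvexOn.comp_add_mul {f : ℝ → ℝ} {s : Set ℝ} {x y : ℝ} (hf : ConvexOn ℝ s f)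
    (hx : x ∈ s) (hxy : x + y ∈ s) : ConvexOn ℝ (Icc 0 1) fun t => f (x + t * y) := by
  have hline (t : ℝ) : AffineMap.lineMap x (x + y) t = x + t * y := by
    rw [AffineMap.lineMap_apply_ring']; ring
  have hmaps : MapsTo (AffineMap.lineMap x (x + y)) (Icc (0 : ℝ) 1) s := fun _ ht =>
    hf.1.lineMap_mem hx hxy ht
  simpa [Function.comp_def, hline] using (hf.comp_affineMap _).subset hmaps (convex_Icc 0 1)

theorem HasDerivWithinAt.comp_add_mul {f : ℝ → ℝ} {f' x y : ℝ} {s t : Set ℝ}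
    (hf : HasDerivWithinAt f f' s x) (hst : MapsTo (fun τ => x + τ * y) t s) :
    HasDerivWithinAt (fun τ => f (x + τ * y)) (f' * y) t 0 := by
  have hline : HasDerivWithinAt (fun τ => x + τ * y) y t 0 := by
    simpa using (((hasDerivAt_id (0:ℝ)).mul_const y).const_add x).hasDerivWithinAt
  have hf0 : HasDerivWithinAt f f' s (x + 0 * y) := by simpa using hf
  exact hf0.comp 0 hline hst

theorem ContinuousOn.measurable_comp_of_forall_mem {α β γ : Type*} [TopologicalSpace α]
    [MeasurableSpace α] [OpensMeasurableSpace α] [TopologicalSpace β] [MeasurableSpace β]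
    [BorelSpace β] [MeasurableSpace γ] {g : α → β} {s : Set α} (hg : ContinuousOn g s)
    {f : γ → α} (hf : Measurable f) (hfs : ∀ c, f c ∈ s) : Measurable fun c => g (f c) :=
  (continuousOn_iff_continuous_domRestrict.mp hg).measurable.comp (hf.subtype_mk (h := hfs))

section ParametricIntegral

variable {α E : Type*} [MeasurableSpace α] {μ : Measure α} [NormedAddCommGroup E]
  [NormedSpace ℝ E] {f : α → ℝ → E}

theorem slope_integral {a b : ℝ} (ha : Integrable (fun ω => f ω a) μ)
    (hb : Integrable (fun ω => f ω b) μ) :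
    slope (fun t => ∫ ω, f ω t ∂μ) a b = ∫ ω, slope (f ω) a b ∂μ := by
  simp only [slope_def_module]
  rw [integral_smul, integral_sub hb ha]

theorem hasDerivWithinAt_integral_of_dominated_slope {f' : α → E} {s : Set ℝ} {a : ℝ}
    (bound : α → ℝ) (ha : a ∈ s) (hf_int : ∀ t ∈ s, Integrable (fun ω => f ω t) μ)
    (h_bound : ∀ᵐ ω ∂μ, ∀ t ∈ s \ {a}, ‖slope (f ω) a t‖ ≤ bound ω)
    (bound_integrable : Integrable bound μ)
    (h_diff : ∀ᵐ ω ∂μ, HasDerivWithinAt (f ω) (f' ω) s a) :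
    HasDerivWithinAt (fun t => ∫ ω, f ω t ∂μ) (∫ ω, f' ω ∂μ) s a := by
  rw [hasDerivWithinAt_iff_tendsto_slope]
  have hlim : Tendsto (fun t => ∫ ω, slope (f ω) a t ∂μ) (𝓝[s \ {a}] a)
      (𝓝 (∫ ω, f' ω ∂μ)) := by
    refine tendsto_integral_filter_of_dominated_convergence bound ?_ ?_ bound_integrable ?_
    · filter_upwards [self_mem_nhdsWithin] with t ht
      simp only [slope_def_module]
      exact ((hf_int t ht.1).sub (hf_int a ha)).aestronglyMeasurable.const_smul (t - a)⁻¹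
    · filter_upwards [self_mem_nhdsWithin] with t ht
      filter_upwards [h_bound] with ω hω using hω t ht
    · filter_upwards [h_diff] with ω hω using hasDerivWithinAt_iff_tendsto_slope.1 hω
  refine hlim.congr' ?_
  filter_upwards [self_mem_nhdsWithin] with t ht
  rw [slope_integral (hf_int a ha) (hf_int t ht.1)]

end ParametricIntegral

section Loss

variable {ℓ ℓd : ℝ → ℝ}

theorem abs_deriv_mul_le_of_mem_Icc (hconv : ConvexOn ℝ (Ici 0) ℓ)
    (hmono : MonotoneOn ℓ (Ici 0)) (hnonneg : ∀ x ∈ Ici (0:ℝ), 0 ≤ ℓ x)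
    (hderiv : ∀ x ∈ Ici (0:ℝ), HasDerivWithinAt ℓ (ℓd x) (Ici 0) x) {x y g : ℝ}
    (hx : x ∈ Icc 0 g) (hxy : x + y ∈ Icc 0 g) : |ℓd x * y| ≤ ℓ (2 * g) := by
  have hg : 0 ≤ g := hx.1.trans hx.2
  have hd : 0 ≤ ℓd x := hmono.nonneg_of_hasDerivWithinAt_Ici hx.1 (hderiv x hx.1)
  have hy : |y| ≤ g := abs_le.2 ⟨by linarith [hxy.1, hx.2], by linarith [hxy.2, hx.1]⟩
  have htangent : ℓ x + ℓd x * (x + g - x) ≤ ℓ (x + g) :=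
    hconv.add_mul_sub_le_of_hasDerivWithinAt hx.1 (by simp only [mem_Ici]; linarith [hx.1])
      (hderiv x hx.1)
  calc |ℓd x * y| = ℓd x * |y| := by rw [abs_mul, abs_of_nonneg hd]
    _ ≤ ℓd x * g := mul_le_mul_of_nonneg_left hy hd
    _ ≤ ℓ (x + g) := by linarith [hnonneg x hx.1]
    _ ≤ ℓ (2 * g) := hmono (by simp only [mem_Ici]; linarith [hx.1])
        (by simp only [mem_Ici]; linarith) (by linarith [hx.2])

theorem abs_slope_comp_add_mul_le (hconv : ConvexOn ℝ (Ici 0) ℓ)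
    (hmono : MonotoneOn ℓ (Ici 0)) (hnonneg : ∀ x ∈ Ici (0:ℝ), 0 ≤ ℓ x)
    (hderiv : ∀ x ∈ Ici (0:ℝ), HasDerivWithinAt ℓ (ℓd x) (Ici 0) x) {x y g : ℝ}
    (hx : x ∈ Icc 0 g) (hxy : x + y ∈ Icc 0 g) {ε : ℝ} (hε : ε ∈ Ioc 0 1) :
    |slope (fun t => ℓ (x + t * y)) 0 ε| ≤ ℓ (2 * g) := by
  have hxεy : x + ε * y ∈ Icc 0 g :=
    (convex_Icc 0 g).add_smul_mem hx hxy (Ioc_subset_Icc_self hε)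
  have htangent : ℓ x + ℓd x * (ε * y) ≤ ℓ (x + ε * y) := by
    simpa using hconv.add_mul_sub_le_of_hasDerivWithinAt hx.1 hxεy.1 (hderiv x hx.1)
  have hchord : ℓ (x + ε * y) ≤ (1 - ε) * ℓ x + ε * ℓ (x + y) := by
    simpa using (hconv.comp_add_mul hx.1 hxy.1).2 (x := 0) (y := 1) (by simp) (by simp)
      (sub_nonneg.2 hε.2) hε.1.le (by ring)
  have hderiv_bound := abs_le.1 (abs_deriv_mul_le_of_mem_Icc hconv hmono hnonneg hderiv hx hxy)
  have hxy_bound : ℓ (x + y) ≤ ℓ (2 * g) :=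
    hmono hxy.1 (by simp only [mem_Ici]; linarith [hx.1, hx.2]) (by linarith [hxy.2, hx.1, hx.2])
  rw [slope_def_field, abs_le]
  simp only [zero_mul, add_zero, sub_zero]
  constructor
  · rw [le_div_iff₀ hε.1]; nlinarith [hε.1]
  · rw [div_le_iff₀ hε.1]; nlinarith [hnonneg x hx.1, hε.1]

variable {Ω : Type*} [MeasurableSpace Ω] {P : Measure Ω} {X Y G : Ω → ℝ}

theorem integrable_comp_add_mul (hmono : MonotoneOn ℓ (Ici 0))
    (hnonneg : ∀ x ∈ Ici (0:ℝ), 0 ≤ ℓ x) (hcont : ContinuousOn ℓ (Ici 0))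
    (hX : Measurable X) (hY : Measurable Y) (hXG : ∀ ω, X ω ∈ Icc 0 (G ω))
    (hXYG : ∀ ω, X ω + Y ω ∈ Icc 0 (G ω)) (hint : Integrable (fun ω => ℓ (2 * G ω)) P)
    {ε : ℝ} (hε : ε ∈ Icc 0 1) : Integrable (fun ω => ℓ (X ω + ε * Y ω)) P := by
  have hmem (ω : Ω) : X ω + ε * Y ω ∈ Icc 0 (G ω) :=
    (convex_Icc 0 (G ω)).add_smul_mem (hXG ω) (hXYG ω) hε
  refine hint.mono' (hcont.measurable_comp_of_forall_mem (hX.add (hY.const_mul ε))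
    fun ω => (hmem ω).1).aestronglyMeasurable (ae_of_all _ fun ω => ?_)
  rw [Real.norm_of_nonneg (hnonneg _ (hmem ω).1)]
  exact hmono (hmem ω).1 (by simp only [mem_Ici]; linarith [(hmem ω).1, (hmem ω).2])
    (by linarith [(hmem ω).1, (hmem ω).2])

theorem integrable_deriv_comp_mul (hconv : ConvexOn ℝ (Ici 0) ℓ)
    (hmono : MonotoneOn ℓ (Ici 0)) (hnonneg : ∀ x ∈ Ici (0:ℝ), 0 ≤ ℓ x)
    (hderiv : ∀ x ∈ Ici (0:ℝ), HasDerivWithinAt ℓ (ℓd x) (Ici 0) x)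
    (hdcont : ContinuousOn ℓd (Ici 0)) (hX : Measurable X) (hY : Measurable Y)
    (hXG : ∀ ω, X ω ∈ Icc 0 (G ω)) (hXYG : ∀ ω, X ω + Y ω ∈ Icc 0 (G ω))
    (hint : Integrable (fun ω => ℓ (2 * G ω)) P) :
    Integrable (fun ω => ℓd (X ω) * Y ω) P :=
  hint.mono'
    ((hdcont.measurable_comp_of_forall_mem hX fun ω => (hXG ω).1).mul hY).aestronglyMeasurable
    (ae_of_all _ fun ω => (Real.norm_eq_abs _).trans_le
      (abs_deriv_mul_le_of_mem_Icc hconv hmono hnonneg hderiv (hXG ω) (hXYG ω)))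

theorem hasDerivWithinAt_integral_comp_add_mul (hconv : ConvexOn ℝ (Ici 0) ℓ)
    (hmono : MonotoneOn ℓ (Ici 0)) (hnonneg : ∀ x ∈ Ici (0:ℝ), 0 ≤ ℓ x)
    (hderiv : ∀ x ∈ Ici (0:ℝ), HasDerivWithinAt ℓ (ℓd x) (Ici 0) x)
    (hX : Measurable X) (hY : Measurable Y)
    (hXG : ∀ ω, X ω ∈ Icc 0 (G ω)) (hXYG : ∀ ω, X ω + Y ω ∈ Icc 0 (G ω))
    (hint : Integrable (fun ω => ℓ (2 * G ω)) P) :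
    HasDerivWithinAt (fun ε => ∫ ω, ℓ (X ω + ε * Y ω) ∂P) (∫ ω, ℓd (X ω) * Y ω ∂P)
      (Icc 0 1) 0 := by
  have hcont : ContinuousOn ℓ (Ici 0) := fun x hx => (hderiv x hx).continuousWithinAt
  refine hasDerivWithinAt_integral_of_dominated_slope (fun ω => ℓ (2 * G ω))
    (left_mem_Icc.2 zero_le_one)
    (fun ε hε => integrable_comp_add_mul hmono hnonneg hcont hX hY hXG hXYG hint hε)
    (ae_of_all _ fun ω ε hε => ?_) hint (ae_of_all _ fun ω => ?_)
  · exact abs_slope_comp_add_mul_le hconv hmono hnonneg hderiv (hXG ω) (hXYG ω)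
      ⟨hε.1.1.lt_of_ne (Ne.symm hε.2), hε.1.2⟩
  · exact (hderiv _ (hXG ω).1).comp_add_mul fun ε hε =>
      ((convex_Icc 0 (G ω)).add_smul_mem (hXG ω) (hXYG ω) hε).1

end Loss

theorem stmt_10_general
    {Ω : Type*} [MeasurableSpace Ω] (P : Measure Ω)
    (ℓ ℓd : ℝ → ℝ)
    (hconv : ConvexOn ℝ (Ici 0) ℓ)
    (hmono : MonotoneOn ℓ (Ici 0))
    (hnonneg : ∀ x ∈ Ici (0:ℝ), 0 ≤ ℓ x)
    (hderiv : ∀ x ∈ Ici (0:ℝ), HasDerivWithinAt ℓ (ℓd x) (Ici 0) x)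
    (hdcont : ContinuousOn ℓd (Ici 0))
    (G : Ω → ℝ) (hGmeas : Measurable G) (hGpos : ∀ ω, 0 ≤ G ω)
    (hint : Integrable (fun ω => ℓ (2 * G ω)) P)
    (φ φhat : Ω → ℝ) (hφmeas : Measurable φ) (hφhatmeas : Measurable φhat)
    (hφ : ∀ ω, φ ω ∈ Icc (0:ℝ) 1) (hφhat : ∀ ω, φhat ω ∈ Icc (0:ℝ) 1)
    (F : ℝ → ℝ)
    (hF : ∀ ε : ℝ, F ε = ∫ ω, ℓ ((1 - (ε * φ ω + (1 - ε) * φhat ω)) * G ω) ∂P) :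
    (∀ ε ∈ Icc (0:ℝ) 1,
      Integrable (fun ω => ℓ ((1 - (ε * φ ω + (1 - ε) * φhat ω)) * G ω)) P) ∧
    ConvexOn ℝ (Icc 0 1) F ∧
    Integrable (fun ω => ℓd ((1 - φhat ω) * G ω) * (φhat ω - φ ω) * G ω) P ∧
    HasDerivWithinAt F (∫ ω, ℓd ((1 - φhat ω) * G ω) * (φhat ω - φ ω) * G ω ∂P)
      (Icc 0 1) 0 := by
  have hscale {p : ℝ} (hp : p ∈ Icc (0:ℝ) 1) (ω : Ω) : (1 - p) * G ω ∈ Icc 0 (G ω) :=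
    ⟨mul_nonneg (sub_nonneg.2 hp.2) (hGpos ω), mul_le_of_le_one_left (hGpos ω) (by linarith [hp.1])⟩
  have hperturb (ε : ℝ) (ω : Ω) : (1 - (ε * φ ω + (1 - ε) * φhat ω)) * G ω
      = (1 - φhat ω) * G ω + ε * ((φhat ω - φ ω) * G ω) := by ring
  have hXG (ω : Ω) := hscale (hφhat ω) ω
  have hXYG (ω : Ω) : (1 - φhat ω) * G ω + (φhat ω - φ ω) * G ω ∈ Icc 0 (G ω) := by
    convert hscale (hφ ω) ω using 1
    ring
  have hX : Measurable fun ω => (1 - φhat ω) * G ω := (measurable_const.sub hφhatmeas).mul hGmeas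
  have hY : Measurable fun ω => (φhat ω - φ ω) * G ω := (hφhatmeas.sub hφmeas).mul hGmeas
  have hcont : ContinuousOn ℓ (Ici 0) := fun x hx => (hderiv x hx).continuousWithinAt
  have hInt {ε : ℝ} (hε : ε ∈ Icc (0:ℝ) 1) :=
    integrable_comp_add_mul hmono hnonneg hcont hX hY hXG hXYG hint hε
  have hF' : F = fun ε => ∫ ω, ℓ ((1 - φhat ω) * G ω + ε * ((φhat ω - φ ω) * G ω)) ∂P :=
    funext fun ε => by simp only [hF, hperturb]
  simp only [hperturb, hF', mul_assoc]
  exact ⟨fun _ => hInt,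
    integral_convexOn_of_integrand_ae (convex_Icc 0 1)
      (ae_of_all _ fun ω => hconv.comp_add_mul (hXG ω).1 (hXYG ω).1) fun _ => hInt,
    integrable_deriv_comp_mul hconv hmono hnonneg hderiv hdcont hX hY hXG hXYG hint,
    hasDerivWithinAt_integral_comp_add_mul hconv hmono hnonneg hderiv hX hY hXG hXYG hint⟩

/-- **Right differentiability of the shortfall functional along convex perturbations.**
With `ℓ` convex, nondecreasing, `C¹` on `[0,∞)`, `ℓ(0)=0`, `G ≥ 0` with `E[ℓ(2G)] < ∞`, and
`φ, φ̂ : Ω → [0,1]`, the function `F(ε) = E[ℓ((1−φ_ε)G)]`, `φ_ε = εφ + (1−ε)φ̂`, is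
real-valued and convex on `[0,1]`, the random variable `ℓ'((1−φ̂)G)(φ̂−φ)G` is integrable,
and the right derivative of `F` at `0` equals `E[ℓ'((1−φ̂)G)(φ̂−φ)G]`. -/
theorem stmt_10
    {Ω : Type*} [MeasurableSpace Ω] (P : Measure Ω) [IsProbabilityMeasure P]
    (ℓ ℓd : ℝ → ℝ)
    (hconv : ConvexOn ℝ (Ici 0) ℓ)
    (hmono : MonotoneOn ℓ (Ici 0))
    (hnonneg : ∀ x ∈ Ici (0:ℝ), 0 ≤ ℓ x)
    (hzero : ℓ 0 = 0)
    (hderiv : ∀ x ∈ Ici (0:ℝ), HasDerivWithinAt ℓ (ℓd x) (Ici 0) x)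
    (hdcont : ContinuousOn ℓd (Ici 0))
    (G : Ω → ℝ) (hGmeas : Measurable G) (hGpos : ∀ ω, 0 ≤ G ω)
    (hint : Integrable (fun ω => ℓ (2 * G ω)) P)
    (φ φhat : Ω → ℝ) (hφmeas : Measurable φ) (hφhatmeas : Measurable φhat)
    (hφ : ∀ ω, φ ω ∈ Icc (0:ℝ) 1) (hφhat : ∀ ω, φhat ω ∈ Icc (0:ℝ) 1)
    (F : ℝ → ℝ)
    (hF : ∀ ε : ℝ, F ε = ∫ ω, ℓ ((1 - (ε * φ ω + (1 - ε) * φhat ω)) * G ω) ∂P) :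
    (∀ ε ∈ Icc (0:ℝ) 1,
      Integrable (fun ω => ℓ ((1 - (ε * φ ω + (1 - ε) * φhat ω)) * G ω)) P) ∧
    ConvexOn ℝ (Icc 0 1) F ∧
    Integrable (fun ω => ℓd ((1 - φhat ω) * G ω) * (φhat ω - φ ω) * G ω) P ∧
    HasDerivWithinAt F (∫ ω, ℓd ((1 - φhat ω) * G ω) * (φhat ω - φ ω) * G ω ∂P)
      (Icc 0 1) 0 :=
  stmt_10_general P ℓ ℓd hconv hmono hnonneg hderiv hdcont G hGmeas hGpos hint φ φhat hφmeas
    hφhatmeas hφ hφhat F hF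
end

section
/- Let (Ω, F, P) be a probability space, ℓ : [0, ∞) → [0, ∞) a loss function as specified, I := (ℓ')⁻¹, V : Ω → (0, ∞) measurable, and G : Ω → [0, ∞) measurable with 0 < E[V G] < ∞. For c > 0 define φ̂(c) := 1_{G>0}·(1 − min(I(cV)/G, 1)) and k(c) := E[V G φ̂(c)]. Then: k is continuous on (0, ∞); k(c) → E[V G] as c → 0⁺; k(c) → 0 as c → ∞; and for every y ∈ (0, E[V G]) there exists a unique ĉ > 0 with k(ĉ) = y. -/
open MeasureTheory Set Filter Topology

/-!
Write `V G φ̂(c) = V (G - I(cV))⁺`. Since `I = (ℓ')⁻¹` is a strictly increasing continuous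
bijection of `(0, ∞)` with `I(0⁺) = 0` and `I(∞) = ∞`, this integrand is continuous and
decreasing in `c`, dominated by `V G`, tends to `V G` as `c → 0⁺` and vanishes for large `c`.
Dominated convergence gives continuity and both limits of `k`; the intermediate value theorem
gives a solution of `k(c) = y`, and it is unique because `k` strictly decreases wherever it is
positive: the integrand strictly decreases on its support, which has positive measure.
-/

lemma StrictConvexOn.strictMonoOn_of_hasDerivWithinAt {S : Set ℝ} {f f' : ℝ → ℝ}
    (hf : StrictConvexOn ℝ S f) (hf' : ∀ x ∈ S, HasDerivWithinAt f (f' x) S x) :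
    StrictMonoOn f' S := fun x hx y hy hxy =>
  (hf.lt_slope_of_hasDerivWithinAt hx hy hxy (hf' x hx)).trans
    (hf.slope_lt_of_hasDerivWithinAt hx hy hxy (hf' y hy))

lemma StrictMonoOn.mapsTo_Ioi_of_tendsto_nhdsGT {f : ℝ → ℝ} (hf : StrictMonoOn f (Ici 0))
    (h0 : Tendsto f (𝓝[>] 0) (𝓝 0)) : MapsTo f (Ioi 0) (Ioi 0) := by
  intro x (hx : 0 < x)
  have hhalf : 0 ≤ f (x / 2) := le_of_tendsto h0 <| by
    filter_upwards [Ioo_mem_nhdsGT (half_pos hx)] with t ht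
    exact (hf ht.1.le (half_pos hx).le ht.2).le
  exact hhalf.trans_lt (hf (half_pos hx).le hx.le (half_lt_self hx))

lemma StrictMonoOn.strictMonoOn_of_rightInvOn {α β : Type*} [LinearOrder α] [LinearOrder β]
    {f : α → β} {g : β → α} {s : Set α} {t : Set β} (hf : StrictMonoOn f s)
    (hg : MapsTo g t s) (hfg : RightInvOn g f t) : StrictMonoOn g t := by
  intro y₁ h₁ y₂ h₂ h
  rwa [← hf.lt_iff_lt (hg h₁) (hg h₂), hfg h₁, hfg h₂]

lemma StrictMonoOn.continuousOn_of_image_eq {α β : Type*} [LinearOrder α] [TopologicalSpace α]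
    [OrderTopology α] [LinearOrder β] [TopologicalSpace β] [OrderTopology β] [DenselyOrdered β]
    {f : α → β} {s : Set α} {t : Set β} (hf : StrictMonoOn f s) (hs : IsOpen s) (ht : IsOpen t)
    (himage : f '' s = t) : ContinuousOn f s := fun _ ha =>
  (hf.continuousAt_of_image_mem_nhds (hs.mem_nhds ha)
    (himage ▸ ht.mem_nhds (himage ▸ mem_image_of_mem f ha))).continuousWithinAt

lemma MonotoneOn.tendsto_nhdsGT_zero_of_surjOn {f : ℝ → ℝ} (hf : MonotoneOn f (Ioi 0))
    (hmaps : MapsTo f (Ioi 0) (Ioi 0)) (hsurj : SurjOn f (Ioi 0) (Ioi 0)) :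
    Tendsto f (𝓝[>] 0) (𝓝 0) := by
  refine tendsto_order.2 ⟨fun b hb => ?_, fun b hb => ?_⟩
  · filter_upwards [self_mem_nhdsWithin] with x hx using hb.trans (hmaps hx)
  · obtain ⟨x, hx, hfx⟩ := hsurj (half_pos hb)
    filter_upwards [Ioo_mem_nhdsGT hx] with y hy
    exact (hf hy.1 hx hy.2.le).trans_lt (hfx ▸ half_lt_self hb)

lemma MonotoneOn.tendsto_atTop_of_surjOn {f : ℝ → ℝ} (hf : MonotoneOn f (Ioi 0))
    (hsurj : SurjOn f (Ioi 0) (Ioi 0)) : Tendsto f atTop atTop := by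
  refine tendsto_atTop_atTop.2 fun b => ?_
  obtain ⟨x, hx, hfx⟩ := hsurj (show (0 : ℝ) < max b 1 from lt_max_of_lt_right one_pos)
  exact ⟨x, fun y hy => (le_max_left b 1).trans (hfx ▸ hf hx (lt_of_lt_of_le hx hy) hy)⟩

lemma mul_ite_one_sub_min_div {a g : ℝ} (ha : 0 ≤ a) (hg : 0 ≤ g) :
    g * (if 0 < g then 1 - min (a / g) 1 else 0) = max (g - a) 0 := by
  split_ifs with hg'
  · rcases le_total a g with h | h
    · rw [min_eq_left ((div_le_one hg').2 h), mul_sub, mul_div_cancel₀ _ hg'.ne', mul_one,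
        max_eq_left (sub_nonneg.2 h)]
    · rw [min_eq_right ((one_le_div hg').2 h), sub_self, mul_zero, max_eq_right (by linarith)]
  · rw [le_antisymm (not_lt.1 hg') hg, mul_zero, zero_sub, max_eq_right (neg_nonpos.2 ha)]

section WeightedExcess

variable {Ω : Type*} {J : ℝ → ℝ} {V G : Ω → ℝ}

/-- The integrand `V G φ̂(c)` of `k(c)` (see `mul_ite_one_sub_min_div`). -/
noncomputable def weightedExcess (J : ℝ → ℝ) (V G : Ω → ℝ) (c : ℝ) (ω : Ω) : ℝ :=
  V ω * max (G ω - J (c * V ω)) 0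

lemma weightedExcess_nonneg (hV : ∀ ω, 0 < V ω) (c : ℝ) (ω : Ω) :
    0 ≤ weightedExcess J V G c ω :=
  mul_nonneg (hV ω).le (le_max_right _ _)

lemma weightedExcess_le (hJ : MapsTo J (Ioi 0) (Ioi 0)) (hV : ∀ ω, 0 < V ω)
    (hG : ∀ ω, 0 ≤ G ω) {c : ℝ} (hc : 0 < c) (ω : Ω) :
    weightedExcess J V G c ω ≤ V ω * G ω := by
  have hJc : 0 < J (c * V ω) := hJ (mul_pos hc (hV ω))
  exact mul_le_mul_of_nonneg_left (max_le (by linarith) (hG ω)) (hV ω).le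

lemma weightedExcess_antitone (hJ : StrictMonoOn J (Ioi 0)) (hV : ∀ ω, 0 < V ω)
    {c₁ c₂ : ℝ} (hc₁ : 0 < c₁) (h : c₁ ≤ c₂) (ω : Ω) :
    weightedExcess J V G c₂ ω ≤ weightedExcess J V G c₁ ω := by
  have hJle : J (c₁ * V ω) ≤ J (c₂ * V ω) := hJ.monotoneOn (mul_pos hc₁ (hV ω))
    (mul_pos (hc₁.trans_le h) (hV ω)) (mul_le_mul_of_nonneg_right h (hV ω).le)
  have hV₀ : 0 ≤ V ω := (hV ω).le
  unfold weightedExcess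
  gcongr

lemma weightedExcess_lt (hJ : StrictMonoOn J (Ioi 0)) (hV : ∀ ω, 0 < V ω)
    {c₁ c₂ : ℝ} (hc₁ : 0 < c₁) (h : c₁ < c₂) {ω : Ω} (hpos : 0 < weightedExcess J V G c₁ ω) :
    weightedExcess J V G c₂ ω < weightedExcess J V G c₁ ω := by
  have hJlt : J (c₁ * V ω) < J (c₂ * V ω) := hJ (mul_pos hc₁ (hV ω))
    (mul_pos (hc₁.trans h) (hV ω)) (mul_lt_mul_of_pos_right h (hV ω))
  have hexcess : 0 < G ω - J (c₁ * V ω) := by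
    by_contra hle
    rw [weightedExcess, max_eq_right (not_lt.1 hle), mul_zero] at hpos
    exact lt_irrefl 0 hpos
  unfold weightedExcess at hpos ⊢
  rw [max_eq_left hexcess.le] at hpos ⊢
  exact mul_lt_mul_of_pos_left (max_lt (by linarith) hexcess) (hV ω)

lemma continuousAt_weightedExcess (hJ : ContinuousOn J (Ioi 0)) (hV : ∀ ω, 0 < V ω)
    {c₀ : ℝ} (hc₀ : 0 < c₀) (ω : Ω) : ContinuousAt (fun c => weightedExcess J V G c ω) c₀ := by
  have hJcV : ContinuousAt (fun c => J (c * V ω)) c₀ :=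
    (hJ.continuousAt (Ioi_mem_nhds (mul_pos hc₀ (hV ω)))).comp (f := fun c => c * V ω)
      (continuous_mul_const (V ω)).continuousAt
  exact continuousAt_const.mul ((continuousAt_const.sub hJcV).max continuousAt_const)

lemma tendsto_weightedExcess_nhdsGT_zero (hJ : Tendsto J (𝓝[>] 0) (𝓝 0))
    (hV : ∀ ω, 0 < V ω) (hG : ∀ ω, 0 ≤ G ω) (ω : Ω) :
    Tendsto (fun c => weightedExcess J V G c ω) (𝓝[>] 0) (𝓝 (V ω * G ω)) := by
  have hcV : Tendsto (fun c => c * V ω) (𝓝[>] 0) (𝓝[>] 0) := tendsto_nhdsWithin_iff.2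
    ⟨((continuous_mul_const (V ω)).tendsto' 0 0 (zero_mul _)).mono_left nhdsWithin_le_nhds,
      eventually_nhdsWithin_of_forall fun c hc => mul_pos hc (hV ω)⟩
  have h : Tendsto (fun c => V ω * max (G ω - J (c * V ω)) 0) (𝓝[>] 0)
      (𝓝 (V ω * max (G ω - 0) 0)) :=
    tendsto_const_nhds.mul ((tendsto_const_nhds.sub (hJ.comp hcV)).max tendsto_const_nhds)
  rwa [sub_zero, max_eq_left (hG ω)] at h

lemma weightedExcess_eventually_eq_zero (hJ : Tendsto J atTop atTop) (hV : ∀ ω, 0 < V ω)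
    (ω : Ω) : (fun c => weightedExcess J V G c ω) =ᶠ[atTop] fun _ => 0 := by
  have hJcV : Tendsto (fun c => J (c * V ω)) atTop atTop :=
    hJ.comp (tendsto_id.atTop_mul_const (hV ω))
  filter_upwards [hJcV.eventually_ge_atTop (G ω)] with c hc
  rw [weightedExcess, max_eq_right (sub_nonpos.2 hc), mul_zero]

section Integral

variable [MeasurableSpace Ω] {P : Measure Ω}

lemma measurable_weightedExcess (hJ : ContinuousOn J (Ioi 0)) (hVm : Measurable V)
    (hGm : Measurable G) (hV : ∀ ω, 0 < V ω) {c : ℝ} (hc : 0 < c) :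
    Measurable (weightedExcess J V G c) := by
  have hJcV : Measurable fun ω => J (c * V ω) :=
    (continuousOn_iff_continuous_domRestrict.1 hJ).measurable.comp
      ((measurable_const.mul hVm).subtype_mk (h := fun ω => mul_pos hc (hV ω)))
  exact hVm.mul ((hGm.sub hJcV).max measurable_const)

lemma integrable_weightedExcess (hJmaps : MapsTo J (Ioi 0) (Ioi 0))
    (hJcont : ContinuousOn J (Ioi 0)) (hVm : Measurable V) (hGm : Measurable G)
    (hV : ∀ ω, 0 < V ω) (hG : ∀ ω, 0 ≤ G ω) (hVG : Integrable (fun ω => V ω * G ω) P)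
    {c : ℝ} (hc : 0 < c) :
    Integrable (weightedExcess J V G c) P :=
  hVG.mono' (measurable_weightedExcess hJcont hVm hGm hV hc).aestronglyMeasurable <|
    .of_forall fun ω => by
      rw [Real.norm_of_nonneg (weightedExcess_nonneg hV c ω)]
      exact weightedExcess_le hJmaps hV hG hc ω

lemma tendsto_integral_weightedExcess (hJmaps : MapsTo J (Ioi 0) (Ioi 0))
    (hJcont : ContinuousOn J (Ioi 0)) (hVm : Measurable V) (hGm : Measurable G)
    (hV : ∀ ω, 0 < V ω) (hG : ∀ ω, 0 ≤ G ω) (hVG : Integrable (fun ω => V ω * G ω) P)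
    {l : Filter ℝ} [l.IsCountablyGenerated] (hl : ∀ᶠ c in l, 0 < c) {f : Ω → ℝ}
    (hf : ∀ ω, Tendsto (fun c => weightedExcess J V G c ω) l (𝓝 (f ω))) :
    Tendsto (fun c => ∫ ω, weightedExcess J V G c ω ∂P) l (𝓝 (∫ ω, f ω ∂P)) := by
  refine tendsto_integral_filter_of_dominated_convergence _ ?_ ?_ hVG (.of_forall hf)
  · filter_upwards [hl] with c hc
    exact (measurable_weightedExcess hJcont hVm hGm hV hc).aestronglyMeasurable
  · filter_upwards [hl] with c hc
    refine .of_forall fun ω => ?_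
    rw [Real.norm_of_nonneg (weightedExcess_nonneg hV c ω)]
    exact weightedExcess_le hJmaps hV hG hc ω

lemma continuousOn_integral_weightedExcess (hJmaps : MapsTo J (Ioi 0) (Ioi 0))
    (hJcont : ContinuousOn J (Ioi 0)) (hVm : Measurable V) (hGm : Measurable G)
    (hV : ∀ ω, 0 < V ω) (hG : ∀ ω, 0 ≤ G ω) (hVG : Integrable (fun ω => V ω * G ω) P) :
    ContinuousOn (fun c => ∫ ω, weightedExcess J V G c ω ∂P) (Ioi 0) := fun _ hc₀ =>
  tendsto_integral_weightedExcess hJmaps hJcont hVm hGm hV hG hVG self_mem_nhdsWithin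
    fun ω => (continuousAt_weightedExcess hJcont hV hc₀ ω).continuousWithinAt

lemma tendsto_integral_weightedExcess_nhdsGT_zero (hJmaps : MapsTo J (Ioi 0) (Ioi 0))
    (hJcont : ContinuousOn J (Ioi 0)) (hVm : Measurable V) (hGm : Measurable G)
    (hV : ∀ ω, 0 < V ω) (hG : ∀ ω, 0 ≤ G ω) (hVG : Integrable (fun ω => V ω * G ω) P)
    (hJ0 : Tendsto J (𝓝[>] 0) (𝓝 0)) :
    Tendsto (fun c => ∫ ω, weightedExcess J V G c ω ∂P) (𝓝[>] 0) (𝓝 (∫ ω, V ω * G ω ∂P)) :=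
  tendsto_integral_weightedExcess hJmaps hJcont hVm hGm hV hG hVG self_mem_nhdsWithin
    (tendsto_weightedExcess_nhdsGT_zero hJ0 hV hG)

lemma tendsto_integral_weightedExcess_atTop (hJmaps : MapsTo J (Ioi 0) (Ioi 0))
    (hJcont : ContinuousOn J (Ioi 0)) (hVm : Measurable V) (hGm : Measurable G)
    (hV : ∀ ω, 0 < V ω) (hG : ∀ ω, 0 ≤ G ω) (hVG : Integrable (fun ω => V ω * G ω) P)
    (hJtop : Tendsto J atTop atTop) :
    Tendsto (fun c => ∫ ω, weightedExcess J V G c ω ∂P) atTop (𝓝 0) := by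
  simpa using tendsto_integral_weightedExcess hJmaps hJcont hVm hGm hV hG hVG
    (eventually_gt_atTop 0) (f := 0) fun ω =>
      tendsto_const_nhds.congr' (weightedExcess_eventually_eq_zero hJtop hV ω).symm

lemma integral_weightedExcess_lt (hJmaps : MapsTo J (Ioi 0) (Ioi 0))
    (hJcont : ContinuousOn J (Ioi 0))
    (hJmono : StrictMonoOn J (Ioi 0)) (hVm : Measurable V) (hGm : Measurable G)
    (hV : ∀ ω, 0 < V ω) (hG : ∀ ω, 0 ≤ G ω) (hVG : Integrable (fun ω => V ω * G ω) P)
    {c₁ c₂ : ℝ} (hc₁ : 0 < c₁) (h : c₁ < c₂) (hpos : 0 < ∫ ω, weightedExcess J V G c₁ ω ∂P) :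
    ∫ ω, weightedExcess J V G c₂ ω ∂P < ∫ ω, weightedExcess J V G c₁ ω ∂P := by
  have hi₁ := integrable_weightedExcess hJmaps hJcont hVm hGm hV hG hVG hc₁
  have hi₂ := integrable_weightedExcess hJmaps hJcont hVm hGm hV hG hVG (hc₁.trans h)
  have hle (ω : Ω) : weightedExcess J V G c₂ ω ≤ weightedExcess J V G c₁ ω :=
    weightedExcess_antitone hJmono hV hc₁ h.le ω
  rw [integral_pos_iff_support_of_nonneg (weightedExcess_nonneg hV c₁) hi₁] at hpos
  rw [← sub_pos, ← integral_sub hi₁ hi₂,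
    integral_pos_iff_support_of_nonneg (fun ω => sub_nonneg.2 (hle ω)) (hi₁.sub hi₂)]
  refine hpos.trans_le (measure_mono fun ω hω => ?_)
  exact (sub_pos.2 (weightedExcess_lt hJmono hV hc₁ h
    ((weightedExcess_nonneg hV c₁ ω).lt_of_ne' hω))).ne'

end Integral

end WeightedExcess

lemma existsUnique_pos_eq_of_tendsto {k : ℝ → ℝ} {L y : ℝ} (hk : ContinuousOn k (Ioi 0))
    (h0 : Tendsto k (𝓝[>] 0) (𝓝 L)) (htop : Tendsto k atTop (𝓝 0))
    (hlt : ∀ c₁ c₂, 0 < c₁ → c₁ < c₂ → 0 < k c₁ → k c₂ < k c₁) (hy : y ∈ Ioo 0 L) :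
    ∃! c, 0 < c ∧ k c = y := by
  obtain ⟨a, hay, ha⟩ := ((h0.eventually (eventually_gt_nhds hy.2)).and self_mem_nhdsWithin).exists
  obtain ⟨b, hby, hab⟩ :=
    ((htop.eventually (eventually_lt_nhds hy.1)).and (eventually_gt_atTop a)).exists
  obtain ⟨c, hc, hkc⟩ := intermediate_value_Icc' hab.le
    (hk.mono fun x hx => lt_of_lt_of_le ha hx.1) ⟨hby.le, hay.le⟩
  have hne : ∀ c₁ c₂, 0 < c₁ → c₁ < c₂ → k c₁ = y → k c₂ ≠ y := fun c₁ c₂ h₁ h₁₂ hk₁ hk₂ =>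
    (hlt c₁ c₂ h₁ h₁₂ (hk₁ ▸ hy.1)).ne (hk₂.trans hk₁.symm)
  refine ⟨c, ⟨lt_of_lt_of_le ha hc.1, hkc⟩, fun c' ⟨hc', hkc'⟩ => ?_⟩
  rcases lt_trichotomy c' c with h | h | h
  · exact absurd hkc (hne c' c hc' h hkc')
  · exact h
  · exact absurd hkc' (hne c c' (lt_of_lt_of_le ha hc.1) h hkc)

theorem stmt_11_general
    {Ω : Type*} [MeasurableSpace Ω] (P : Measure Ω)
    (ℓ ℓd I : ℝ → ℝ)
    (hderiv : ∀ x ∈ Ici (0:ℝ), HasDerivWithinAt ℓ (ℓd x) (Ici 0) x)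
    (hsconv : StrictConvexOn ℝ (Ici 0) ℓ)
    (hd0 : Tendsto ℓd (nhdsWithin 0 (Ioi 0)) (nhds 0))
    (hI : ∀ y ∈ Ioi (0:ℝ), I y ∈ Ioi (0:ℝ) ∧ ℓd (I y) = y)
    (hI' : ∀ x ∈ Ioi (0:ℝ), I (ℓd x) = x)
    (V G : Ω → ℝ) (hVmeas : Measurable V) (hGmeas : Measurable G)
    (hVpos : ∀ ω, 0 < V ω) (hGpos : ∀ ω, 0 ≤ G ω)
    (hVG : Integrable (fun ω => V ω * G ω) P)
    (φh : ℝ → Ω → ℝ)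
    (hφh : ∀ c ω, φh c ω = if 0 < G ω then 1 - min (I (c * V ω) / G ω) 1 else 0)
    (k : ℝ → ℝ)
    (hk : ∀ c, k c = ∫ ω, V ω * G ω * φh c ω ∂P) :
    ContinuousOn k (Ioi 0) ∧
    Tendsto k (nhdsWithin 0 (Ioi 0)) (nhds (∫ ω, V ω * G ω ∂P)) ∧
    Tendsto k atTop (nhds 0) ∧
    ∀ y ∈ Ioo (0:ℝ) (∫ ω, V ω * G ω ∂P), ∃! c : ℝ, 0 < c ∧ k c = y := by
  have hℓd : StrictMonoOn ℓd (Ici 0) := hsconv.strictMonoOn_of_hasDerivWithinAt hderiv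
  have hImaps : MapsTo I (Ioi 0) (Ioi 0) := fun y hy => (hI y hy).1
  have hImono : StrictMonoOn I (Ioi 0) :=
    (hℓd.mono Ioi_subset_Ici_self).strictMonoOn_of_rightInvOn hImaps fun y hy => (hI y hy).2
  have hIsurj : SurjOn I (Ioi 0) (Ioi 0) :=
    LeftInvOn.surjOn hI' (hℓd.mapsTo_Ioi_of_tendsto_nhdsGT hd0)
  have hIcont : ContinuousOn I (Ioi 0) := hImono.continuousOn_of_image_eq isOpen_Ioi isOpen_Ioi
    (hIsurj.image_eq_of_mapsTo hImaps)
  have hkeq : EqOn k (fun c => ∫ ω, weightedExcess I V G c ω ∂P) (Ioi 0) := fun c hc => by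
    refine (hk c).trans (integral_congr_ae (.of_forall fun ω => ?_))
    change V ω * G ω * φh c ω = _
    rw [hφh, mul_assoc, mul_ite_one_sub_min_div (hImaps (mul_pos hc (hVpos ω))).le (hGpos ω)]
    rfl
  have hcont : ContinuousOn k (Ioi 0) := (continuousOn_integral_weightedExcess hImaps hIcont
    hVmeas hGmeas hVpos hGpos hVG).congr hkeq
  have hlim0 : Tendsto k (𝓝[>] 0) (𝓝 (∫ ω, V ω * G ω ∂P)) :=
    (tendsto_integral_weightedExcess_nhdsGT_zero hImaps hIcont hVmeas hGmeas hVpos hGpos hVG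
      (hImono.monotoneOn.tendsto_nhdsGT_zero_of_surjOn hImaps hIsurj)).congr'
      (eventually_nhdsWithin_of_forall fun c hc => (hkeq hc).symm)
  have hlimTop : Tendsto k atTop (𝓝 0) :=
    (tendsto_integral_weightedExcess_atTop hImaps hIcont hVmeas hGmeas hVpos hGpos hVG
      (hImono.monotoneOn.tendsto_atTop_of_surjOn hIsurj)).congr'
      ((eventually_gt_atTop 0).mono fun c hc => (hkeq hc).symm)
  refine ⟨hcont, hlim0, hlimTop, fun y hy => existsUnique_pos_eq_of_tendsto hcont hlim0 hlimTop
    (fun c₁ c₂ hc₁ h => ?_) hy⟩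
  rw [hkeq hc₁, hkeq (hc₁.trans h)]
  exact integral_weightedExcess_lt hImaps hIcont hImono hVmeas hGmeas hVpos hGpos hVG hc₁ h

/-- **Properties of the budget function `k(c) = E[V G φ̂(c)]`.**
With `ℓ` a `C¹`, strictly convex, increasing loss function with `ℓ(0)=0`, `ℓ'(0⁺)=0`,
`ℓ'(∞)=∞`, `I = (ℓ')⁻¹`, `V > 0`, `G ≥ 0` with `0 < E[VG] < ∞`, and
`φ̂(c) = 1_{G>0}(1 − min(I(cV)/G, 1))`: the function `k` is continuous on `(0,∞)`,
`k(c) → E[VG]` as `c → 0⁺`, `k(c) → 0` as `c → ∞`, and for each `y ∈ (0, E[VG])` there is a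
unique `ĉ > 0` with `k(ĉ) = y`. -/
theorem stmt_11
    {Ω : Type*} [MeasurableSpace Ω] (P : Measure Ω) [IsProbabilityMeasure P]
    (ℓ ℓd I : ℝ → ℝ)
    (hderiv : ∀ x ∈ Ici (0:ℝ), HasDerivWithinAt ℓ (ℓd x) (Ici 0) x)
    (hdcont : ContinuousOn ℓd (Ici 0))
    (hsconv : StrictConvexOn ℝ (Ici 0) ℓ)
    (hincr : StrictMonoOn ℓ (Ici 0))
    (hzero : ℓ 0 = 0)
    (hd0 : Tendsto ℓd (nhdsWithin 0 (Ioi 0)) (nhds 0))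
    (hdinf : Tendsto ℓd atTop atTop)
    (hI : ∀ y ∈ Ioi (0:ℝ), I y ∈ Ioi (0:ℝ) ∧ ℓd (I y) = y)
    (hI' : ∀ x ∈ Ioi (0:ℝ), I (ℓd x) = x)
    (V G : Ω → ℝ) (hVmeas : Measurable V) (hGmeas : Measurable G)
    (hVpos : ∀ ω, 0 < V ω) (hGpos : ∀ ω, 0 ≤ G ω)
    (hVG : Integrable (fun ω => V ω * G ω) P)
    (hVGpos : 0 < ∫ ω, V ω * G ω ∂P)
    (φh : ℝ → Ω → ℝ)
    (hφh : ∀ c ω, φh c ω = if 0 < G ω then 1 - min (I (c * V ω) / G ω) 1 else 0)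
    (k : ℝ → ℝ)
    (hk : ∀ c, k c = ∫ ω, V ω * G ω * φh c ω ∂P) :
    ContinuousOn k (Ioi 0) ∧
    Tendsto k (nhdsWithin 0 (Ioi 0)) (nhds (∫ ω, V ω * G ω ∂P)) ∧
    Tendsto k atTop (nhds 0) ∧
    ∀ y ∈ Ioo (0:ℝ) (∫ ω, V ω * G ω ∂P), ∃! c : ℝ, 0 < c ∧ k c = y :=
  stmt_11_general P ℓ ℓd I hderiv hsconv hd0 hI hI' V G hVmeas hGmeas hVpos hGpos hVG φh hφh k hk
end
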